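/- arXiv:1506.02921 — 8 statements merged into one kernel-verified Lean document; each statement's English description precedes it below -/
import Mathlib

section
/- Let X be a real or complex Hilbert space, let A : X → Set X be a dissipative set-valued map, and let P : X → X be a bounded self-adjoint linear operator that is strictly coercive, i.e. there is m > 0 with ⟪P x, x⟫ ≥ m‖x‖² for all x ∈ X. If A − I is surjective (for every f ∈ X there exist x ∈ D(A) and y ∈ A x with y − x = f), then AP − I is also surjective, where AP denotes the set-valued map x ↦ A(P x) with domain {x ∈ X : P x ∈ D(A)}. -/
/-!
Substituting `u = P x` turns the claim into surjectivity of `A - P⁻¹`, where `P⁻¹` exists by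
Lax–Milgram and is bounded and strongly monotone. For a dissipative `A`, the resolvent
`(A - μ I)⁻¹` is single-valued and `μ⁻¹`-Lipschitz, so surjectivity of `A - μ₀ I` propagates by
the contraction principle to every `μ` with `|μ - μ₀| < μ₀`, hence to all `μ > 0`. For `μ` large,
`P⁻¹ - μ I` has Lipschitz constant `< μ`, and `A - P⁻¹ = (A - μ I) - (P⁻¹ - μ I)` is surjective by
one more application of the contraction principle.
-/

open RCLike
open scoped InnerProductSpace NNReal

section

variable {𝕜 : Type*} [RCLike 𝕜] {X : Type*} [NormedAddCommGroup X] [InnerProductSpace 𝕜 X]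

variable (𝕜) in
def Dissipative (A : X → Set X) : Prop :=
  ∀ x x' y y', y ∈ A x → y' ∈ A x' → re ⟪y - y', x - x'⟫_𝕜 ≤ 0

variable (𝕜) in
def SubSmulSurjective (A : X → Set X) (μ : ℝ) : Prop :=
  ∀ g : X, ∃ x, ∃ y ∈ A x, y - (μ : 𝕜) • x = g

variable (𝕜) in
def IsCoerciveWith (T : X →L[𝕜] X) (c : ℝ) : Prop :=
  ∀ w, c * ‖w‖ ^ 2 ≤ re ⟪T w, w⟫_𝕜

variable {A : X → Set X}

lemma mul_le_of_mul_sq_le_mul {a b t : ℝ} (hb : 0 ≤ b) (ht : 0 ≤ t) (h : a * t ^ 2 ≤ b * t) :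
    a * t ≤ b := by
  rcases ht.eq_or_lt with rfl | ht
  · simpa using hb
  · exact le_of_mul_le_mul_right (by linarith) ht

lemma Dissipative.mul_norm_sub_le (hA : Dissipative 𝕜 A) (μ : ℝ)
    {x x' y y' : X} (hy : y ∈ A x) (hy' : y' ∈ A x') :
    μ * ‖x - x'‖ ≤ ‖(y - (μ : 𝕜) • x) - (y' - (μ : 𝕜) • x')‖ := by
  set d := (y - (μ : 𝕜) • x) - (y' - (μ : 𝕜) • x')
  have hd : y - y' = d + (μ : 𝕜) • (x - x') := by simp only [d, smul_sub]; abel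
  have key : μ * ‖x - x'‖ ^ 2 ≤ re ⟪-d, x - x'⟫_𝕜 := by
    have := hA x x' y y' hy hy'
    rw [hd, inner_add_left, inner_smul_left, conj_ofReal, map_add, re_ofReal_mul,
      inner_self_eq_norm_sq] at this
    rw [inner_neg_left, map_neg]
    linarith
  refine mul_le_of_mul_sq_le_mul (norm_nonneg d) (norm_nonneg _) ?_
  simpa using key.trans (re_inner_le_norm (-d) (x - x'))

lemma IsCoerciveWith.mul_norm_le_norm_apply {P : X →L[𝕜] X} {m : ℝ} (hP : IsCoerciveWith 𝕜 P m)
    (x : X) : m * ‖x‖ ≤ ‖P x‖ :=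
  mul_le_of_mul_sq_le_mul (norm_nonneg _) (norm_nonneg _) ((hP x).trans (re_inner_le_norm _ _))

lemma IsCoerciveWith.rightInverse {P B : X →L[𝕜] X} {m C : ℝ} (hP : IsCoerciveWith 𝕜 P m)
    (hm : 0 ≤ m) (hC : 0 ≤ C) (hPC : ∀ x, ‖P x‖ ≤ C * ‖x‖) (hB : Function.RightInverse B P) :
    IsCoerciveWith 𝕜 B (m / C ^ 2) := by
  intro w
  have hBw : ‖w‖ / C ≤ ‖B w‖ := div_le_of_le_mul₀ hC (norm_nonneg _) (by
    simpa [hB w, mul_comm] using hPC (B w))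
  calc m / C ^ 2 * ‖w‖ ^ 2 = m * (‖w‖ / C) ^ 2 := by ring
    _ ≤ m * ‖B w‖ ^ 2 := by gcongr
    _ ≤ re ⟪P (B w), B w⟫_𝕜 := hP (B w)
    _ = re ⟪B w, w⟫_𝕜 := by rw [hB w, inner_re_symm]

lemma norm_apply_sub_smul_sq_le (T : X →L[𝕜] X) {c μ : ℝ} (hμ : 0 ≤ μ) {w : X}
    (hw : c * ‖w‖ ^ 2 ≤ re ⟪T w, w⟫_𝕜) :
    ‖T w - (μ : 𝕜) • w‖ ^ 2 ≤ (‖T‖ ^ 2 - 2 * μ * c + μ ^ 2) * ‖w‖ ^ 2 := by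
  rw [norm_sub_sq (𝕜 := 𝕜), inner_smul_right, re_ofReal_mul, norm_smul, norm_ofReal,
    abs_of_nonneg hμ]
  have hTw : ‖T w‖ ^ 2 ≤ ‖T‖ ^ 2 * ‖w‖ ^ 2 := by
    rw [← mul_pow]; exact pow_le_pow_left₀ (norm_nonneg _) (T.le_opNorm w) 2
  nlinarith [mul_le_mul_of_nonneg_left hw hμ]

lemma IsCoerciveWith.norm_sub_smul_one_le {T : X →L[𝕜] X} {c : ℝ} (hT : IsCoerciveWith 𝕜 T c)
    {μ : ℝ} (hμ : 0 ≤ μ) : ‖T - (μ : 𝕜) • 1‖ ≤ √(‖T‖ ^ 2 - 2 * μ * c + μ ^ 2) := by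
  refine (T - (μ : 𝕜) • 1).opNorm_le_bound (Real.sqrt_nonneg _) fun w => ?_
  calc ‖(T - (μ : 𝕜) • 1) w‖ = √(‖T w - (μ : 𝕜) • w‖ ^ 2) := by
        simp [Real.sqrt_sq (norm_nonneg _)]
    _ ≤ √((‖T‖ ^ 2 - 2 * μ * c + μ ^ 2) * ‖w‖ ^ 2) :=
        Real.sqrt_le_sqrt (norm_apply_sub_smul_sq_le T hμ (hT w))
    _ = √(‖T‖ ^ 2 - 2 * μ * c + μ ^ 2) * ‖w‖ := by
        rw [Real.sqrt_mul' _ (by positivity), Real.sqrt_sq (norm_nonneg _)]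

variable [CompleteSpace X]

lemma IsCoerciveWith.exists_rightInverse {P : X →L[𝕜] X} {m : ℝ} (hP : IsCoerciveWith 𝕜 P m)
    (hm : 0 < m) : ∃ B : X →L[𝕜] X, Function.RightInverse B P := by
  have hanti : AntilipschitzWith (Real.toNNReal m⁻¹) P := P.antilipschitz_of_bound fun x => by
    rw [Real.coe_toNNReal _ (by positivity), inv_mul_eq_div, le_div_iff₀' hm]
    exact hP.mul_norm_le_norm_apply x
  have hrange : P.range = ⊤ := by
    have : CompleteSpace P.range :=
      (hanti.isClosed_range P.uniformContinuous).completeSpace_coe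
    rw [← Submodule.orthogonal_eq_bot_iff, Submodule.eq_bot_iff]
    intro v hv
    have h0 : ⟪P v, v⟫_𝕜 = 0 := Submodule.mem_orthogonal _ _ |>.1 hv (P v) ⟨v, rfl⟩
    have := hP v
    rw [h0, map_zero] at this
    have : ‖v‖ ^ 2 ≤ 0 := by nlinarith [sq_nonneg ‖v‖]
    simpa using this
  let e := ContinuousLinearEquiv.ofBijective P (LinearMap.ker_eq_bot.2 hanti.injective) hrange
  exact ⟨e.symm, e.apply_symm_apply⟩

lemma Dissipative.exists_sub_smul_eq_of_lipschitzWith (hA : Dissipative 𝕜 A)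
    {μ : ℝ} (hμ : 0 < μ) (hsurj : SubSmulSurjective 𝕜 A μ) {G : X → X} {κ : ℝ≥0}
    (hG : LipschitzWith κ G) (hκ : (κ : ℝ) < μ) :
    ∃ x, ∃ y ∈ A x, y - (μ : 𝕜) • x = G x := by
  choose J y hy hJ using hsurj
  have hJ_lip : LipschitzWith (Real.toNNReal μ⁻¹) J := LipschitzWith.of_dist_le' fun g g' => by
    rw [dist_eq_norm, dist_eq_norm, inv_mul_eq_div, le_div_iff₀' hμ]
    simpa only [hJ] using hA.mul_norm_sub_le μ (hy g) (hy g')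
  have hcontr : ContractingWith (Real.toNNReal μ⁻¹ * κ) (J ∘ G) := by
    refine ⟨?_, hJ_lip.comp hG⟩
    rw [← NNReal.coe_lt_coe, NNReal.coe_mul, Real.coe_toNNReal _ (by positivity),
      NNReal.coe_one, inv_mul_lt_one₀ hμ]
    exact hκ
  set x := hcontr.fixedPoint
  have hfix : J (G x) = x := hcontr.fixedPoint_isFixedPt
  refine ⟨x, y (G x), ?_, ?_⟩
  · simpa only [hfix] using hy (G x)
  · simpa only [hfix] using hJ (G x)

lemma Dissipative.subSmulSurjective_of_abs_sub_lt (hA : Dissipative 𝕜 A)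
    {μ₀ μ : ℝ} (h : SubSmulSurjective 𝕜 A μ₀) (hμ : |μ - μ₀| < μ₀) :
    SubSmulSurjective 𝕜 A μ := by
  intro g
  have hG : LipschitzWith (Real.toNNReal |μ - μ₀|) fun x : X => ((μ - μ₀ : ℝ) : 𝕜) • x + g :=
    LipschitzWith.of_dist_le' fun u v => by rw [dist_add_right, dist_smul₀, norm_ofReal]
  obtain ⟨x, y, hy, hx⟩ := hA.exists_sub_smul_eq_of_lipschitzWith
    ((abs_nonneg _).trans_lt hμ) h hG (by rwa [Real.coe_toNNReal _ (abs_nonneg _)])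
  refine ⟨x, y, hy, ?_⟩
  rw [ofReal_sub, sub_smul] at hx
  linear_combination (norm := module) hx

lemma Dissipative.subSmulSurjective (hA : Dissipative 𝕜 A)
    (h₁ : SubSmulSurjective 𝕜 A 1) {μ : ℝ} (hμ : 0 < μ) : SubSmulSurjective 𝕜 A μ := by
  have hpow : ∀ n : ℕ, SubSmulSurjective 𝕜 A ((3 / 2) ^ n) := by
    intro n
    induction n with
    | zero => simpa using h₁
    | succ n ih =>
      refine hA.subSmulSurjective_of_abs_sub_lt ih ?_
      have : (0 : ℝ) < (3 / 2) ^ n := by positivity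
      rw [pow_succ, abs_of_pos (by linarith)]
      linarith
  obtain ⟨n, hn⟩ := pow_unbounded_of_one_lt μ (by norm_num : (1 : ℝ) < 3 / 2)
  exact hA.subSmulSurjective_of_abs_sub_lt (hpow n) (abs_sub_lt_iff.2 ⟨by linarith, by linarith⟩)

lemma Dissipative.exists_sub_apply_eq (hA : Dissipative 𝕜 A)
    (h₁ : SubSmulSurjective 𝕜 A 1) {T : X →L[𝕜] X} {c : ℝ} (hc : 0 < c)
    (hT : IsCoerciveWith 𝕜 T c) (f : X) : ∃ u, ∃ y ∈ A u, y - T u = f := by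
  -- any `μ > 0` with `‖T‖ ^ 2 < 2 * μ * c` makes `‖T - μ I‖ < μ`
  set μ := ‖T‖ ^ 2 / c + 1
  have hμ : 0 < μ := by positivity
  have hG : LipschitzWith ‖T - (μ : 𝕜) • 1‖₊ fun u => (T - (μ : 𝕜) • 1) u + f :=
    LipschitzWith.of_dist_le_mul fun u v => by
      simpa only [dist_add_right] using (T - (μ : 𝕜) • 1).lipschitz.dist_le_mul u v
  have hκ : ‖T - (μ : 𝕜) • 1‖ < μ := by
    refine (hT.norm_sub_smul_one_le hμ.le).trans_lt ((Real.sqrt_lt' hμ).2 ?_)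
    have : μ * c = ‖T‖ ^ 2 + c := by rw [add_mul, div_mul_cancel₀ _ hc.ne', one_mul]
    nlinarith
  obtain ⟨u, y, hy, hu⟩ :=
    hA.exists_sub_smul_eq_of_lipschitzWith hμ (hA.subSmulSurjective h₁ hμ) hG hκ
  refine ⟨u, y, hy, ?_⟩
  simp only [sub_apply, smul_apply, one_apply_eq_self] at hu
  linear_combination (norm := module) hu

end

theorem stmt_0_general
    {𝕜 : Type*} [RCLike 𝕜]
    {X : Type*} [NormedAddCommGroup X] [InnerProductSpace 𝕜 X] [CompleteSpace X]
    (A : X → Set X)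
    (hdiss : ∀ x x' y y', y ∈ A x → y' ∈ A x' →
      RCLike.re (inner 𝕜 (y - y') (x - x') : 𝕜) ≤ 0)
    (P : X →L[𝕜] X)
    (m : ℝ) (hm : 0 < m)
    (hcoer : ∀ x : X, m * ‖x‖ ^ 2 ≤ RCLike.re (inner 𝕜 (P x) x : 𝕜))
    (hsurj : ∀ f : X, ∃ x y, y ∈ A x ∧ y - x = f) :
    ∀ f : X, ∃ x y, y ∈ A (P x) ∧ y - x = f := by
  have hA : Dissipative 𝕜 A := hdiss
  have hP : IsCoerciveWith 𝕜 P m := hcoer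
  obtain ⟨B, hB⟩ := hP.exists_rightInverse hm
  obtain ⟨C, hC, hPC⟩ := P.bound
  intro f
  obtain ⟨u, y, hy, hu⟩ := hA.exists_sub_apply_eq (fun g => by simpa using hsurj g)
    (by positivity) (hP.rightInverse hm.le hC.le hPC hB) f
  exact ⟨B u, y, by rwa [hB u], hu⟩

/-- Lemma 4.1 of the paper.
If `A` is a dissipative set-valued map on a Hilbert space `X`, `P` is a bounded
self-adjoint strictly coercive linear operator, and `A - I` is surjective, then
`AP - I` is surjective. -/
theorem stmt_0
    {𝕜 : Type*} [RCLike 𝕜]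
    {X : Type*} [NormedAddCommGroup X] [InnerProductSpace 𝕜 X] [CompleteSpace X]
    (A : X → Set X)
    (hdiss : ∀ x x' y y', y ∈ A x → y' ∈ A x' →
      RCLike.re (inner 𝕜 (y - y') (x - x') : 𝕜) ≤ 0)
    (P : X →L[𝕜] X) (hPsa : IsSelfAdjoint P)
    (m : ℝ) (hm : 0 < m)
    (hcoer : ∀ x : X, m * ‖x‖ ^ 2 ≤ RCLike.re (inner 𝕜 (P x) x : 𝕜))
    (hsurj : ∀ f : X, ∃ x y, y ∈ A x ∧ y - x = f) :
    ∀ f : X, ∃ x y, y ∈ A (P x) ∧ y - x = f :=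
  stmt_0_general A hdiss P m hm hcoer hsurj
end

section
/- Let m ∈ ℕ, let φ : ℝ^m → Set (ℝ^m) be an m-monotone set-valued map, and let B be a real m × m matrix whose symmetric part is positive definite, i.e. there is m₀ > 0 with ⟨B z, z⟩ ≥ m₀ |z|² for all z ∈ ℝ^m. Then for every g ∈ ℝ^m there exists a unique y ∈ D(φ) such that g − B y ∈ φ(y); in other words, the set-valued map y ↦ B y + φ(y) is surjective and injective on ℝ^m. -/
/-!
Solve `g - A y ∈ φ y` by a fixed point: for `c > 0` the resolvent `J : f ↦ y` with
`f - c • y ∈ φ y` is `1/c`-Lipschitz by monotonicity of `φ`, so `y ↦ J (c • y - A y + g)` is a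
contraction as soon as `L² < 2 c α`, where `L` is the Lipschitz constant and `α` the strong
monotonicity constant of `A`. Applied with `A = c' • id` this shows that solvability of
`c • y + φ y ∋ f` propagates from `c` to every `c' < 2 c`, hence from `c = 1` (the m-monotonicity
of `φ`) to every `c > 0`, which then allows `c` to be taken large. Uniqueness is immediate from
strong monotonicity.
-/

open scoped Matrix RealInnerProductSpace

section MonotoneOperator

variable {E : Type*} [NormedAddCommGroup E] [InnerProductSpace ℝ E]

def IsMonotoneOperator (φ : E → Set E) : Prop :=
  ∀ v v' w w', w ∈ φ v → w' ∈ φ v' → 0 ≤ ⟪w - w', v - v'⟫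

def IsStronglyMonotone (α : ℝ) (A : E → E) : Prop :=
  ∀ x y, α * ‖x - y‖ ^ 2 ≤ ⟪A x - A y, x - y⟫

/-- Surjectivity of the set-valued map `A + φ`. -/
def SumSurjective (A : E → E) (φ : E → Set E) : Prop :=
  ∀ g, ∃ y, g - A y ∈ φ y

lemma isStronglyMonotone_smul (c : ℝ) : IsStronglyMonotone c (fun x : E ↦ c • x) := by
  intro x y
  rw [← smul_sub, real_inner_smul_left, real_inner_self_eq_norm_sq]

lemma IsStronglyMonotone.norm_smul_sub_sq_le {α c : ℝ} {L : NNReal} {A : E → E}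
    (hA : IsStronglyMonotone α A) (hL : LipschitzWith L A) (hc : 0 ≤ c) (x y : E) :
    ‖c • (x - y) - (A x - A y)‖ ^ 2 ≤ (c ^ 2 - 2 * c * α + L ^ 2) * ‖x - y‖ ^ 2 := by
  have hAxy : ‖A x - A y‖ ≤ L * ‖x - y‖ := by
    simpa only [dist_eq_norm] using hL.dist_le_mul x y
  have hsq : ‖A x - A y‖ ^ 2 ≤ L ^ 2 * ‖x - y‖ ^ 2 := by
    rw [← mul_pow]; exact pow_le_pow_left₀ (norm_nonneg _) hAxy 2
  have hinner : c * (α * ‖x - y‖ ^ 2) ≤ c * ⟪A x - A y, x - y⟫ :=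
    mul_le_mul_of_nonneg_left (hA x y) hc
  rw [norm_sub_sq_real, norm_smul, Real.norm_of_nonneg hc, real_inner_smul_left,
    real_inner_comm]
  nlinarith

lemma IsMonotoneOperator.mul_norm_sub_le {φ : E → Set E} (hφ : IsMonotoneOperator φ)
    {c : ℝ} (hc : 0 ≤ c) {f f' y y' : E} (hy : f - c • y ∈ φ y) (hy' : f' - c • y' ∈ φ y') :
    c * ‖y - y'‖ ≤ ‖f - f'‖ := by
  set e := (f - c • y) - (f' - c • y')
  have hdecomp : f - f' = c • (y - y') + e := by simp only [e, smul_sub]; abel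
  have he : 0 ≤ ⟪c • (y - y'), e⟫ := by
    rw [real_inner_smul_left, real_inner_comm]
    exact mul_nonneg hc (hφ _ _ _ _ hy hy')
  have hsq : (c * ‖y - y'‖) ^ 2 ≤ ‖f - f'‖ ^ 2 := by
    rw [hdecomp, norm_add_sq_real, norm_smul, Real.norm_of_nonneg hc]
    nlinarith [sq_nonneg ‖e‖]
  exact (pow_le_pow_iff_left₀ (by positivity) (norm_nonneg _) two_ne_zero).mp hsq

lemma IsMonotoneOperator.eq_of_sub_mem {φ : E → Set E} (hφ : IsMonotoneOperator φ)
    {α : ℝ} (hα : 0 < α) {A : E → E} (hA : IsStronglyMonotone α A) {g y y' : E}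
    (hy : g - A y ∈ φ y) (hy' : g - A y' ∈ φ y') : y = y' := by
  have hmono := hφ _ _ _ _ hy hy'
  rw [sub_sub_sub_cancel_left, ← neg_sub, inner_neg_left, neg_nonneg] at hmono
  have hnorm : α * ‖y - y'‖ ^ 2 ≤ 0 := (hA y y').trans hmono
  have hsq : ‖y - y'‖ ^ 2 ≤ 0 := by nlinarith
  simpa [sub_eq_zero] using hsq

end MonotoneOperator

lemma exists_contractingWith_of_dist_sq_le {X : Type*} [MetricSpace X] {T : X → X}
    {K : ℝ} (hK : K < 1) (hT : ∀ x y, dist (T x) (T y) ^ 2 ≤ K * dist x y ^ 2) :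
    ∃ k, ContractingWith k T := by
  have hk : (0 : ℝ) ≤ √K := Real.sqrt_nonneg K
  refine ⟨(√K).toNNReal, ?_, LipschitzWith.of_dist_le_mul fun x y ↦ ?_⟩
  · rw [← NNReal.coe_lt_coe, Real.coe_toNNReal _ hk, NNReal.coe_one]
    exact (Real.sqrt_lt' one_pos).mpr (by simpa using hK)
  · rw [Real.coe_toNNReal _ hk]
    calc dist (T x) (T y) = √(dist (T x) (T y) ^ 2) := (Real.sqrt_sq dist_nonneg).symm
      _ ≤ √(K * dist x y ^ 2) := Real.sqrt_le_sqrt (hT x y)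
      _ = √K * dist x y := by rw [Real.sqrt_mul' _ (sq_nonneg _), Real.sqrt_sq dist_nonneg]

section Solvability

variable {E : Type*} [NormedAddCommGroup E] [InnerProductSpace ℝ E] [CompleteSpace E]
  {φ : E → Set E}

lemma SumSurjective.of_lipschitzWith {c : ℝ} (hJ : SumSurjective (fun x ↦ c • x) φ)
    (hφ : IsMonotoneOperator φ) (hc : 0 < c) {A : E → E} {α : ℝ} {L : NNReal}
    (hA : IsStronglyMonotone α A) (hL : LipschitzWith L A) (hLc : (L : ℝ) ^ 2 < 2 * c * α) :
    SumSurjective A φ := by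
  choose J hJ using hJ
  intro g
  set T : E → E := fun y ↦ J (c • y - A y + g)
  set K := (c ^ 2 - 2 * c * α + L ^ 2) / c ^ 2
  have hK : K < 1 := (div_lt_one (by positivity)).mpr (by linarith)
  have hT : ∀ y y', dist (T y) (T y') ^ 2 ≤ K * dist y y' ^ 2 := by
    intro y y'
    have hres := hφ.mul_norm_sub_le hc.le (hJ (c • y - A y + g)) (hJ (c • y' - A y' + g))
    rw [show c • y - A y + g - (c • y' - A y' + g) = c • (y - y') - (A y - A y') by
      rw [smul_sub]; abel] at hres
    rw [dist_eq_norm, dist_eq_norm, div_mul_eq_mul_div, le_div_iff₀ (by positivity)]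
    calc ‖T y - T y'‖ ^ 2 * c ^ 2 = (c * ‖T y - T y'‖) ^ 2 := by ring
      _ ≤ ‖c • (y - y') - (A y - A y')‖ ^ 2 := pow_le_pow_left₀ (by positivity) hres 2
      _ ≤ _ := hA.norm_smul_sub_sq_le hL hc.le y y'
  obtain ⟨k, hk⟩ := exists_contractingWith_of_dist_sq_le hK hT
  obtain ⟨y, hy, -⟩ := hk.exists_fixedPoint g (edist_ne_top _ _)
  have hfix : c • y - A y + g - c • T y ∈ φ (T y) := hJ _
  rw [hy.eq] at hfix
  exact ⟨y, by convert hfix using 1; abel⟩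

lemma SumSurjective.smul_of_lt_two_mul {c c' : ℝ} (hJ : SumSurjective (fun x ↦ c • x) φ)
    (hφ : IsMonotoneOperator φ) (hc : 0 < c) (hc' : 0 < c') (hlt : c' < 2 * c) :
    SumSurjective (fun x ↦ c' • x) φ :=
  hJ.of_lipschitzWith hφ hc (isStronglyMonotone_smul c') (lipschitzWith_smul c') <| by
    rw [coe_nnnorm, Real.norm_of_nonneg hc'.le]; nlinarith

lemma SumSurjective.smul_of_pos {c₀ : ℝ} (h₀ : SumSurjective (fun x ↦ c₀ • x) φ)
    (hφ : IsMonotoneOperator φ) (hc₀ : 0 < c₀) {c : ℝ} (hc : 0 < c) :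
    SumSurjective (fun x ↦ c • x) φ := by
  have hle_pow : ∀ n : ℕ, ∀ c, 0 < c → c ≤ (3 / 2) ^ n * c₀ → SumSurjective (fun x ↦ c • x) φ := by
    intro n
    induction n with
    | zero =>
      intro c hc hle
      exact h₀.smul_of_lt_two_mul hφ hc₀ hc (by rw [pow_zero, one_mul] at hle; linarith)
    | succ n ih =>
      intro c hc hle
      rw [pow_succ] at hle
      exact (ih (2 / 3 * c) (by positivity) (by linarith)).smul_of_lt_two_mul hφ
        (by positivity) hc (by linarith)
  obtain ⟨n, hn⟩ := pow_unbounded_of_one_lt (c / c₀) (by norm_num : (1 : ℝ) < 3 / 2)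
  exact hle_pow n c hc ((div_lt_iff₀ hc₀).mp hn).le

theorem IsMonotoneOperator.existsUnique_sub_mem (hφ : IsMonotoneOperator φ)
    (hran : SumSurjective id φ) {A : E → E} {α : ℝ} {L : NNReal} (hα : 0 < α)
    (hA : IsStronglyMonotone α A) (hL : LipschitzWith L A) (g : E) :
    ∃! y, g - A y ∈ φ y := by
  have hc : 0 < (L : ℝ) ^ 2 / α + 1 := by positivity
  have hLc : (L : ℝ) ^ 2 < 2 * ((L : ℝ) ^ 2 / α + 1) * α := by
    have h : 2 * ((L : ℝ) ^ 2 / α + 1) * α = 2 * (L : ℝ) ^ 2 + 2 * α := by field_simp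
    nlinarith [sq_nonneg (L : ℝ)]
  have hran₁ : SumSurjective (fun x ↦ (1 : ℝ) • x) φ := fun f ↦ by
    simpa only [one_smul, id_eq] using hran f
  obtain ⟨y, hy⟩ := (hran₁.smul_of_pos hφ one_pos hc).of_lipschitzWith hφ hc hA hL hLc g
  exact ⟨y, hy, fun y' hy' ↦ hφ.eq_of_sub_mem hα hA hy' hy⟩

end Solvability

lemma EuclideanSpace.real_inner_eq_dotProduct {ι : Type*} [Fintype ι]
    (x y : EuclideanSpace ℝ ι) : ⟪x, y⟫ = x.ofLp ⬝ᵥ y.ofLp := by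
  rw [EuclideanSpace.inner_eq_star_dotProduct, star_trivial, dotProduct_comm]

/-- finite-dimensional solvability step in the proof of Theorem 4.2.
If `φ : ℝ^m ⇉ ℝ^m` is m-monotone and `B` is a real `m × m` matrix whose symmetric part is
positive definite, then for every `g ∈ ℝ^m` there is a unique `y` with `g - B y ∈ φ y`. -/
theorem stmt_5 (m : ℕ)
    (φ : (Fin m → ℝ) → Set (Fin m → ℝ))
    (hmono : ∀ v v' w w', w ∈ φ v → w' ∈ φ v' → 0 ≤ (w - w') ⬝ᵥ (v - v'))
    (hran : ∀ f : Fin m → ℝ, ∃ v w, w ∈ φ v ∧ v + w = f)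
    (B : Matrix (Fin m) (Fin m) ℝ)
    (m₀ : ℝ) (hm₀ : 0 < m₀)
    (hB : ∀ z : Fin m → ℝ, m₀ * (z ⬝ᵥ z) ≤ (B *ᵥ z) ⬝ᵥ z) :
    ∀ g : Fin m → ℝ, ∃! y : Fin m → ℝ, g - B *ᵥ y ∈ φ y := by
  intro g
  let ψ : EuclideanSpace ℝ (Fin m) → Set (EuclideanSpace ℝ (Fin m)) :=
    fun v ↦ WithLp.ofLp ⁻¹' φ v.ofLp
  have hψ : IsMonotoneOperator ψ := fun v v' w w' hw hw' ↦ by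
    simpa only [EuclideanSpace.real_inner_eq_dotProduct, WithLp.ofLp_sub] using
      hmono _ _ _ _ hw hw'
  have hψran : SumSurjective id ψ := fun f ↦ by
    obtain ⟨v, w, hw, hvw⟩ := hran f.ofLp
    exact ⟨WithLp.toLp 2 v, by simpa [ψ, ← hvw] using hw⟩
  have hA : IsStronglyMonotone m₀ (Matrix.toLpLin 2 2 B) := fun x y ↦ by
    rw [← map_sub, ← real_inner_self_eq_norm_sq, EuclideanSpace.real_inner_eq_dotProduct,
      EuclideanSpace.real_inner_eq_dotProduct, Matrix.toLpLin_apply]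
    exact hB _
  have hsol := hψ.existsUnique_sub_mem hψran hm₀ hA
    (LinearMap.toContinuousLinearMap (Matrix.toLpLin 2 2 B)).lipschitz (WithLp.toLp 2 g)
  exact (WithLp.equiv 2 (Fin m → ℝ)).existsUnique_congr (fun _ ↦ Iff.rfl) |>.mp hsol
end

section
/- Let X_c and U be real or complex Hilbert spaces, let A_c : X_c → Set X_c be an m-dissipative set-valued map, let D_c : U → Set U be a set-valued map with domain all of U such that −D_c (the map u ↦ {−w : w ∈ D_c(u)}) is m-dissipative, and let B_c : U → X_c be a bounded linear operator with Hilbert-space adjoint B_c* : X_c → U. Define M_c : X_c × U → Set (X_c × U) by M_c(x_c, u) := { (z + B_c u, −B_c* x_c − w) : z ∈ A_c(x_c), w ∈ D_c(u) }, with domain D(A_c) × U. Then M_c is m-dissipative on the product Hilbert space X_c × U. -/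
/-!
`Mc` is the product map `Ac × (-Dc)` on the Hilbert sum `Xc ⊕₂ U`, shifted by the bounded operator
`L (x, u) = (Bc u, -Bc* x)`. Since `L` is skew, `Re ⟪L p, p⟫ = 0`, so the shift preserves
dissipativity. For the range condition, the resolvent `(I - t M)⁻¹` of a dissipative map is
nonexpansive; a contraction argument moves surjectivity of `I - a M` to `I - b M` for any
`b > a / 2`, hence to every `t > 0`. For `t ‖L‖ < 1` the equation `x - t (y + L x) = f` with
`y ∈ M x` is a fixed point of the contraction `x ↦ (I - t M)⁻¹ (f + t L x)`, and rescaling from `t`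
back to `1` finishes the proof.
-/

open RCLike

namespace SetValued

variable (𝕜 : Type*) [RCLike 𝕜] {H : Type*} [NormedAddCommGroup H] [InnerProductSpace 𝕜 H]

def IsDissipative (M : H → Set H) : Prop :=
  ∀ x x' y y', y ∈ M x → y' ∈ M x' → re (inner 𝕜 (y - y') (x - x') : 𝕜) ≤ 0

def ResolventSurjective (M : H → Set H) (t : ℝ) : Prop :=
  ∀ f : H, ∃ x, ∃ y ∈ M x, x - (t : 𝕜) • y = f

variable {𝕜}

def addMap (M : H → Set H) (L : H → H) (x : H) : Set H :=
  (· + L x) '' M x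

namespace IsDissipative

variable {M : H → Set H}

theorem norm_sub_le_norm_sub_smul (hM : IsDissipative 𝕜 M) {t : ℝ} (ht : 0 ≤ t)
    {x x' y y' : H} (hy : y ∈ M x) (hy' : y' ∈ M x') :
    ‖x - x'‖ ≤ ‖(x - (t : 𝕜) • y) - (x' - (t : 𝕜) • y')‖ := by
  have hre : re (inner 𝕜 (x - x') (y - y') : 𝕜) ≤ 0 := by
    rw [inner_re_symm]; exact hM x x' y y' hy hy'
  have hsq : ‖(x - (t : 𝕜) • y) - (x' - (t : 𝕜) • y')‖ ^ 2
      = ‖x - x'‖ ^ 2 - 2 * (t * re (inner 𝕜 (x - x') (y - y') : 𝕜)) + (t * ‖y - y'‖) ^ 2 := by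
    rw [show (x - (t : 𝕜) • y) - (x' - (t : 𝕜) • y') = (x - x') - (t : 𝕜) • (y - y') by module,
      norm_sub_sq (𝕜 := 𝕜), inner_smul_right, re_ofReal_mul, norm_smul, norm_ofReal,
      abs_of_nonneg ht]
  refine le_of_sq_le_sq ?_ (norm_nonneg _)
  nlinarith [mul_nonneg ht (neg_nonneg.2 hre), sq_nonneg (t * ‖y - y'‖)]

variable [CompleteSpace H]

theorem exists_sub_smul_eq_of_lipschitzWith (hM : IsDissipative 𝕜 M) {t : ℝ} (ht : 0 ≤ t)
    (hr : ResolventSurjective 𝕜 M t) {Φ : H → H} {K : NNReal} (hK : K < 1)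
    (hΦ : LipschitzWith K Φ) : ∃ x, ∃ y ∈ M x, x - (t : 𝕜) • y = Φ x := by
  choose J Y hY hJ using hr
  have hJ1 : LipschitzWith 1 J := LipschitzWith.of_dist_le_mul fun f f' => by
    simpa [dist_eq_norm, hJ] using hM.norm_sub_le_norm_sub_smul ht (hY f) (hY f')
  have hC : ContractingWith K (J ∘ Φ) := ⟨hK, by simpa using hJ1.comp hΦ⟩
  set x := hC.fixedPoint
  have hx : J (Φ x) = x := hC.fixedPoint_isFixedPt
  exact ⟨x, Y (Φ x), by simpa only [hx] using hY (Φ x), by simpa only [hx] using hJ (Φ x)⟩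

theorem resolventSurjective_of_lt_two_mul (hM : IsDissipative 𝕜 M) {a b : ℝ} (ha : 0 < a)
    (hab : a < 2 * b) (hr : ResolventSurjective 𝕜 M a) : ResolventSurjective 𝕜 M b := by
  intro f
  have hb : 0 < b := by linarith
  set s : ℝ := a / b
  have hs : |1 - s| < 1 := abs_sub_lt_iff.2
    ⟨by linarith [div_pos ha hb], by linarith [(div_lt_iff₀ hb).2 hab]⟩
  -- `x - b y = f` is equivalent to `x - a y = s f + (1 - s) x`
  have hΦ : LipschitzWith (Real.toNNReal |1 - s|)
      fun x : H => (s : 𝕜) • f + ((1 - s : ℝ) : 𝕜) • x :=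
    LipschitzWith.of_dist_le' fun x x' => by
      rw [dist_eq_norm, dist_eq_norm, ← norm_ofReal (K := 𝕜), ← norm_smul, smul_sub,
        add_sub_add_left_eq_sub]
  obtain ⟨x, y, hy, hxy⟩ := hM.exists_sub_smul_eq_of_lipschitzWith ha.le hr
    (Real.toNNReal_lt_one.2 hs) hΦ
  refine ⟨x, y, hy, ?_⟩
  have hs0 : (s : 𝕜) ≠ 0 := ofReal_ne_zero.2 (div_pos ha hb).ne'
  apply smul_right_injective H hs0
  have has : (a : 𝕜) = s * b := by simp [s, hb.ne']
  rw [has] at hxy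
  push_cast at hxy
  linear_combination (norm := module) hxy

theorem resolventSurjective_of_pos (hM : IsDissipative 𝕜 M) (h1 : ResolventSurjective 𝕜 M 1)
    {t : ℝ} (ht : 0 < t) : ResolventSurjective 𝕜 M t := by
  have hpow : ∀ n : ℕ, ∀ t : ℝ, (2 / 3 : ℝ) ^ n ≤ t → ResolventSurjective 𝕜 M t := by
    intro n
    induction n with
    | zero =>
      exact fun t ht => hM.resolventSurjective_of_lt_two_mul one_pos (by simp at ht; linarith) h1
    | succ n ih =>
      intro t ht
      have ht0 : 0 < t := lt_of_lt_of_le (by positivity) ht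
      exact hM.resolventSurjective_of_lt_two_mul (by positivity) (by linarith)
        (ih (3 / 2 * t) (by rw [pow_succ] at ht; linarith))
  obtain ⟨n, hn⟩ := exists_pow_lt_of_lt_one ht (by norm_num : (2 / 3 : ℝ) < 1)
  exact hpow n t hn.le

end IsDissipative

theorem IsDissipative.addMap {M : H → Set H} {L : H → H} (hM : IsDissipative 𝕜 M)
    (hL : ∀ x x', re (inner 𝕜 (L x - L x') (x - x') : 𝕜) ≤ 0) :
    IsDissipative 𝕜 (addMap M L) := by
  rintro x x' _ _ ⟨y, hy, rfl⟩ ⟨y', hy', rfl⟩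
  rw [show y + L x - (y' + L x') = (y - y') + (L x - L x') by abel, inner_add_left, map_add]
  linarith [hM x x' y y' hy hy', hL x x']

theorem ResolventSurjective.addMap [CompleteSpace H] {M : H → Set H} {L : H → H} {K : NNReal}
    (h1 : ResolventSurjective 𝕜 M 1) (hM : IsDissipative 𝕜 M)
    (hL : ∀ x x', re (inner 𝕜 (L x - L x') (x - x') : 𝕜) ≤ 0) (hLK : LipschitzWith K L) :
    ResolventSurjective 𝕜 (addMap M L) 1 := by
  set t : ℝ := 1 / (K + 1)
  have ht : 0 < t := by positivity
  have ht1 : t ≤ 1 := by simp only [t]; bound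
  have htK : t * K < 1 := by
    rw [div_mul_eq_mul_div, one_mul, div_lt_one (by positivity)]; linarith
  refine (hM.addMap hL).resolventSurjective_of_lt_two_mul ht (by linarith) fun f => ?_
  have hΦ : LipschitzWith (Real.toNNReal (t * K)) fun x => f + (t : 𝕜) • L x :=
    LipschitzWith.of_dist_le' fun x x' => by
      rw [dist_eq_norm, dist_eq_norm, add_sub_add_left_eq_sub, ← smul_sub, norm_smul, norm_ofReal,
        abs_of_pos ht, mul_assoc]
      exact mul_le_mul_of_nonneg_left (by simpa [dist_eq_norm] using hLK.dist_le_mul x x') ht.le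
  obtain ⟨x, y, hy, hxy⟩ := hM.exists_sub_smul_eq_of_lipschitzWith ht.le
    (hM.resolventSurjective_of_pos h1 ht) (Real.toNNReal_lt_one.2 htK) hΦ
  exact ⟨x, y + L x, ⟨y, hy, rfl⟩, by rw [smul_add, ← sub_sub, hxy, add_sub_cancel_right]⟩

end SetValued

section Product

open WithLp ContinuousLinearMap SetValued

variable {𝕜 : Type*} [RCLike 𝕜] {X U : Type*} [NormedAddCommGroup X] [InnerProductSpace 𝕜 X]
  [NormedAddCommGroup U] [InnerProductSpace 𝕜 U]

namespace SetValued

def prodMap (A : X → Set X) (D : U → Set U) (p : WithLp 2 (X × U)) : Set (WithLp 2 (X × U)) :=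
  {q | q.fst ∈ A p.fst ∧ q.snd ∈ D p.snd}

theorem IsDissipative.prodMap {A : X → Set X} {D : U → Set U} (hA : IsDissipative 𝕜 A)
    (hD : IsDissipative 𝕜 D) : IsDissipative 𝕜 (prodMap A D) := by
  rintro p p' q q' ⟨hq₁, hq₂⟩ ⟨hq₁', hq₂'⟩
  rw [prod_inner_apply, map_add]
  exact add_nonpos (hA _ _ _ _ hq₁ hq₁') (hD _ _ _ _ hq₂ hq₂')

theorem ResolventSurjective.prodMap {A : X → Set X} {D : U → Set U} {t : ℝ}
    (hA : ResolventSurjective 𝕜 A t) (hD : ResolventSurjective 𝕜 D t) :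
    ResolventSurjective 𝕜 (prodMap A D) t := by
  intro f
  obtain ⟨x, z, hz, hxz⟩ := hA f.fst
  obtain ⟨u, w, hw, huw⟩ := hD f.snd
  refine ⟨toLp 2 (x, u), toLp 2 (z, w), ⟨hz, hw⟩, (WithLp.ext_iff 2).2 (Prod.ext ?_ ?_)⟩
  · simpa using hxz
  · simpa using huw

end SetValued

variable [CompleteSpace X] [CompleteSpace U]

noncomputable def couplingOp (B : U →L[𝕜] X) : WithLp 2 (X × U) →L[𝕜] WithLp 2 (X × U) :=
  (prodContinuousLinearEquiv 2 𝕜 X U).symm.toContinuousLinearMap ∘L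
    ((B ∘L snd 𝕜 X U).prod (-(adjoint B) ∘L fst 𝕜 X U)) ∘L
      (prodContinuousLinearEquiv 2 𝕜 X U).toContinuousLinearMap

@[simp]
theorem couplingOp_apply (B : U →L[𝕜] X) (p : WithLp 2 (X × U)) :
    couplingOp B p = toLp 2 (B p.snd, -adjoint B p.fst) :=
  rfl

theorem re_inner_couplingOp_self (B : U →L[𝕜] X) (p : WithLp 2 (X × U)) :
    re (inner 𝕜 (couplingOp B p) p : 𝕜) = 0 := by
  rw [couplingOp_apply, prod_inner_apply, inner_neg_left, adjoint_inner_left, map_add, map_neg,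
    inner_re_symm]
  simp

theorem toLp_mem_addMap_prodMap_couplingOp_iff {A : X → Set X} {D : U → Set U} {B : U →L[𝕜] X}
    {p q : X × U} :
    toLp 2 q ∈ addMap (prodMap A fun u => -D u) (couplingOp B) (toLp 2 p) ↔
      ∃ z ∈ A p.1, ∃ w ∈ D p.2, q = (z + B p.2, -adjoint B p.1 - w) := by
  constructor
  · rintro ⟨y, ⟨hy₁, hy₂⟩, hq⟩
    refine ⟨y.fst, hy₁, -y.snd, hy₂, ?_⟩
    rw [← ofLp_toLp 2 q, ← hq]
    ext <;> simp [add_comm]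
  · rintro ⟨z, hz, w, hw, rfl⟩
    refine ⟨toLp 2 (z, -w), ⟨hz, by simpa using hw⟩, ?_⟩
    refine (WithLp.ext_iff 2).2 (Prod.ext ?_ ?_) <;> simp [neg_add_eq_sub]

end Product

open WithLp SetValued in
theorem stmt_8_general {𝕜 : Type*} [RCLike 𝕜]
    {Xc U : Type*} [NormedAddCommGroup Xc] [InnerProductSpace 𝕜 Xc] [CompleteSpace Xc]
    [NormedAddCommGroup U] [InnerProductSpace 𝕜 U] [CompleteSpace U]
    (Ac : Xc → Set Xc)
    (hAc_diss : ∀ x x' z z', z ∈ Ac x → z' ∈ Ac x' →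
      RCLike.re (inner 𝕜 (z - z') (x - x') : 𝕜) ≤ 0)
    (hAc_ran : ∀ f : Xc, ∃ x z, z ∈ Ac x ∧ x - z = f)
    (Dc : U → Set U)
    (hDc_diss : ∀ u u' w w', w ∈ Dc u → w' ∈ Dc u' →
      RCLike.re (inner 𝕜 ((-w) - (-w')) (u - u') : 𝕜) ≤ 0)
    (hDc_ran : ∀ f : U, ∃ u w, w ∈ Dc u ∧ u + w = f)
    (Bc : U →L[𝕜] Xc)
    (Mc : Xc × U → Set (Xc × U))
    (hMc : ∀ p : Xc × U, Mc p =
      {q : Xc × U | ∃ z ∈ Ac p.1, ∃ w ∈ Dc p.2,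
        q = (z + Bc p.2, -(ContinuousLinearMap.adjoint Bc) p.1 - w)}) :
    (∀ (p p' q q' : Xc × U), q ∈ Mc p → q' ∈ Mc p' →
      RCLike.re (inner 𝕜 (q.1 - q'.1) (p.1 - p'.1) : 𝕜)
        + RCLike.re (inner 𝕜 (q.2 - q'.2) (p.2 - p'.2) : 𝕜) ≤ 0) ∧
    (∀ f : Xc × U, ∃ p q : Xc × U, q ∈ Mc p ∧ p - q = f) := by
  set M := addMap (prodMap Ac fun u => -Dc u) (couplingOp Bc)
  have hmem (p q : Xc × U) : q ∈ Mc p ↔ toLp 2 q ∈ M (toLp 2 p) := by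
    rw [toLp_mem_addMap_prodMap_couplingOp_iff, hMc, Set.mem_ofPred_eq]
  have hA : IsDissipative 𝕜 Ac := hAc_diss
  have hD : IsDissipative 𝕜 fun u => -Dc u := fun u u' w w' hw hw' => by
    simpa using hDc_diss u u' (-w) (-w') hw hw'
  have hA_ran : ResolventSurjective 𝕜 Ac 1 := fun f => by
    obtain ⟨x, z, hz, rfl⟩ := hAc_ran f
    exact ⟨x, z, hz, by simp⟩
  have hD_ran : ResolventSurjective 𝕜 (fun u => -Dc u) 1 := fun f => by
    obtain ⟨u, w, hw, rfl⟩ := hDc_ran f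
    exact ⟨u, -w, by simpa using hw, by simp⟩
  have hL (p p' : WithLp 2 (Xc × U)) :
      RCLike.re (inner 𝕜 (couplingOp Bc p - couplingOp Bc p') (p - p') : 𝕜) ≤ 0 := by
    rw [← map_sub, re_inner_couplingOp_self]
  have hM_diss : IsDissipative 𝕜 M := (hA.prodMap hD).addMap hL
  have hM_ran : ResolventSurjective 𝕜 M 1 :=
    (hA_ran.prodMap hD_ran).addMap (hA.prodMap hD) hL (couplingOp Bc).lipschitz
  refine ⟨fun p p' q q' hq hq' => ?_, fun f => ?_⟩
  · simpa using hM_diss _ _ _ _ ((hmem p q).1 hq) ((hmem p' q').1 hq')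
  · obtain ⟨x, y, hy, hxy⟩ := hM_ran (toLp 2 f)
    refine ⟨ofLp x, ofLp y, (hmem _ _).2 (by simpa using hy), ?_⟩
    simpa using congrArg ofLp hxy

/-- collocated controller construction, Example 6.1.
If `A_c` is m-dissipative, `-D_c` is m-dissipative with `D(D_c) = U`, and `B_c` is a bounded
linear operator with adjoint `B_c*`, then
`M_c(x_c, u) = {(z + B_c u, -B_c* x_c - w) : z ∈ A_c x_c, w ∈ D_c u}` is m-dissipative on
the product Hilbert space `X_c × U`. -/
theorem stmt_8 {𝕜 : Type*} [RCLike 𝕜]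
    {Xc U : Type*} [NormedAddCommGroup Xc] [InnerProductSpace 𝕜 Xc] [CompleteSpace Xc]
    [NormedAddCommGroup U] [InnerProductSpace 𝕜 U] [CompleteSpace U]
    (Ac : Xc → Set Xc)
    (hAc_diss : ∀ x x' z z', z ∈ Ac x → z' ∈ Ac x' →
      RCLike.re (inner 𝕜 (z - z') (x - x') : 𝕜) ≤ 0)
    (hAc_ran : ∀ f : Xc, ∃ x z, z ∈ Ac x ∧ x - z = f)
    (Dc : U → Set U)
    (hDc_dom : ∀ u : U, (Dc u).Nonempty)
    (hDc_diss : ∀ u u' w w', w ∈ Dc u → w' ∈ Dc u' →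
      RCLike.re (inner 𝕜 ((-w) - (-w')) (u - u') : 𝕜) ≤ 0)
    (hDc_ran : ∀ f : U, ∃ u w, w ∈ Dc u ∧ u + w = f)
    (Bc : U →L[𝕜] Xc)
    (Mc : Xc × U → Set (Xc × U))
    (hMc : ∀ p : Xc × U, Mc p =
      {q : Xc × U | ∃ z ∈ Ac p.1, ∃ w ∈ Dc p.2,
        q = (z + Bc p.2, -(ContinuousLinearMap.adjoint Bc) p.1 - w)}) :
    (∀ (p p' q q' : Xc × U), q ∈ Mc p → q' ∈ Mc p' →
      RCLike.re (inner 𝕜 (q.1 - q'.1) (p.1 - p'.1) : 𝕜)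
        + RCLike.re (inner 𝕜 (q.2 - q'.2) (p.2 - p'.2) : 𝕜) ≤ 0) ∧
    (∀ f : Xc × U, ∃ p q : Xc × U, q ∈ Mc p ∧ p - q = f) :=
  stmt_8_general Ac hAc_diss hAc_ran Dc hDc_diss hDc_ran Bc Mc hMc
end

section
/- Let d ∈ ℕ, let P₁ be an invertible symmetric real d × d matrix, let P₀ be a real d × d matrix, and let ℋ : [0,1] → Matrix (Fin d) (Fin d) ℝ be continuously differentiable with ℋ(ζ) symmetric and m₀ I ≤ ℋ(ζ) ≤ M₀ I for some 0 < m₀ ≤ M₀ and all ζ ∈ [0,1]. Let κ > 0. Then there exist M ≥ 1 and ω < 0, depending only on P₁, P₀, ℋ and κ, such that the following holds: for every continuously differentiable function x : [0,∞) × [0,1] → ℝ^d satisfying the partial differential equation ∂x/∂t (t,ζ) = P₁ ∂(ℋx)/∂ζ (t,ζ) + P₀ ℋ(ζ) x(t,ζ) on [0,∞) × [0,1] and satisfying the boundary dissipation estimate (d/dt) (1/2)∫₀¹ x(t,ζ)ᵀ ℋ(ζ) x(t,ζ) dζ ≤ −κ · x(t,1)ᵀ ℋ(1) x(t,1) for all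 t ≥ 0, one has ∫₀¹ x(t,ζ)ᵀ ℋ(ζ) x(t,ζ) dζ ≤ M e^{ωt} ∫₀¹ x(0,ζ)ᵀ ℋ(ζ) x(0,ζ) dζ for all t ≥ 0. -/
/-
The proof is a multiplier argument. Along a solution, the spatial derivative of the energy density
`q = xᵀ ℋ x` is `∂ₜ (xᵀ P₁⁻¹ x)` plus a quadratic form in `x` that is bounded by `c q`; and
`|xᵀ P₁⁻¹ x| ≤ γ q`. Hence `F(ζ) = ∫ₐᵇ q(t, ζ) dt` satisfies `F' ≥ -γ (q(a, ·) + q(b, ·)) - c F`,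
and a backward Gronwall argument on `[0, 1]` bounds `∫₀¹ F = ∫ₐᵇ E` by `e^c` times the boundary
observation `∫ₐᵇ q(t, 1) dt` plus `γ (E(a) + E(b))`. The dissipation estimate bounds the boundary
observation by `E(a) / (2κ)` and makes `E` nonincreasing, so `(b - a) E(b) ≤ C E(a)` with
`C = e^c (1/(2κ) + 2γ)`. Windows of length `2C` therefore halve the energy, which is exponential
decay.
-/

open scoped Matrix
open MeasureTheory Set

namespace Matrix

variable {n : Type*} [Fintype n]

theorem abs_mul_le_dotProduct_self (v : n → ℝ) (i j : n) : |v i * v j| ≤ v ⬝ᵥ v := by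
  have hsq : ∀ k, v k ^ 2 ≤ v ⬝ᵥ v := fun k => by
    simpa [sq, dotProduct] using
      Finset.single_le_sum (fun l _ => mul_self_nonneg (v l)) (Finset.mem_univ k)
  rw [abs_mul]
  nlinarith [two_mul_le_add_sq |v i| |v j|, sq_abs (v i), sq_abs (v j), hsq i, hsq j]

theorem abs_dotProduct_mulVec_le (A : Matrix n n ℝ) (v : n → ℝ) :
    |v ⬝ᵥ (A *ᵥ v)| ≤ (∑ i, ∑ j, |A i j|) * (v ⬝ᵥ v) := by
  have hexp : v ⬝ᵥ (A *ᵥ v) = ∑ i, ∑ j, A i j * (v i * v j) := by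
    simp only [dotProduct, mulVec, Finset.mul_sum]
    exact Finset.sum_congr rfl fun i _ => Finset.sum_congr rfl fun j _ => by ring
  rw [hexp, Finset.sum_mul]
  refine (Finset.abs_sum_le_sum_abs _ _).trans (Finset.sum_le_sum fun i _ => ?_)
  rw [Finset.sum_mul]
  refine (Finset.abs_sum_le_sum_abs _ _).trans (Finset.sum_le_sum fun j _ => ?_)
  rw [abs_mul]
  exact mul_le_mul_of_nonneg_left (abs_mul_le_dotProduct_self v i j) (abs_nonneg _)

theorem _root_.IsCompact.exists_abs_dotProduct_mulVec_le {X : Type*} [TopologicalSpace X]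
    {s : Set X} (hs : IsCompact s) {A H : X → Matrix n n ℝ} (hA : ContinuousOn A s) {m : ℝ}
    (hm : 0 < m) (hH : ∀ z ∈ s, ∀ v, m * (v ⬝ᵥ v) ≤ v ⬝ᵥ (H z *ᵥ v)) :
    ∃ C, 0 ≤ C ∧ ∀ z ∈ s, ∀ v, |v ⬝ᵥ (A z *ᵥ v)| ≤ C * (v ⬝ᵥ (H z *ᵥ v)) := by
  have hN : ContinuousOn (fun z => ∑ i, ∑ j, |A z i j|) s :=
    continuousOn_finsetSum _ fun i _ => continuousOn_finsetSum _ fun j _ =>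
      ((continuous_id.matrix_elem i j).comp_continuousOn hA).abs
  obtain ⟨B, hB⟩ := hs.exists_bound_of_continuousOn hN
  refine ⟨max B 0 / m, by positivity, fun z hz v => ?_⟩
  have hNB : ∑ i, ∑ j, |A z i j| ≤ max B 0 :=
    (le_abs_self _).trans ((hB z hz).trans (le_max_left _ _))
  have hvv : 0 ≤ v ⬝ᵥ v := Finset.sum_nonneg fun i _ => mul_self_nonneg (v i)
  calc |v ⬝ᵥ (A z *ᵥ v)| ≤ (∑ i, ∑ j, |A z i j|) * (v ⬝ᵥ v) := abs_dotProduct_mulVec_le _ v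
    _ ≤ max B 0 / m * (m * (v ⬝ᵥ v)) := by
        rw [← mul_assoc, div_mul_cancel₀ _ hm.ne']
        exact mul_le_mul_of_nonneg_right hNB hvv
    _ ≤ max B 0 / m * (v ⬝ᵥ (H z *ᵥ v)) := by gcongr; exact hH z hz v

end Matrix

theorem ContinuousOn.dotProduct_mulVec {n X : Type*} [Fintype n] [TopologicalSpace X] {s : Set X}
    {u v : X → n → ℝ} {M : X → Matrix n n ℝ} (hu : ContinuousOn u s) (hM : ContinuousOn M s)
    (hv : ContinuousOn v s) : ContinuousOn (fun p => u p ⬝ᵥ (M p *ᵥ v p)) s := by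
  rw [continuousOn_iff_continuous_domRestrict] at *
  exact hu.dotProduct (hM.matrix_mulVec hv)


section VectorCalculus

variable {m n : Type*} [Fintype n] {u v : ℝ → n → ℝ} {u' v' : n → ℝ} {s : Set ℝ} {z : ℝ}

theorem HasDerivWithinAt.dotProduct (hu : HasDerivWithinAt u u' s z)
    (hv : HasDerivWithinAt v v' s z) :
    HasDerivWithinAt (fun t => u t ⬝ᵥ v t) (u' ⬝ᵥ v z + u z ⬝ᵥ v') s z := by
  rw [hasDerivWithinAt_pi] at hu hv
  have h := HasDerivWithinAt.fun_sum (u := Finset.univ) fun i _ => (hu i).mul (hv i)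
  rwa [Finset.sum_add_distrib] at h

theorem HasDerivWithinAt.matrix_mulVec {A : ℝ → Matrix m n ℝ} {A' : Matrix m n ℝ}
    (hA : ∀ i j, HasDerivWithinAt (fun t => A t i j) (A' i j) s z)
    (hv : HasDerivWithinAt v v' s z) :
    HasDerivWithinAt (fun t => A t *ᵥ v t) (A' *ᵥ v z + A z *ᵥ v') s z :=
  hasDerivWithinAt_pi.2 fun i => (hasDerivWithinAt_pi.2 (hA i)).dotProduct hv

theorem HasDerivWithinAt.dotProduct_mulVec_self {S : Matrix n n ℝ} (hS : Sᵀ = S)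
    (hv : HasDerivWithinAt v v' s z) :
    HasDerivWithinAt (fun t => v t ⬝ᵥ (S *ᵥ v t)) (2 * (v z ⬝ᵥ (S *ᵥ v'))) s z := by
  convert hv.dotProduct ((HasDerivWithinAt.matrix_mulVec (A := fun _ => S) (A' := 0)
    (fun _ _ => hasDerivWithinAt_const _ _ _)) hv) using 1
  rw [Matrix.zero_mulVec, zero_add, ← Matrix.dotProduct_transpose_mulVec, hS]
  ring

end VectorCalculus

section MatrixEntries

variable {n : Type*} [Fintype n] [DecidableEq n] {E : Type*} [NormedAddCommGroup E]
  [NormedSpace ℝ E] {A : E → Matrix n n ℝ} {s : Set E} {k : WithTop ℕ∞}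

theorem contDiffOn_matrix_det (h : ∀ i j, ContDiffOn ℝ k (fun z => A z i j) s) :
    ContDiffOn ℝ k (fun z => (A z).det) s := by
  simp only [Matrix.det_apply, Units.smul_def, zsmul_eq_mul]
  exact ContDiffOn.sum fun σ _ => contDiffOn_const.mul (contDiffOn_prod fun i _ => h (σ i) i)

theorem contDiffOn_matrix_inv_apply (h : ∀ i j, ContDiffOn ℝ k (fun z => A z i j) s)
    (hdet : ∀ z ∈ s, (A z).det ≠ 0) (i j : n) :
    ContDiffOn ℝ k (fun z => (A z)⁻¹ i j) s := by
  simp only [Matrix.inv_def, Matrix.smul_apply, Ring.inverse_eq_inv', smul_eq_mul,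
    Matrix.adjugate_apply]
  refine ((contDiffOn_matrix_det h).inv hdet).mul (contDiffOn_matrix_det fun i' j' => ?_)
  by_cases hij : i' = j
  · subst hij
    simpa only [Matrix.updateRow_self] using contDiffOn_const
  · simpa only [Matrix.updateRow_ne hij] using h i' j'

end MatrixEntries

section Rectangle

variable {f f' : ℝ → ℝ → ℝ} {a b c e : ℝ}

theorem continuousOn_intervalIntegral_of_rect (hab : a ≤ b)
    (hf : ContinuousOn f.uncurry (Icc a b ×ˢ Icc c e)) :
    ContinuousOn (fun ζ => ∫ t in a..b, f t ζ) (Icc c e) := by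
  rcases lt_or_ge e c with hec | hce
  · simp [Icc_eq_empty_of_lt hec]
  -- extend `f` continuously to the whole plane by clamping both variables to the rectangle
  set g : ℝ → ℝ → ℝ := fun ζ t => f (projIcc a b hab t) (projIcc c e hce ζ)
  have hg : Continuous g.uncurry :=
    hf.comp_continuous
      ((continuous_subtype_val.comp ((continuous_projIcc (h := hab)).comp continuous_snd)).prodMk
        (continuous_subtype_val.comp ((continuous_projIcc (h := hce)).comp continuous_fst)))
      fun p => ⟨Subtype.mem _, Subtype.mem _⟩
  refine (intervalIntegral.continuous_parametric_intervalIntegral_of_continuous' hg a b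
    ).continuousOn.congr fun ζ hζ => intervalIntegral.integral_congr fun t ht => ?_
  rw [uIcc_of_le hab] at ht
  simp [g, projIcc_of_mem _ ht, projIcc_of_mem _ hζ]

theorem hasDerivAt_intervalIntegral_of_rect (hab : a ≤ b)
    (hf : ContinuousOn f.uncurry (Icc a b ×ˢ Icc c e))
    (hf' : ContinuousOn f'.uncurry (Icc a b ×ˢ Icc c e))
    (hderiv : ∀ t ∈ Icc a b, ∀ ζ ∈ Icc c e, HasDerivWithinAt (f t) (f' t ζ) (Icc c e) ζ)
    {ζ₀ : ℝ} (hζ₀ : ζ₀ ∈ Ioo c e) :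
    HasDerivAt (fun ζ => ∫ t in a..b, f t ζ) (∫ t in a..b, f' t ζ₀) ζ₀ := by
  obtain ⟨C, hC⟩ := (isCompact_Icc.prod isCompact_Icc).exists_bound_of_continuousOn hf'
  have hIoc : uIoc a b = Ioc a b := uIoc_of_le hab
  have hslice : ∀ {g : ℝ → ℝ → ℝ}, ContinuousOn g.uncurry (Icc a b ×ˢ Icc c e) → ∀ ζ ∈ Ioo c e,
      ContinuousOn (fun t => g t ζ) (Icc a b) := fun hg ζ hζ =>
    hg.uncurry_right ζ (Ioo_subset_Icc_self hζ)
  refine (intervalIntegral.hasDerivAt_integral_of_dominated_loc_of_deriv_le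
    (F := fun ζ t => f t ζ) (F' := fun ζ t => f' t ζ) (μ := volume) (bound := fun _ => C)
    (Ioo_mem_nhds hζ₀.1 hζ₀.2) ?_ ((hslice hf ζ₀ hζ₀).intervalIntegrable_of_Icc hab) ?_ ?_
    intervalIntegrable_const ?_).2
  · filter_upwards [Ioo_mem_nhds hζ₀.1 hζ₀.2] with ζ hζ
    rw [hIoc]
    exact ((hslice hf ζ hζ).mono Ioc_subset_Icc_self).aestronglyMeasurable measurableSet_Ioc
  · rw [hIoc]
    exact ((hslice hf' ζ₀ hζ₀).mono Ioc_subset_Icc_self).aestronglyMeasurable measurableSet_Ioc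
  · refine ae_of_all _ fun t ht ζ hζ => hC (t, ζ) ⟨?_, Ioo_subset_Icc_self hζ⟩
    rw [hIoc] at ht
    exact Ioc_subset_Icc_self ht
  · refine ae_of_all _ fun t ht ζ hζ => (hderiv t ?_ ζ (Ioo_subset_Icc_self hζ)).hasDerivAt
      (Icc_mem_nhds hζ.1 hζ.2)
    rw [hIoc] at ht
    exact Ioc_subset_Icc_self ht

theorem intervalIntegral_integral_swap_of_rect (hab : a ≤ b) (hce : c ≤ e)
    (hf : ContinuousOn f.uncurry (Icc a b ×ˢ Icc c e)) :
    ∫ ζ in c..e, ∫ t in a..b, f t ζ = ∫ t in a..b, ∫ ζ in c..e, f t ζ := by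
  simp only [intervalIntegral.integral_of_le hab, intervalIntegral.integral_of_le hce]
  refine integral_integral_swap ?_
  rw [Measure.prod_restrict, ← Measure.volume_eq_prod]
  have hswap : ContinuousOn (fun p : ℝ × ℝ => f p.2 p.1) (Icc c e ×ˢ Icc a b) :=
    hf.comp continuous_swap.continuousOn fun p hp => ⟨hp.2, hp.1⟩
  exact (hswap.integrableOn_compact (isCompact_Icc.prod isCompact_Icc)).mono_set
    (prod_mono Ioc_subset_Icc_self Ioc_subset_Icc_self)

end Rectangle

theorem le_exp_mul_add_integral_of_deriv_ge {F F' B : ℝ → ℝ} {a b c : ℝ} (hab : a ≤ b)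
    (hc : 0 ≤ c) (hF : ContinuousOn F (Icc a b)) (hF' : ∀ ζ ∈ Ioo a b, HasDerivAt F (F' ζ) ζ)
    (hF0 : ∀ ζ ∈ Icc a b, 0 ≤ F ζ) (hB : ContinuousOn B (Icc a b))
    (hB0 : ∀ ζ ∈ Icc a b, 0 ≤ B ζ) (hFB : ∀ ζ ∈ Ioo a b, -B ζ - c * F ζ ≤ F' ζ) :
    ∀ ζ ∈ Icc a b, F ζ ≤ Real.exp (c * (b - a)) * (F b + ∫ s in a..b, B s) := by
  set K := Real.exp (c * (b - a))
  -- `Φ` is nondecreasing: the weight `exp (c (ζ - a))` absorbs `-c F` and `K ≥ exp (c (ζ - a))`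
  -- absorbs `-B`.
  set Φ := fun ζ => Real.exp (c * (ζ - a)) * F ζ + K * ∫ s in a..ζ, B s
  have hprim : ∀ ζ ∈ Ioo a b, HasDerivAt (fun ζ => ∫ s in a..ζ, B s) (B ζ) ζ := fun ζ hζ =>
    intervalIntegral.integral_hasDerivAt_right
      ((hB.mono (uIcc_subset_Icc (left_mem_Icc.2 hab) (Ioo_subset_Icc_self hζ))).intervalIntegrable)
      ((hB.mono Ioo_subset_Icc_self).stronglyMeasurableAtFilter isOpen_Ioo ζ hζ)
      ((hB ζ (Ioo_subset_Icc_self hζ)).continuousAt (Icc_mem_nhds hζ.1 hζ.2))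
  have hweight : ∀ ζ, HasDerivAt (fun ζ => Real.exp (c * (ζ - a)))
      (Real.exp (c * (ζ - a)) * c) ζ := fun ζ => by
    simpa using (((hasDerivAt_id ζ).sub_const a).const_mul c).exp
  have hΦ : MonotoneOn Φ (Icc a b) := by
    refine monotoneOn_of_hasDerivWithinAt_nonneg (convex_Icc a b)
      (f' := fun ζ => Real.exp (c * (ζ - a)) * c * F ζ + Real.exp (c * (ζ - a)) * F' ζ + K * B ζ)
      ?_ (fun ζ hζ => ?_) (fun ζ hζ => ?_)
    · have hprimc := intervalIntegral.continuousOn_primitive_interval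
        (μ := volume)
        ((hB.integrableOn_compact isCompact_Icc).mono_set (uIcc_of_le hab).subset)
      rw [uIcc_of_le hab] at hprimc
      exact ((Real.continuous_exp.comp ((continuous_sub_right a).const_mul c)).continuousOn.mul
        hF).add (continuousOn_const.mul hprimc)
    · rw [interior_Icc] at hζ
      exact (((hweight ζ).mul (hF' ζ hζ)).add ((hprim ζ hζ).const_mul K)).hasDerivWithinAt
    · rw [interior_Icc] at hζ
      have hK : Real.exp (c * (ζ - a)) ≤ K := Real.exp_le_exp.2 (by nlinarith [hζ.2])
      nlinarith [mul_le_mul_of_nonneg_left (hFB ζ hζ) (Real.exp_pos (c * (ζ - a))).le,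
        mul_le_mul_of_nonneg_right hK (hB0 ζ (Ioo_subset_Icc_self hζ))]
  intro ζ hζ
  have hprim0 : 0 ≤ ∫ s in a..ζ, B s :=
    intervalIntegral.integral_nonneg hζ.1 fun s hs => hB0 s ⟨hs.1, hs.2.trans hζ.2⟩
  have hFζ : F ζ ≤ Real.exp (c * (ζ - a)) * F ζ :=
    le_mul_of_one_le_left (hF0 ζ hζ) (Real.one_le_exp (mul_nonneg hc (sub_nonneg.2 hζ.1)))
  have := hΦ hζ (right_mem_Icc.2 hab) hζ.2
  simp only [Φ] at this
  nlinarith [mul_nonneg (Real.exp_pos (c * (b - a))).le hprim0]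

theorem le_inv_mul_exp_mul_of_antitoneOn {E : ℝ → ℝ} {τ θ : ℝ} (hτ : 0 < τ) (hθ0 : 0 < θ)
    (hθ1 : θ ≤ 1) (hE : AntitoneOn E (Ici 0)) (hE0 : 0 ≤ E 0)
    (hstep : ∀ s, 0 ≤ s → E (s + τ) ≤ θ * E s) {t : ℝ} (ht : 0 ≤ t) :
    E t ≤ θ⁻¹ * Real.exp (Real.log θ / τ * t) * E 0 := by
  have hiter : ∀ k : ℕ, E (k * τ) ≤ θ ^ k * E 0 := fun k => by
    induction k with
    | zero => simp
    | succ k ih =>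
      calc E ((k + 1 : ℕ) * τ) = E (k * τ + τ) := by push_cast; ring_nf
        _ ≤ θ * E (k * τ) := hstep _ (by positivity)
        _ ≤ θ * (θ ^ k * E 0) := mul_le_mul_of_nonneg_left ih hθ0.le
        _ = θ ^ (k + 1) * E 0 := by ring
  set k := ⌊t / τ⌋₊
  have hkt : k * τ ≤ t := (le_div_iff₀ hτ).1 (Nat.floor_le (div_nonneg ht hτ.le))
  have hpow : θ ^ k ≤ θ⁻¹ * Real.exp (Real.log θ / τ * t) := by
    have hexp : θ ^ (k + 1) = Real.exp ((k + 1 : ℕ) * Real.log θ) := by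
      rw [Real.exp_nat_mul, Real.exp_log hθ0]
    have hlt : t / τ < (k + 1 : ℕ) := by push_cast; exact Nat.lt_floor_add_one _
    have hmono : θ ^ (k + 1) ≤ Real.exp (Real.log θ / τ * t) := by
      rw [hexp, div_mul_eq_mul_div, mul_div_assoc, mul_comm (Real.log θ)]
      exact Real.exp_le_exp.2 (mul_le_mul_of_nonpos_right hlt.le (Real.log_nonpos hθ0.le hθ1))
    rw [pow_succ] at hmono
    rwa [le_inv_mul_iff₀ hθ0, mul_comm]
  calc E t ≤ E (k * τ) := hE (mem_Ici.2 (by positivity)) ht hkt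
    _ ≤ θ ^ k * E 0 := hiter k
    _ ≤ θ⁻¹ * Real.exp (Real.log θ / τ * t) * E 0 := by gcongr

namespace PortHamiltonian

variable {n : Type*} [Fintype n]

theorem flux_identity [DecidableEq n] {H P₁ P₀ K : Matrix n n ℝ} (hH : Hᵀ = H)
    (hHdet : IsUnit H.det) (hP₁det : IsUnit P₁.det)
    {x w' xt : n → ℝ} (hxt : xt = P₁ *ᵥ w' + P₀ *ᵥ (H *ᵥ x)) :
    (K *ᵥ (H *ᵥ x) + H⁻¹ *ᵥ w') ⬝ᵥ (H *ᵥ x) + x ⬝ᵥ w'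
      = 2 * (x ⬝ᵥ (P₁⁻¹ *ᵥ xt)) + x ⬝ᵥ ((H * K * H - 2 • (P₁⁻¹ * P₀ * H)) *ᵥ x) := by
  have hw' : w' = P₁⁻¹ *ᵥ xt - P₁⁻¹ *ᵥ (P₀ *ᵥ (H *ᵥ x)) := by
    rw [hxt, Matrix.mulVec_add, Matrix.mulVec_mulVec, Matrix.nonsing_inv_mul _ hP₁det,
      Matrix.one_mulVec, add_sub_cancel_right]
  have hK : (K *ᵥ (H *ᵥ x)) ⬝ᵥ (H *ᵥ x) = x ⬝ᵥ (H *ᵥ (K *ᵥ (H *ᵥ x))) := by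
    rw [← Matrix.dotProduct_transpose_mulVec, hH]
  have hinv : (H⁻¹ *ᵥ w') ⬝ᵥ (H *ᵥ x) = x ⬝ᵥ w' := by
    rw [← Matrix.dotProduct_transpose_mulVec, hH, Matrix.mulVec_mulVec,
      Matrix.mul_nonsing_inv _ hHdet, Matrix.one_mulVec]
  rw [add_dotProduct, hK, hinv, hw', Matrix.sub_mulVec, Matrix.smul_mulVec]
  simp only [dotProduct_sub, dotProduct_smul]
  simp only [← Matrix.mulVec_mulVec, nsmul_eq_mul]
  ring

structure IsHamiltonianDensity (H : ℝ → Matrix n n ℝ) (m₀ : ℝ) : Prop where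
  contDiffOn_apply : ∀ i j, ContDiffOn ℝ 1 (fun ζ => H ζ i j) (Icc 0 1)
  transpose_eq : ∀ ζ ∈ Icc (0 : ℝ) 1, (H ζ)ᵀ = H ζ
  pos : 0 < m₀
  coercive : ∀ ζ ∈ Icc (0 : ℝ) 1, ∀ v, m₀ * (v ⬝ᵥ v) ≤ v ⬝ᵥ (H ζ *ᵥ v)

def energyDensity (H : ℝ → Matrix n n ℝ) (x : ℝ → ℝ → n → ℝ) (t ζ : ℝ) : ℝ :=
  x t ζ ⬝ᵥ (H ζ *ᵥ x t ζ)

noncomputable def energy (H : ℝ → Matrix n n ℝ) (x : ℝ → ℝ → n → ℝ) (t : ℝ) : ℝ :=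
  ∫ ζ in (0 : ℝ)..1, energyDensity H x t ζ

structure IsClassicalSolution (P₁ P₀ : Matrix n n ℝ) (H : ℝ → Matrix n n ℝ)
    (x xt Hx' : ℝ → ℝ → n → ℝ) : Prop where
  continuousOn : ContinuousOn x.uncurry (Ici 0 ×ˢ Icc 0 1)
  continuousOn_timeDeriv : ContinuousOn xt.uncurry (Ici 0 ×ˢ Icc 0 1)
  hasDerivWithinAt_time : ∀ t ∈ Ici (0 : ℝ), ∀ ζ ∈ Icc (0 : ℝ) 1,
    HasDerivWithinAt (fun s => x s ζ) (xt t ζ) (Ici 0) t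
  hasDerivWithinAt_space : ∀ t ∈ Ici (0 : ℝ), ∀ ζ ∈ Icc (0 : ℝ) 1,
    HasDerivWithinAt (fun z => H z *ᵥ x t z) (Hx' t ζ) (Icc 0 1) ζ
  pde : ∀ t ∈ Ici (0 : ℝ), ∀ ζ ∈ Icc (0 : ℝ) 1, xt t ζ = P₁ *ᵥ Hx' t ζ + P₀ *ᵥ (H ζ *ᵥ x t ζ)

def BoundaryDissipative (κ : ℝ) (H : ℝ → Matrix n n ℝ) (x : ℝ → ℝ → n → ℝ) : Prop :=
  ∀ t ∈ Ici (0 : ℝ), ∃ e, HasDerivWithinAt (fun s => 1 / 2 * energy H x s) e (Ici 0) t ∧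
    e ≤ -κ * energyDensity H x t 1

variable {P₁ P₀ : Matrix n n ℝ} {H : ℝ → Matrix n n ℝ} {m₀ : ℝ} {x xt Hx' : ℝ → ℝ → n → ℝ}

theorem IsHamiltonianDensity.dotProduct_mulVec_nonneg (hH : IsHamiltonianDensity H m₀) {ζ : ℝ}
    (hζ : ζ ∈ Icc (0 : ℝ) 1) (v : n → ℝ) : 0 ≤ v ⬝ᵥ (H ζ *ᵥ v) :=
  (mul_nonneg hH.pos.le (Finset.sum_nonneg fun i _ => mul_self_nonneg (v i))).trans
    (hH.coercive ζ hζ v)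

theorem IsHamiltonianDensity.continuousOn (hH : IsHamiltonianDensity H m₀) :
    ContinuousOn H (Icc 0 1) :=
  continuousOn_pi.2 fun i => continuousOn_pi.2 fun j => (hH.contDiffOn_apply i j).continuousOn

theorem IsClassicalSolution.continuousOn_energyDensity (hx : IsClassicalSolution P₁ P₀ H x xt Hx')
    (hH : IsHamiltonianDensity H m₀) :
    ContinuousOn (energyDensity H x).uncurry (Ici 0 ×ˢ Icc 0 1) :=
  hx.continuousOn.dotProduct_mulVec (hH.continuousOn.comp continuous_snd.continuousOn
    fun _ hp => hp.2) hx.continuousOn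

theorem energy_nonneg (hH : IsHamiltonianDensity H m₀) (x : ℝ → ℝ → n → ℝ) (t : ℝ) :
    0 ≤ energy H x t :=
  intervalIntegral.integral_nonneg zero_le_one fun _ hζ => hH.dotProduct_mulVec_nonneg hζ _

theorem IsClassicalSolution.energy_add_integral_le (hx : IsClassicalSolution P₁ P₀ H x xt Hx')
    (hH : IsHamiltonianDensity H m₀) {κ : ℝ} (hdiss : BoundaryDissipative κ H x) {a b : ℝ}
    (ha : 0 ≤ a) (hab : a ≤ b) :
    energy H x b + 2 * κ * ∫ t in a..b, energyDensity H x t 1 ≤ energy H x a := by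
  choose! e he using hdiss
  have hR : Icc a b ⊆ Ici 0 := fun t ht => ha.trans ht.1
  have hq : ContinuousOn (fun t => energyDensity H x t 1) (Icc a b) :=
    ((hx.continuousOn_energyDensity hH).uncurry_right 1 (right_mem_Icc.2 zero_le_one)).mono hR
  have h := intervalIntegral.sub_le_integral_of_hasDeriv_right_of_le
    (φ := fun t => -κ * energyDensity H x t 1) hab
    (fun t ht => ((he t (hR ht)).1.continuousWithinAt).mono hR)
    (fun t ht => ((he t (hR (Ioo_subset_Icc_self ht))).1).mono (Ioi_subset_Ici (ha.trans ht.1.le)))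
    (continuousOn_const.mul hq).integrableOn_Icc
    (fun t ht => (he t (hR (Ioo_subset_Icc_self ht))).2)
  rw [intervalIntegral.integral_const_mul] at h
  linarith

theorem IsClassicalSolution.energy_antitoneOn (hx : IsClassicalSolution P₁ P₀ H x xt Hx')
    (hH : IsHamiltonianDensity H m₀) {κ : ℝ} (hκ : 0 ≤ κ) (hdiss : BoundaryDissipative κ H x) :
    AntitoneOn (energy H x) (Ici 0) := fun a ha b _ hab => by
  have hflux : 0 ≤ ∫ t in a..b, energyDensity H x t 1 :=
    intervalIntegral.integral_nonneg hab fun t _ =>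
      hH.dotProduct_mulVec_nonneg (right_mem_Icc.2 zero_le_one) _
  nlinarith [hx.energy_add_integral_le hH hdiss ha hab]

variable [DecidableEq n]

noncomputable def invDeriv (H : ℝ → Matrix n n ℝ) (ζ : ℝ) : Matrix n n ℝ :=
  Matrix.of fun i j => derivWithin (fun z => (H z)⁻¹ i j) (Icc 0 1) ζ

/-- Along a solution, `∂_ζ (xᵀ ℋ x) = ∂_t (xᵀ P₁⁻¹ x) + xᵀ (fluxRemainder P₁ P₀ ℋ) x`. -/
noncomputable def fluxRemainder (P₁ P₀ : Matrix n n ℝ) (H : ℝ → Matrix n n ℝ) (ζ : ℝ) :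
    Matrix n n ℝ :=
  H ζ * invDeriv H ζ * H ζ - 2 • (P₁⁻¹ * P₀ * H ζ)

theorem IsHamiltonianDensity.isUnit_det (hH : IsHamiltonianDensity H m₀) {ζ : ℝ}
    (hζ : ζ ∈ Icc (0 : ℝ) 1) : IsUnit (H ζ).det := by
  refine isUnit_iff_ne_zero.2 fun hdet => ?_
  obtain ⟨v, hv, hHv⟩ := Matrix.exists_mulVec_eq_zero_iff.2 hdet
  have := hH.coercive ζ hζ v
  rw [hHv, dotProduct_zero] at this
  exact hv (dotProduct_self_eq_zero.1 (le_antisymm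
    (nonpos_of_mul_nonpos_right this hH.pos) (Finset.sum_nonneg fun i _ => mul_self_nonneg (v i))))

theorem IsHamiltonianDensity.contDiffOn_inv_apply (hH : IsHamiltonianDensity H m₀) (i j : n) :
    ContDiffOn ℝ 1 (fun ζ => (H ζ)⁻¹ i j) (Icc 0 1) :=
  contDiffOn_matrix_inv_apply hH.contDiffOn_apply (fun _ hζ => (hH.isUnit_det hζ).ne_zero) i j

theorem IsHamiltonianDensity.hasDerivWithinAt_inv_apply (hH : IsHamiltonianDensity H m₀)
    {ζ : ℝ} (hζ : ζ ∈ Icc (0 : ℝ) 1) (i j : n) :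
    HasDerivWithinAt (fun z => (H z)⁻¹ i j) (invDeriv H ζ i j) (Icc 0 1) ζ :=
  ((hH.contDiffOn_inv_apply i j).differentiableOn one_ne_zero ζ hζ).hasDerivWithinAt

theorem IsHamiltonianDensity.continuousOn_fluxRemainder (hH : IsHamiltonianDensity H m₀)
    (P₁ P₀ : Matrix n n ℝ) : ContinuousOn (fluxRemainder P₁ P₀ H) (Icc 0 1) := by
  have hK : ContinuousOn (invDeriv H) (Icc 0 1) :=
    continuousOn_pi.2 fun i => continuousOn_pi.2 fun j =>
      (hH.contDiffOn_inv_apply i j).continuousOn_derivWithin (uniqueDiffOn_Icc one_pos) le_rfl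
  have hH' := hH.continuousOn
  rw [continuousOn_iff_continuous_domRestrict] at hK hH' ⊢
  exact ((hH'.matrix_mul hK).matrix_mul hH').sub
    (continuous_const.smul (continuous_const.matrix_mul hH'))

noncomputable def energyDensityDeriv (P₁ P₀ : Matrix n n ℝ) (H : ℝ → Matrix n n ℝ)
    (x xt : ℝ → ℝ → n → ℝ) (t ζ : ℝ) : ℝ :=
  2 * (x t ζ ⬝ᵥ (P₁⁻¹ *ᵥ xt t ζ)) + x t ζ ⬝ᵥ (fluxRemainder P₁ P₀ H ζ *ᵥ x t ζ)

theorem IsClassicalSolution.continuousOn_energyDensityDeriv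
    (hx : IsClassicalSolution P₁ P₀ H x xt Hx') (hH : IsHamiltonianDensity H m₀) :
    ContinuousOn (energyDensityDeriv P₁ P₀ H x xt).uncurry (Ici 0 ×ˢ Icc 0 1) :=
  (continuousOn_const.mul (hx.continuousOn.dotProduct_mulVec continuousOn_const
    hx.continuousOn_timeDeriv)).add (hx.continuousOn.dotProduct_mulVec
      ((hH.continuousOn_fluxRemainder P₁ P₀).comp continuous_snd.continuousOn fun _ hp => hp.2)
      hx.continuousOn)

theorem IsClassicalSolution.hasDerivWithinAt_energyDensity_space
    (hx : IsClassicalSolution P₁ P₀ H x xt Hx') (hH : IsHamiltonianDensity H m₀)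
    (hP₁det : IsUnit P₁.det) {t ζ : ℝ} (ht : t ∈ Ici 0) (hζ : ζ ∈ Icc (0 : ℝ) 1) :
    HasDerivWithinAt (energyDensity H x t) (energyDensityDeriv P₁ P₀ H x xt t ζ) (Icc 0 1) ζ := by
  have hw := hx.hasDerivWithinAt_space t ht ζ hζ
  -- `x = ℋ⁻¹ (ℋ x)` is differentiable in `ζ` because `ℋ⁻¹` is
  have hxζ : HasDerivWithinAt (x t) (invDeriv H ζ *ᵥ (H ζ *ᵥ x t ζ) + (H ζ)⁻¹ *ᵥ Hx' t ζ)
      (Icc 0 1) ζ := by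
    refine (HasDerivWithinAt.matrix_mulVec (hH.hasDerivWithinAt_inv_apply hζ) hw).congr
      (fun z hz => ?_) ?_ <;>
    rw [Matrix.mulVec_mulVec, Matrix.nonsing_inv_mul _ (hH.isUnit_det ‹_›), Matrix.one_mulVec]
  have h := hxζ.dotProduct hw
  rwa [flux_identity (hH.transpose_eq ζ hζ) (hH.isUnit_det hζ) hP₁det (hx.pde t ht ζ hζ)] at h

theorem IsClassicalSolution.integral_energyDensityDeriv_ge
    (hx : IsClassicalSolution P₁ P₀ H x xt Hx') (hH : IsHamiltonianDensity H m₀)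
    (hP₁ : P₁ᵀ = P₁) {γ c : ℝ}
    (hγ : ∀ ζ ∈ Icc (0 : ℝ) 1, ∀ v, |v ⬝ᵥ (P₁⁻¹ *ᵥ v)| ≤ γ * (v ⬝ᵥ (H ζ *ᵥ v)))
    (hc : ∀ ζ ∈ Icc (0 : ℝ) 1, ∀ v,
      |v ⬝ᵥ (fluxRemainder P₁ P₀ H ζ *ᵥ v)| ≤ c * (v ⬝ᵥ (H ζ *ᵥ v)))
    {a b ζ : ℝ} (ha : 0 ≤ a) (hab : a ≤ b) (hζ : ζ ∈ Icc (0 : ℝ) 1) :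
    -(γ * (energyDensity H x a ζ + energyDensity H x b ζ)) - c * ∫ t in a..b, energyDensity H x t ζ
      ≤ ∫ t in a..b, energyDensityDeriv P₁ P₀ H x xt t ζ := by
  have hR : Icc a b ⊆ Ici 0 := fun t ht => ha.trans ht.1
  have hq : ContinuousOn (fun t => energyDensity H x t ζ) (Icc a b) :=
    ((hx.continuousOn_energyDensity hH).uncurry_right ζ hζ).mono hR
  have hD : ContinuousOn (fun t => energyDensityDeriv P₁ P₀ H x xt t ζ) (Icc a b) :=
    ((hx.continuousOn_energyDensityDeriv hH).uncurry_right ζ hζ).mono hR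
  have hr : ContinuousOn (fun s => x s ζ ⬝ᵥ (P₁⁻¹ *ᵥ x s ζ)) (Icc a b) :=
    (ContinuousOn.uncurry_right (f := fun s z => x s z ⬝ᵥ (P₁⁻¹ *ᵥ x s z)) ζ hζ
      (hx.continuousOn.dotProduct_mulVec continuousOn_const hx.continuousOn)).mono hR
  -- `xᵀ P₁⁻¹ x` is a time primitive of the first term of `energyDensityDeriv`
  have h := intervalIntegral.sub_le_integral_of_hasDeriv_right_of_le
    (φ := fun t => energyDensityDeriv P₁ P₀ H x xt t ζ + c * energyDensity H x t ζ) hab hr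
    (fun t ht => ((hx.hasDerivWithinAt_time t (hR (Ioo_subset_Icc_self ht)) ζ
      hζ).dotProduct_mulVec_self (by rw [Matrix.transpose_nonsing_inv, hP₁])).mono
        (Ioi_subset_Ici (ha.trans ht.1.le)))
    (hD.add (continuousOn_const.mul hq)).integrableOn_Icc
    (fun t _ => by
      have := neg_abs_le (x t ζ ⬝ᵥ (fluxRemainder P₁ P₀ H ζ *ᵥ x t ζ))
      have := hc ζ hζ (x t ζ)
      simp only [energyDensityDeriv, energyDensity]
      linarith)
  rw [intervalIntegral.integral_add (hD.intervalIntegrable_of_Icc hab)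
    ((hq.intervalIntegrable_of_Icc hab).const_mul c), intervalIntegral.integral_const_mul] at h
  have ha' := abs_le.1 (hγ ζ hζ (x a ζ))
  have hb' := abs_le.1 (hγ ζ hζ (x b ζ))
  simp only [energyDensity] at h ⊢
  linarith

theorem IsClassicalSolution.integral_energy_le
    (hx : IsClassicalSolution P₁ P₀ H x xt Hx') (hH : IsHamiltonianDensity H m₀)
    (hP₁ : P₁ᵀ = P₁) (hP₁det : IsUnit P₁.det) {γ c : ℝ} (hγ0 : 0 ≤ γ) (hc0 : 0 ≤ c)
    (hγ : ∀ ζ ∈ Icc (0 : ℝ) 1, ∀ v, |v ⬝ᵥ (P₁⁻¹ *ᵥ v)| ≤ γ * (v ⬝ᵥ (H ζ *ᵥ v)))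
    (hc : ∀ ζ ∈ Icc (0 : ℝ) 1, ∀ v,
      |v ⬝ᵥ (fluxRemainder P₁ P₀ H ζ *ᵥ v)| ≤ c * (v ⬝ᵥ (H ζ *ᵥ v)))
    {a b : ℝ} (ha : 0 ≤ a) (hab : a ≤ b) :
    ∫ t in a..b, energy H x t ≤ Real.exp c *
      ((∫ t in a..b, energyDensity H x t 1) + γ * (energy H x a + energy H x b)) := by
  set F := fun ζ => ∫ t in a..b, energyDensity H x t ζ
  set B := fun ζ => γ * (energyDensity H x a ζ + energyDensity H x b ζ)
  have hR : (Icc a b ×ˢ Icc 0 1 : Set (ℝ × ℝ)) ⊆ Ici 0 ×ˢ Icc 0 1 :=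
    prod_mono (fun t ht => ha.trans ht.1) le_rfl
  have hq := (hx.continuousOn_energyDensity hH).mono hR
  have hslice : ∀ t ∈ Icc a b, ContinuousOn (energyDensity H x t) (Icc 0 1) := fun t ht =>
    (hx.continuousOn_energyDensity hH).uncurry_left t (mem_Ici.2 (ha.trans ht.1))
  have hF : ContinuousOn F (Icc 0 1) := continuousOn_intervalIntegral_of_rect hab hq
  have hB : ContinuousOn B (Icc 0 1) :=
    continuousOn_const.mul ((hslice a (left_mem_Icc.2 hab)).add (hslice b (right_mem_Icc.2 hab)))
  have hgron := le_exp_mul_add_integral_of_deriv_ge zero_le_one hc0 hF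
    (fun ζ hζ => hasDerivAt_intervalIntegral_of_rect hab hq
      ((hx.continuousOn_energyDensityDeriv hH).mono hR)
      (fun t ht z hz => hx.hasDerivWithinAt_energyDensity_space hH hP₁det (ha.trans ht.1) hz) hζ)
    (fun ζ hζ => intervalIntegral.integral_nonneg hab fun t _ => hH.dotProduct_mulVec_nonneg hζ _)
    hB (fun ζ hζ => mul_nonneg hγ0 (add_nonneg (hH.dotProduct_mulVec_nonneg hζ _)
      (hH.dotProduct_mulVec_nonneg hζ _)))
    (fun ζ hζ => hx.integral_energyDensityDeriv_ge hH hP₁ hγ hc ha hab (Ioo_subset_Icc_self hζ))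
  have hBint : ∫ ζ in (0 : ℝ)..1, B ζ = γ * (energy H x a + energy H x b) := by
    rw [intervalIntegral.integral_const_mul, intervalIntegral.integral_add
      ((hslice a (left_mem_Icc.2 hab)).intervalIntegrable_of_Icc zero_le_one)
      ((hslice b (right_mem_Icc.2 hab)).intervalIntegrable_of_Icc zero_le_one)]
    rfl
  calc ∫ t in a..b, energy H x t = ∫ ζ in (0 : ℝ)..1, F ζ :=
        (intervalIntegral_integral_swap_of_rect hab zero_le_one hq).symm
    _ ≤ ∫ ζ in (0 : ℝ)..1, Real.exp c * (F 1 + ∫ ζ in (0 : ℝ)..1, B ζ) :=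
        intervalIntegral.integral_mono_on zero_le_one (hF.intervalIntegrable_of_Icc zero_le_one)
          intervalIntegrable_const fun ζ hζ => by simpa using hgron ζ hζ
    _ = _ := by simp [hBint, F]

theorem IsClassicalSolution.energy_add_le_half
    (hx : IsClassicalSolution P₁ P₀ H x xt Hx') (hH : IsHamiltonianDensity H m₀)
    (hP₁ : P₁ᵀ = P₁) (hP₁det : IsUnit P₁.det) {γ c κ : ℝ} (hγ0 : 0 ≤ γ) (hc0 : 0 ≤ c)
    (hγ : ∀ ζ ∈ Icc (0 : ℝ) 1, ∀ v, |v ⬝ᵥ (P₁⁻¹ *ᵥ v)| ≤ γ * (v ⬝ᵥ (H ζ *ᵥ v)))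
    (hc : ∀ ζ ∈ Icc (0 : ℝ) 1, ∀ v,
      |v ⬝ᵥ (fluxRemainder P₁ P₀ H ζ *ᵥ v)| ≤ c * (v ⬝ᵥ (H ζ *ᵥ v)))
    (hκ : 0 < κ) (hdiss : BoundaryDissipative κ H x) {s : ℝ} (hs : 0 ≤ s) :
    energy H x (s + 2 * (Real.exp c * (1 / (2 * κ) + 2 * γ))) ≤ 1 / 2 * energy H x s := by
  set C := Real.exp c * (1 / (2 * κ) + 2 * γ)
  set E := energy H x
  have hC : 0 < C := by positivity
  have hst : s ≤ s + 2 * C := by linarith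
  have hanti := hx.energy_antitoneOn hH hκ.le hdiss
  have hdecr : E (s + 2 * C) ≤ E s := hanti hs (by simp only [mem_Ici]; linarith) hst
  have hflux := hx.energy_add_integral_le hH hdiss hs hst
  have hflux' : ∫ t in s..s + 2 * C, energyDensity H x t 1 ≤ 1 / (2 * κ) * E s := by
    rw [div_mul_eq_mul_div, one_mul, le_div_iff₀ (by positivity)]
    nlinarith [energy_nonneg hH x (s + 2 * C)]
  have hmean : 2 * C * E (s + 2 * C) ≤ ∫ t in s..s + 2 * C, E t := by
    have := intervalIntegral.integral_mono_on (μ := volume) hst intervalIntegrable_const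
      (hanti.mono (by rw [uIcc_of_le hst]; exact Icc_subset_Ici_iff hst |>.2 hs)).intervalIntegrable
      fun t ht => hanti (mem_Ici.2 (hs.trans ht.1)) (mem_Ici.2 (by linarith)) ht.2
    simpa using this
  have hobs := hx.integral_energy_le hH hP₁ hP₁det hγ0 hc0 hγ hc hs hst
  have hbound : 2 * C * E (s + 2 * C) ≤ C * E s := by
    calc 2 * C * E (s + 2 * C) ≤ Real.exp c * (1 / (2 * κ) * E s + γ * (E s + E s)) := by
          refine hmean.trans (hobs.trans (mul_le_mul_of_nonneg_left ?_ (Real.exp_pos c).le))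
          nlinarith
      _ = C * E s := by ring
  nlinarith [energy_nonneg hH x s]

end PortHamiltonian

theorem stmt_9_general (d : ℕ)
    (P₁ P₀ : Matrix (Fin d) (Fin d) ℝ)
    (hP₁sym : P₁.transpose = P₁) (hP₁inv : IsUnit P₁.det)
    (H : ℝ → Matrix (Fin d) (Fin d) ℝ)
    (hHsmooth : ∀ i j, ContDiffOn ℝ 1 (fun ζ => H ζ i j) (Icc (0:ℝ) 1))
    (hHsym : ∀ ζ ∈ Icc (0:ℝ) 1, (H ζ).transpose = H ζ)
    (m₀ M₀ : ℝ) (hm₀ : 0 < m₀)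
    (hHbnd : ∀ ζ ∈ Icc (0:ℝ) 1, ∀ v : Fin d → ℝ,
      m₀ * (v ⬝ᵥ v) ≤ v ⬝ᵥ (H ζ *ᵥ v) ∧ v ⬝ᵥ (H ζ *ᵥ v) ≤ M₀ * (v ⬝ᵥ v))
    (κ : ℝ) (hκ : 0 < κ) :
    ∃ M ω : ℝ, 1 ≤ M ∧ ω < 0 ∧
      ∀ x xt Hx' : ℝ → ℝ → Fin d → ℝ,
        -- `x` is continuously differentiable on `[0,∞) × [0,1]`:
        ContinuousOn (fun p : ℝ × ℝ => x p.1 p.2) (Ici 0 ×ˢ Icc 0 1) →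
        ContinuousOn (fun p : ℝ × ℝ => xt p.1 p.2) (Ici 0 ×ˢ Icc 0 1) →
        ContinuousOn (fun p : ℝ × ℝ => Hx' p.1 p.2) (Ici 0 ×ˢ Icc 0 1) →
        (∀ t ∈ Ici (0:ℝ), ∀ ζ ∈ Icc (0:ℝ) 1,
          HasDerivWithinAt (fun s => x s ζ) (xt t ζ) (Ici 0) t) →
        (∀ t ∈ Ici (0:ℝ), ∀ ζ ∈ Icc (0:ℝ) 1,
          HasDerivWithinAt (fun z => H z *ᵥ x t z) (Hx' t ζ) (Icc 0 1) ζ) →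
        -- the PDE `∂x/∂t = P₁ ∂(ℋx)/∂ζ + P₀ ℋ x`:
        (∀ t ∈ Ici (0:ℝ), ∀ ζ ∈ Icc (0:ℝ) 1,
          xt t ζ = P₁ *ᵥ Hx' t ζ + P₀ *ᵥ (H ζ *ᵥ x t ζ)) →
        -- the boundary dissipation estimate:
        (∀ t ∈ Ici (0:ℝ), ∃ e : ℝ,
          HasDerivWithinAt
            (fun s => (1/2) * ∫ ζ in (0:ℝ)..1, x s ζ ⬝ᵥ (H ζ *ᵥ x s ζ)) e (Ici 0) t ∧
          e ≤ -κ * (x t 1 ⬝ᵥ (H 1 *ᵥ x t 1))) →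
        ∀ t ∈ Ici (0:ℝ),
          (∫ ζ in (0:ℝ)..1, x t ζ ⬝ᵥ (H ζ *ᵥ x t ζ))
            ≤ M * Real.exp (ω * t) * ∫ ζ in (0:ℝ)..1, x 0 ζ ⬝ᵥ (H ζ *ᵥ x 0 ζ) := by
  have hH : PortHamiltonian.IsHamiltonianDensity H m₀ :=
    ⟨hHsmooth, hHsym, hm₀, fun ζ hζ v => (hHbnd ζ hζ v).1⟩
  obtain ⟨γ, hγ0, hγ⟩ := isCompact_Icc.exists_abs_dotProduct_mulVec_le
    (continuousOn_const (c := P₁⁻¹)) hm₀ hH.coercive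
  obtain ⟨c, hc0, hc⟩ := isCompact_Icc.exists_abs_dotProduct_mulVec_le
    (hH.continuousOn_fluxRemainder P₁ P₀) hm₀ hH.coercive
  set τ := 2 * (Real.exp c * (1 / (2 * κ) + 2 * γ))
  have hτ : 0 < τ := by positivity
  refine ⟨(1 / 2)⁻¹, Real.log (1 / 2) / τ, by norm_num,
    div_neg_of_neg_of_pos (Real.log_neg (by norm_num) (by norm_num)) hτ, ?_⟩
  intro x xt Hx' hxc hxtc _ hxt hHx hpde hdiss t ht
  have hx : PortHamiltonian.IsClassicalSolution P₁ P₀ H x xt Hx' :=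
    ⟨hxc, hxtc, hxt, hHx, hpde⟩
  exact le_inv_mul_exp_mul_of_antitoneOn hτ (by norm_num) (by norm_num)
    (hx.energy_antitoneOn hH hκ.le hdiss) (PortHamiltonian.energy_nonneg hH x 0)
    (fun s hs => hx.energy_add_le_half hH hP₁sym hP₁inv hγ0 hc0 hγ hc hκ hdiss hs) ht

/-- Theorem 5.1 of the paper, for classical solutions.
Uniform exponential decay of the energy of a first-order port-Hamiltonian system
`∂x/∂t = P₁ ∂(ℋx)/∂ζ + P₀ ℋ x` whose energy satisfies the boundary dissipation estimate
`(d/dt) (1/2)∫₀¹ xᵀ ℋ x ≤ -κ (xᵀ ℋ x)(1)`. -/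
theorem stmt_9 (d : ℕ)
    (P₁ P₀ : Matrix (Fin d) (Fin d) ℝ)
    (hP₁sym : P₁.transpose = P₁) (hP₁inv : IsUnit P₁.det)
    (H : ℝ → Matrix (Fin d) (Fin d) ℝ)
    (hHsmooth : ∀ i j, ContDiffOn ℝ 1 (fun ζ => H ζ i j) (Icc (0:ℝ) 1))
    (hHsym : ∀ ζ ∈ Icc (0:ℝ) 1, (H ζ).transpose = H ζ)
    (m₀ M₀ : ℝ) (hm₀ : 0 < m₀) (hm₀M₀ : m₀ ≤ M₀)
    (hHbnd : ∀ ζ ∈ Icc (0:ℝ) 1, ∀ v : Fin d → ℝ,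
      m₀ * (v ⬝ᵥ v) ≤ v ⬝ᵥ (H ζ *ᵥ v) ∧ v ⬝ᵥ (H ζ *ᵥ v) ≤ M₀ * (v ⬝ᵥ v))
    (κ : ℝ) (hκ : 0 < κ) :
    ∃ M ω : ℝ, 1 ≤ M ∧ ω < 0 ∧
      ∀ x xt Hx' : ℝ → ℝ → Fin d → ℝ,
        -- `x` is continuously differentiable on `[0,∞) × [0,1]`:
        ContinuousOn (fun p : ℝ × ℝ => x p.1 p.2) (Ici 0 ×ˢ Icc 0 1) →
        ContinuousOn (fun p : ℝ × ℝ => xt p.1 p.2) (Ici 0 ×ˢ Icc 0 1) →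
        ContinuousOn (fun p : ℝ × ℝ => Hx' p.1 p.2) (Ici 0 ×ˢ Icc 0 1) →
        (∀ t ∈ Ici (0:ℝ), ∀ ζ ∈ Icc (0:ℝ) 1,
          HasDerivWithinAt (fun s => x s ζ) (xt t ζ) (Ici 0) t) →
        (∀ t ∈ Ici (0:ℝ), ∀ ζ ∈ Icc (0:ℝ) 1,
          HasDerivWithinAt (fun z => H z *ᵥ x t z) (Hx' t ζ) (Icc 0 1) ζ) →
        -- the PDE `∂x/∂t = P₁ ∂(ℋx)/∂ζ + P₀ ℋ x`:
        (∀ t ∈ Ici (0:ℝ), ∀ ζ ∈ Icc (0:ℝ) 1,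
          xt t ζ = P₁ *ᵥ Hx' t ζ + P₀ *ᵥ (H ζ *ᵥ x t ζ)) →
        -- the boundary dissipation estimate:
        (∀ t ∈ Ici (0:ℝ), ∃ e : ℝ,
          HasDerivWithinAt
            (fun s => (1/2) * ∫ ζ in (0:ℝ)..1, x s ζ ⬝ᵥ (H ζ *ᵥ x s ζ)) e (Ici 0) t ∧
          e ≤ -κ * (x t 1 ⬝ᵥ (H 1 *ᵥ x t 1))) →
        ∀ t ∈ Ici (0:ℝ),
          (∫ ζ in (0:ℝ)..1, x t ζ ⬝ᵥ (H ζ *ᵥ x t ζ))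
            ≤ M * Real.exp (ω * t) * ∫ ζ in (0:ℝ)..1, x 0 ζ ⬝ᵥ (H ζ *ᵥ x 0 ζ) :=
  stmt_9_general d P₁ P₀ hP₁sym hP₁inv H hHsmooth hHsym m₀ M₀ hm₀ hHbnd κ hκ
end

section
/- Let ρ, EI : [0,1] → ℝ be continuously differentiable with ρ(ζ) ≥ ρ₀ > 0 and EI(ζ) ≥ e₀ > 0 for all ζ, let κ ≥ 1, and let g : ℝ → ℝ be a nondecreasing function with g(0) = 0 and κ⁻¹|v| ≤ |g(v)| ≤ κ|v| for all v ∈ ℝ. Then there exist M ≥ 1 and ω < 0, depending only on ρ, EI and κ, such that every twice continuously differentiable function w : [0,∞) × [0,1] → ℝ satisfying the wave equation ρ(ζ) ∂²w/∂t²(t,ζ) = ∂/∂ζ( EI(ζ) ∂w/∂ζ )(t,ζ) on [0,∞) × [0,1], the left boundary condition ∂w/∂t(t,0) = 0 for all t ≥ 0, and the damping boundary condition EI(1) ∂w/∂ζ(t,1) = −g( ∂w/∂t(t,1) ) for all t ≥ 0, has exponentially decaying energy: E(t) ≤ M e^{ωt} E(0) for all t ≥ 0, where E(t) := (1/2)∫₀¹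 ρ(ζ)|∂w/∂t(t,ζ)|² + EI(ζ)|∂w/∂ζ(t,ζ)|² dζ. -/
/-!
Energy multiplier method. Integrating by parts in `ζ`, the energy `E` satisfies `E' = -v g(v)`
with `v = w_t(t,1)`, while the multiplier `F = ∫ φ ρ w_t w_ζ`, with weight `φ(ζ) = e^{Kζ} - 1` and
`K` large compared with `|ρ'|/ρ₀` and `|EI'|/e₀`, satisfies `F' ≤ c v g(v) - E`: the boundary term
at `ζ = 0` vanishes because `φ(0) = 0`, and the one at `ζ = 1` is controlled by the damper since
`v², g(v)² ≤ κ v g(v)`. As `|F| ≤ λ E`, for small `ε > 0` the functional `V = E + ε F` is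
comparable to `E` and satisfies `V' ≤ -(2ε/3) V`.
-/

open MeasureTheory Set Filter Topology Function

open scoped Interval

section ParametricIntervalIntegral

variable {E : Type*} [NormedAddCommGroup E] [NormedSpace ℝ E] {a b : ℝ}

theorem continuousOn_intervalIntegral_of_continuousOn_prod {X : Type*} [TopologicalSpace X]
    {f : X → ℝ → E} {s : Set X} (hab : a ≤ b) (hf : ContinuousOn (uncurry f) (s ×ˢ Icc a b)) :
    ContinuousOn (fun x => ∫ ζ in a..b, f x ζ) s := by
  intro x₀ hx₀
  rw [ContinuousWithinAt, Metric.tendsto_nhds]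
  intro ε hε
  have hδ : 0 < ε / (b - a + 1) := div_pos hε (by linarith)
  obtain ⟨v, hv, hclose⟩ :=
    isCompact_Icc.mem_uniformity_of_prod hf hx₀ (Metric.dist_mem_uniformity hδ)
  filter_upwards [hv, self_mem_nhdsWithin] with x hx hxs
  have hint : ∀ y ∈ s, IntervalIntegrable (f y) volume a b := fun y hy =>
    (hf.uncurry_left y hy).intervalIntegrable_of_Icc hab
  rw [dist_eq_norm, ← intervalIntegral.integral_sub (hint x hxs) (hint x₀ hx₀)]
  calc ‖∫ ζ in a..b, f x ζ - f x₀ ζ‖ ≤ ε / (b - a + 1) * |b - a| := by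
        refine intervalIntegral.norm_integral_le_of_norm_le_const fun ζ hζ => ?_
        rw [← dist_eq_norm]
        exact (hclose x hx ζ (Ioc_subset_Icc_self (by rwa [uIoc_of_le hab] at hζ))).le
    _ < ε := by
        rw [abs_of_nonneg (sub_nonneg.2 hab), div_mul_eq_mul_div, div_lt_iff₀ (by linarith)]
        nlinarith

theorem hasDerivAt_intervalIntegral_of_continuousOn_prod {f f' : ℝ → ℝ → E} {s : Set ℝ}
    {x₀ : ℝ} (hab : a ≤ b) (hs : s ∈ 𝓝 x₀) (hf : ContinuousOn (uncurry f) (s ×ˢ Icc a b))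
    (hf' : ContinuousOn (uncurry f') (s ×ˢ Icc a b))
    (hd : ∀ᶠ x in 𝓝 x₀, ∀ ζ ∈ Icc a b, HasDerivAt (f · ζ) (f' x ζ) x) :
    HasDerivAt (fun x => ∫ ζ in a..b, f x ζ) (∫ ζ in a..b, f' x₀ ζ) x₀ := by
  obtain ⟨δ, hδ, hball⟩ := Metric.nhds_basis_closedBall.mem_iff.1 (inter_mem hs hd)
  obtain ⟨C, hC⟩ := ((isCompact_closedBall x₀ δ).prod isCompact_Icc).exists_bound_of_continuousOn
    (hf'.mono (prod_mono (hball.trans inter_subset_left) subset_rfl))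
  have hΙ : ∀ ζ ∈ Ι a b, ζ ∈ Icc a b := fun ζ hζ =>
    Ioc_subset_Icc_self (by rwa [uIoc_of_le hab] at hζ)
  have hmeas : ∀ x ∈ s, AEStronglyMeasurable (f x) (volume.restrict (Ι a b)) := fun x hx =>
    ((hf.uncurry_left x hx).mono hΙ).aestronglyMeasurable measurableSet_uIoc
  have hx₀ : x₀ ∈ s := mem_of_mem_nhds hs
  refine (intervalIntegral.hasDerivAt_integral_of_dominated_loc_of_deriv_le (bound := fun _ => C)
    (Metric.ball_mem_nhds x₀ hδ) (eventually_of_mem hs hmeas)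
    ((hf.uncurry_left x₀ hx₀).intervalIntegrable_of_Icc hab)
    (((hf'.uncurry_left x₀ hx₀).mono hΙ).aestronglyMeasurable measurableSet_uIoc)
    (Eventually.of_forall fun ζ hζ x hx => hC (x, ζ) ⟨Metric.ball_subset_closedBall hx, hΙ ζ hζ⟩)
    intervalIntegrable_const
    (Eventually.of_forall fun ζ hζ x hx =>
      (hball (Metric.ball_subset_closedBall hx)).2 ζ (hΙ ζ hζ))).2

end ParametricIntervalIntegral

section MixedPartials

variable {E : Type*} [NormedAddCommGroup E] [NormedSpace ℝ E]

theorem HasFDerivWithinAt.hasDerivWithinAt_fst {F : ℝ × ℝ → E} {L : ℝ × ℝ →L[ℝ] E}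
    {S : Set (ℝ × ℝ)} {s : Set ℝ} {x y : ℝ} (h : HasFDerivWithinAt F L S (x, y))
    (hs : MapsTo (·, y) s S) : HasDerivWithinAt (fun x' => F (x', y)) (L (1, 0)) s x :=
  h.comp_hasDerivWithinAt x ((hasDerivAt_id x).prodMk (hasDerivAt_const x y)).hasDerivWithinAt hs

theorem HasFDerivWithinAt.hasDerivWithinAt_snd {F : ℝ × ℝ → E} {L : ℝ × ℝ →L[ℝ] E}
    {S : Set (ℝ × ℝ)} {t : Set ℝ} {x y : ℝ} (h : HasFDerivWithinAt F L S (x, y))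
    (ht : MapsTo (x, ·) t S) : HasDerivWithinAt (fun y' => F (x, y')) (L (0, 1)) t y :=
  h.comp_hasDerivWithinAt y ((hasDerivAt_const y x).prodMk (hasDerivAt_id y)).hasDerivWithinAt ht

theorem exists_continuousOn_mixed_partial {s t : Set ℝ} (hs : Convex ℝ s) (ht : Convex ℝ t)
    (hs' : (interior s).Nonempty) (ht' : (interior t).Nonempty) {w w₁ w₂ : ℝ → ℝ → E}
    (hw : ContDiffOn ℝ 2 (uncurry w) (s ×ˢ t))
    (hw₁ : ∀ x ∈ s, ∀ y ∈ t, HasDerivWithinAt (w · y) (w₁ x y) s x)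
    (hw₂ : ∀ x ∈ s, ∀ y ∈ t, HasDerivWithinAt (w x ·) (w₂ x y) t y) :
    ∃ w₁₂ : ℝ → ℝ → E, ContinuousOn (uncurry w₁₂) (s ×ˢ t) ∧
      (∀ x ∈ s, ∀ y ∈ t, HasDerivWithinAt (w₁ x ·) (w₁₂ x y) t y) ∧
      (∀ x ∈ s, ∀ y ∈ t, HasDerivWithinAt (w₂ · y) (w₁₂ x y) s x) := by
  set S := s ×ˢ t
  have hSconv : Convex ℝ S := hs.prod ht
  have hSint : (interior S).Nonempty := by
    rw [interior_prod_eq]; exact hs'.prod ht'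
  have hS : UniqueDiffOn ℝ S := uniqueDiffOn_convex hSconv hSint
  have hs₁ : UniqueDiffOn ℝ s := uniqueDiffOn_convex hs hs'
  have ht₁ : UniqueDiffOn ℝ t := uniqueDiffOn_convex ht ht'
  set f := fderivWithin ℝ (uncurry w) S
  set f' := fderivWithin ℝ f S
  have hf : ContDiffOn ℝ 1 f S := hw.fderivWithin hS (by norm_num)
  have hdf : ∀ p ∈ S, HasFDerivWithinAt (uncurry w) (f p) S p := fun p hp =>
    ((hw p hp).differentiableWithinAt (by norm_num)).hasFDerivWithinAt
  have hdf' : ∀ p ∈ S, HasFDerivWithinAt f (f' p) S p := fun p hp =>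
    ((hf p hp).differentiableWithinAt one_ne_zero).hasFDerivWithinAt
  have hw₁f : ∀ x ∈ s, ∀ y ∈ t, w₁ x y = f (x, y) (1, 0) := fun x hx y hy =>
    (hs₁ x hx).eq_deriv _ (hw₁ x hx y hy)
      ((hdf _ ⟨hx, hy⟩).hasDerivWithinAt_fst fun _ hx' => ⟨hx', hy⟩)
  have hw₂f : ∀ x ∈ s, ∀ y ∈ t, w₂ x y = f (x, y) (0, 1) := fun x hx y hy =>
    (ht₁ y hy).eq_deriv _ (hw₂ x hx y hy)
      ((hdf _ ⟨hx, hy⟩).hasDerivWithinAt_snd fun _ hy' => ⟨hx, hy'⟩)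
  -- Schwarz's theorem applies up to the boundary because `S` lies in the closure of its interior
  have hsymm : ∀ p ∈ S, f' p (0, 1) (1, 0) = f' p (1, 0) (0, 1) := fun p hp =>
    (hw p hp).isSymmSndFDerivWithinAt (by simp) hS
      (by rw [hSconv.closure_interior_eq_closure_of_nonempty_interior hSint]
          exact subset_closure hp)
      hp _ _
  refine ⟨fun x y => f' (x, y) (1, 0) (0, 1),
    ((hf.continuousOn_fderivWithin hS le_rfl).clm_apply continuousOn_const).clm_apply
      continuousOn_const, fun x hx y hy => ?_, fun x hx y hy => ?_⟩
  · have h := ((hdf' _ ⟨hx, hy⟩).hasDerivWithinAt_snd fun _ hy' => ⟨hx, hy'⟩).clm_apply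
      (hasDerivWithinAt_const y t ((1 : ℝ), (0 : ℝ)))
    rw [map_zero, add_zero] at h
    rw [hsymm _ ⟨hx, hy⟩] at h
    exact h.congr (fun y' hy' => hw₁f x hx y' hy') (hw₁f x hx y hy)
  · have h := ((hdf' _ ⟨hx, hy⟩).hasDerivWithinAt_fst fun _ hx' => ⟨hx', hy⟩).clm_apply
      (hasDerivWithinAt_const x s ((0 : ℝ), (1 : ℝ)))
    rw [map_zero, add_zero] at h
    exact h.congr (fun x' hx' => hw₂f x' hx' y hy) (hw₂f x hx y hy)

end MixedPartials

theorem le_exp_mul_of_hasDerivAt_le_mul {V V' : ℝ → ℝ} {ω : ℝ} (hc : ContinuousOn V (Ici 0))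
    (hd : ∀ t ∈ Ioi (0 : ℝ), HasDerivAt V (V' t) t) (hle : ∀ t ∈ Ioi (0 : ℝ), V' t ≤ ω * V t)
    {t : ℝ} (ht : 0 ≤ t) : V t ≤ Real.exp (ω * t) * V 0 := by
  have hG : ∀ s ∈ Ioi (0 : ℝ),
      HasDerivAt (fun s => Real.exp (-ω * s) * V s)
        (Real.exp (-ω * s) * (-ω) * V s + Real.exp (-ω * s) * V' s) s := fun s hs =>
    (((hasDerivAt_id s).const_mul (-ω)).exp.congr_deriv (by simp)).mul (hd s hs)
  have hanti : AntitoneOn (fun s => Real.exp (-ω * s) * V s) (Ici 0) := by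
    refine antitoneOn_of_hasDerivWithinAt_nonpos (convex_Ici 0)
      ((by fun_prop : Continuous fun s => Real.exp (-ω * s)).continuousOn.mul hc)
      (fun s hs => (hG s (by simpa using hs)).hasDerivWithinAt) fun s hs => ?_
    rw [interior_Ici] at hs
    have := mul_le_mul_of_nonneg_left (hle s hs) (Real.exp_pos (-ω * s)).le
    linarith
  have h := hanti self_mem_Ici ht ht
  simp only [mul_zero, Real.exp_zero, one_mul] at h
  calc V t = Real.exp (ω * t) * (Real.exp (-ω * t) * V t) := by
        rw [← mul_assoc, ← Real.exp_add, neg_mul, add_neg_cancel, Real.exp_zero, one_mul]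
    _ ≤ Real.exp (ω * t) * V 0 := by gcongr

theorem le_three_mul_exp_of_lyapunov {E F B : ℝ → ℝ} {lam c ε : ℝ} (hε : 0 < ε)
    (hεc : ε * c ≤ 1) (hεlam : ε * lam ≤ 1 / 2)
    (hEc : ContinuousOn E (Ici 0)) (hFc : ContinuousOn F (Ici 0))
    (hE : ∀ t ∈ Ioi (0 : ℝ), HasDerivAt E (-B t) t)
    (hF : ∀ t ∈ Ioi (0 : ℝ), ∃ d, HasDerivAt F d t ∧ d ≤ c * B t - E t)
    (hB : ∀ t ∈ Ioi (0 : ℝ), 0 ≤ B t) (hE₀ : ∀ t ∈ Ici (0 : ℝ), 0 ≤ E t)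
    (hFE : ∀ t ∈ Ici (0 : ℝ), |F t| ≤ lam * E t) {t : ℝ} (ht : 0 ≤ t) :
    E t ≤ 3 * Real.exp (-(2 * ε / 3) * t) * E 0 := by
  have hF' : ∀ s ∈ Ioi (0 : ℝ), HasDerivAt F (deriv F s) s ∧ deriv F s ≤ c * B s - E s :=
    fun s hs => by
      obtain ⟨d, hd, hle⟩ := hF s hs
      rw [hd.deriv]
      exact ⟨hd, hle⟩
  set V := fun s => E s + ε * F s
  have hV : ∀ s ∈ Ici (0 : ℝ), E s / 2 ≤ V s ∧ V s ≤ 3 / 2 * E s := fun s hs => by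
    have hεF : |ε * F s| ≤ E s / 2 := by
      rw [abs_mul, abs_of_pos hε]
      nlinarith [mul_le_mul_of_nonneg_left (hFE s hs) hε.le, hE₀ s hs]
    constructor <;> linarith [abs_le.1 hεF]
  have hVt := le_exp_mul_of_hasDerivAt_le_mul (V := V) (ω := -(2 * ε / 3))
    (hEc.add (hFc.const_smul ε)) (fun s hs => (hE s hs).add ((hF' s hs).1.const_mul ε))
    (fun s hs => by
      nlinarith [mul_le_mul_of_nonneg_left (hF' s hs).2 hε.le,
        mul_le_mul_of_nonneg_right hεc (hB s hs), (hV s (Ioi_subset_Ici_self hs)).2]) ht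
  nlinarith [(hV 0 self_mem_Ici).2, (hV t ht).1,
    mul_le_mul_of_nonneg_left (hV 0 self_mem_Ici).2 (Real.exp_pos (-(2 * ε / 3) * t)).le]

theorem integral_mul_flux_eq {ρ EI a b a' c : ℝ → ℝ} (hρ : ContinuousOn ρ (Icc 0 1))
    (hEI : ContinuousOn EI (Icc 0 1)) (ha : ContinuousOn a (Icc 0 1))
    (hb : ContinuousOn b (Icc 0 1)) (ha' : ContinuousOn a' (Icc 0 1))
    (hc : ContinuousOn c (Icc 0 1))
    (hda : ∀ ζ ∈ Ioo (0 : ℝ) 1, HasDerivAt a (a' ζ) ζ)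
    (hdb : ∀ ζ ∈ Ioo (0 : ℝ) 1, HasDerivAt (fun z => EI z * b z) (ρ ζ * c ζ) ζ) :
    ∫ ζ in (0 : ℝ)..1, ρ ζ * (a ζ * c ζ) + EI ζ * (b ζ * a' ζ) =
      a 1 * (EI 1 * b 1) - a 0 * (EI 0 * b 0) := by
  rw [← intervalIntegral.integral_eq_sub_of_hasDerivAt_of_le (f := fun ζ => a ζ * (EI ζ * b ζ))
    zero_le_one (ha.mul (hEI.mul hb)) (fun ζ hζ => (hda ζ hζ).mul (hdb ζ hζ))
    (((ha'.mul (hEI.mul hb)).add (ha.mul (hρ.mul hc))).intervalIntegrable_of_Icc zero_le_one)]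
  exact intervalIntegral.integral_congr fun ζ _ => by ring

theorem integral_weight_mul_eq {φ ρ EI a b a' c : ℝ → ℝ} (hφ : ContDiffOn ℝ 1 φ (Icc 0 1))
    (hρ : ContDiffOn ℝ 1 ρ (Icc 0 1)) (hEI : ContDiffOn ℝ 1 EI (Icc 0 1))
    (hEI₀ : ∀ ζ ∈ Icc (0 : ℝ) 1, EI ζ ≠ 0) (ha : ContinuousOn a (Icc 0 1))
    (hb : ContinuousOn b (Icc 0 1)) (ha' : ContinuousOn a' (Icc 0 1))
    (hc : ContinuousOn c (Icc 0 1)) (hda : ∀ ζ ∈ Ioo (0 : ℝ) 1, HasDerivAt a (a' ζ) ζ)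
    (hdb : ∀ ζ ∈ Ioo (0 : ℝ) 1, HasDerivAt (fun z => EI z * b z) (ρ ζ * c ζ) ζ) :
    ∫ ζ in (0 : ℝ)..1, φ ζ * ρ ζ * (c ζ * b ζ + a ζ * a' ζ) =
      φ 1 / 2 * (ρ 1 * a 1 ^ 2 + EI 1 * b 1 ^ 2) - φ 0 / 2 * (ρ 0 * a 0 ^ 2 + EI 0 * b 0 ^ 2)
        - 1 / 2 * ∫ ζ in (0 : ℝ)..1,
            (derivWithin φ (Icc 0 1) ζ * ρ ζ + φ ζ * derivWithin ρ (Icc 0 1) ζ) * a ζ ^ 2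
              + (derivWithin φ (Icc 0 1) ζ * EI ζ - φ ζ * derivWithin EI (Icc 0 1) ζ)
                * b ζ ^ 2 := by
  set φ' := derivWithin φ (Icc 0 1)
  set ρ' := derivWithin ρ (Icc 0 1)
  set EI' := derivWithin EI (Icc 0 1)
  have hUD : UniqueDiffOn ℝ (Icc (0 : ℝ) 1) := uniqueDiffOn_Icc_zero_one
  have hderivAt : ∀ {f : ℝ → ℝ}, ContDiffOn ℝ 1 f (Icc 0 1) → ∀ ζ ∈ Ioo (0 : ℝ) 1,
      HasDerivAt f (derivWithin f (Icc 0 1) ζ) ζ := fun hf ζ hζ =>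
    ((hf.differentiableOn one_ne_zero ζ (Ioo_subset_Icc_self hζ)).hasDerivWithinAt).hasDerivAt
      (Icc_mem_nhds hζ.1 hζ.2)
  -- half the `φ`-weighted energy density, written through the flux `EI * b`, which unlike `b`
  -- is differentiable
  set Ψ : ℝ → ℝ := fun ζ => 1 / 2 * (φ ζ / EI ζ * (EI ζ * b ζ) ^ 2 + φ ζ * ρ ζ * a ζ ^ 2)
  set R : ℝ → ℝ := fun ζ => (φ' ζ * ρ ζ + φ ζ * ρ' ζ) * a ζ ^ 2
    + (φ' ζ * EI ζ - φ ζ * EI' ζ) * b ζ ^ 2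
  have hRI : IntervalIntegrable R volume 0 1 := ContinuousOn.intervalIntegrable_of_Icc zero_le_one
    ((((hφ.continuousOn_derivWithin hUD le_rfl).mul hρ.continuousOn).add
      (hφ.continuousOn.mul (hρ.continuousOn_derivWithin hUD le_rfl))).mul (ha.pow 2) |>.add <|
    (((hφ.continuousOn_derivWithin hUD le_rfl).mul hEI.continuousOn).sub
      (hφ.continuousOn.mul (hEI.continuousOn_derivWithin hUD le_rfl))).mul (hb.pow 2))
  have hLI : IntervalIntegrable (fun ζ => φ ζ * ρ ζ * (c ζ * b ζ + a ζ * a' ζ)) volume 0 1 :=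
    ContinuousOn.intervalIntegrable_of_Icc zero_le_one
      ((hφ.continuousOn.mul hρ.continuousOn).mul ((hc.mul hb).add (ha.mul ha')))
  have hΨc : ContinuousOn Ψ (Icc 0 1) :=
    continuousOn_const.mul (((hφ.continuousOn.div hEI.continuousOn hEI₀).mul
      ((hEI.continuousOn.mul hb).pow 2)).add ((hφ.continuousOn.mul hρ.continuousOn).mul (ha.pow 2)))
  have hΨ : ∀ ζ ∈ Ioo (0 : ℝ) 1,
      HasDerivAt Ψ (φ ζ * ρ ζ * (c ζ * b ζ + a ζ * a' ζ) + 1 / 2 * R ζ) ζ := by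
    intro ζ hζ
    have hEIζ := hEI₀ ζ (Ioo_subset_Icc_self hζ)
    refine ((((hderivAt hφ ζ hζ).fun_div (hderivAt hEI ζ hζ) hEIζ).fun_mul
      ((hdb ζ hζ).fun_pow 2)).fun_add (((hderivAt hφ ζ hζ).fun_mul (hderivAt hρ ζ hζ)).fun_mul
        ((hda ζ hζ).fun_pow 2))).const_mul (1 / 2) |>.congr_deriv ?_
    simp only [R]
    field_simp
    ring
  have hΨend : ∀ ζ ∈ Icc (0 : ℝ) 1, Ψ ζ = φ ζ / 2 * (ρ ζ * a ζ ^ 2 + EI ζ * b ζ ^ 2) :=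
    fun ζ hζ => by
      simp only [Ψ]
      field_simp [hEI₀ ζ hζ]
      ring
  have hftc := intervalIntegral.integral_eq_sub_of_hasDerivAt_of_le zero_le_one hΨc hΨ
    (hLI.add (hRI.const_mul (1 / 2)))
  rw [intervalIntegral.integral_add hLI (hRI.const_mul _), intervalIntegral.integral_const_mul,
    hΨend 1 (right_mem_Icc.2 zero_le_one), hΨend 0 (left_mem_Icc.2 zero_le_one)] at hftc
  linarith

/-- A weight for which the bulk term of `integral_weight_mul_eq` dominates the energy density. -/
structure IsMultiplierWeight (ρ EI φ : ℝ → ℝ) : Prop where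
  contDiff : ContDiff ℝ 1 φ
  monotone : Monotone φ
  map_zero : φ 0 = 0
  le_derivWithin_mul : ∀ ζ ∈ Icc (0 : ℝ) 1,
    ρ ζ ≤ derivWithin φ (Icc 0 1) ζ * ρ ζ + φ ζ * derivWithin ρ (Icc 0 1) ζ
  le_derivWithin_div : ∀ ζ ∈ Icc (0 : ℝ) 1,
    EI ζ ≤ derivWithin φ (Icc 0 1) ζ * EI ζ - φ ζ * derivWithin EI (Icc 0 1) ζ

theorem le_mul_sub_of_exp_weight {a a₀ d R K e : ℝ} (ha₀ : 0 < a₀) (ha : a₀ ≤ a)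
    (hd : |d| ≤ R) (hK : 1 + R / a₀ ≤ K) (he : 1 ≤ e) : a ≤ e * K * a - (e - 1) * |d| := by
  have hR : 0 ≤ R := (abs_nonneg d).trans hd
  have hRa : R ≤ R / a₀ * a := by
    rw [div_mul_eq_mul_div, le_div_iff₀ ha₀]; exact mul_le_mul_of_nonneg_left ha hR
  have hKa : a + R ≤ K * a := by nlinarith
  nlinarith [mul_le_mul_of_nonneg_left hKa (by linarith : (0 : ℝ) ≤ e),
    mul_le_mul_of_nonneg_left hd (by linarith : (0 : ℝ) ≤ e - 1)]

theorem exists_exp_weight {ρ EI : ℝ → ℝ} {ρ₀ e₀ : ℝ} (hρ : ContDiffOn ℝ 1 ρ (Icc 0 1))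
    (hEI : ContDiffOn ℝ 1 EI (Icc 0 1)) (hρ₀ : 0 < ρ₀) (he₀ : 0 < e₀)
    (hρb : ∀ ζ ∈ Icc (0 : ℝ) 1, ρ₀ ≤ ρ ζ) (hEIb : ∀ ζ ∈ Icc (0 : ℝ) 1, e₀ ≤ EI ζ) :
    ∃ φ, IsMultiplierWeight ρ EI φ := by
  have hUD : UniqueDiffOn ℝ (Icc (0 : ℝ) 1) := uniqueDiffOn_Icc_zero_one
  obtain ⟨R₁, hR₁⟩ := isCompact_Icc.exists_bound_of_continuousOn
    (hρ.continuousOn_derivWithin hUD le_rfl)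
  obtain ⟨R₂, hR₂⟩ := isCompact_Icc.exists_bound_of_continuousOn
    (hEI.continuousOn_derivWithin hUD le_rfl)
  have hR₁0 : 0 ≤ R₁ := (norm_nonneg _).trans (hR₁ 0 (left_mem_Icc.2 zero_le_one))
  have hR₂0 : 0 ≤ R₂ := (norm_nonneg _).trans (hR₂ 0 (left_mem_Icc.2 zero_le_one))
  set K := 1 + R₁ / ρ₀ + R₂ / e₀
  have hK₁ : 1 + R₁ / ρ₀ ≤ K := by simp only [K]; linarith [div_nonneg hR₂0 he₀.le]
  have hK₂ : 1 + R₂ / e₀ ≤ K := by simp only [K]; linarith [div_nonneg hR₁0 hρ₀.le]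
  have hK : 0 < K := by linarith [div_nonneg hR₂0 he₀.le]
  have hφ' : ∀ ζ, HasDerivAt (fun z => Real.exp (K * z) - 1) (Real.exp (K * ζ) * K) ζ :=
    fun ζ => (((hasDerivAt_id ζ).const_mul K).exp.sub_const 1).congr_deriv (by simp)
  have he : ∀ ζ ∈ Icc (0 : ℝ) 1, 1 ≤ Real.exp (K * ζ) := fun ζ hζ =>
    Real.one_le_exp (mul_nonneg hK.le hζ.1)
  refine ⟨fun z => Real.exp (K * z) - 1, by fun_prop,
    fun x y hxy => by simpa using mul_le_mul_of_nonneg_left hxy hK.le, by simp,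
    fun ζ hζ => ?_, fun ζ hζ => ?_⟩ <;> rw [(hφ' ζ).hasDerivWithinAt.derivWithin (hUD ζ hζ)]
  · have := le_mul_sub_of_exp_weight hρ₀ (hρb ζ hζ) (hR₁ ζ hζ) hK₁ (he ζ hζ)
    nlinarith [mul_le_mul_of_nonneg_left (neg_abs_le (derivWithin ρ (Icc 0 1) ζ))
      (sub_nonneg.2 (he ζ hζ))]
  · have := le_mul_sub_of_exp_weight he₀ (hEIb ζ hζ) (hR₂ ζ hζ) hK₂ (he ζ hζ)
    nlinarith [mul_le_mul_of_nonneg_left (le_abs_self (derivWithin EI (Icc 0 1) ζ))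
      (sub_nonneg.2 (he ζ hζ))]

theorem IsCompact.exists_le_mul_of_continuousOn {X : Type*} [TopologicalSpace X] {K : Set X}
    (hK : IsCompact K) {f h : X → ℝ} {e₀ : ℝ} (hf : ContinuousOn f K) (he₀ : 0 < e₀)
    (hh : ∀ x ∈ K, e₀ ≤ h x) : ∃ r, 0 ≤ r ∧ ∀ x ∈ K, f x ≤ r * h x := by
  obtain ⟨R, hR⟩ := hK.exists_bound_of_continuousOn hf
  refine ⟨max R 0 / e₀, by positivity, fun x hx => ?_⟩
  calc f x ≤ max R 0 := (le_abs_self _).trans ((hR x hx).trans (le_max_left _ _))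
    _ = max R 0 / e₀ * e₀ := (div_mul_cancel₀ _ he₀.ne').symm
    _ ≤ max R 0 / e₀ * h x := mul_le_mul_of_nonneg_left (hh x hx) (by positivity)

theorem mul_apply_nonneg_of_monotone {g : ℝ → ℝ} (hg : Monotone g) (hg0 : g 0 = 0) (v : ℝ) :
    0 ≤ v * g v := by
  rcases le_total 0 v with hv | hv
  · exact mul_nonneg hv (hg0 ▸ hg hv)
  · exact mul_nonneg_of_nonpos_of_nonpos hv (hg0 ▸ hg hv)

theorem damper_boundary_energy_le {g : ℝ → ℝ} {κ : ℝ} (hg : Monotone g) (hg0 : g 0 = 0)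
    (hgκ : ∀ v : ℝ, κ⁻¹ * |v| ≤ |g v| ∧ |g v| ≤ κ * |v|) (hκ : 0 < κ) {ρ₁ EI₁ v z : ℝ}
    (hρ₁ : 0 ≤ ρ₁) (hEI₁ : 0 < EI₁) (hz : EI₁ * z = -g v) :
    ρ₁ * v ^ 2 + EI₁ * z ^ 2 ≤ κ * (ρ₁ + EI₁⁻¹) * (v * g v) := by
  have hvg : v * g v = |v| * |g v| := by
    rw [← abs_mul, abs_of_nonneg (mul_apply_nonneg_of_monotone hg hg0 v)]
  have hv : v ^ 2 ≤ κ * (v * g v) := by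
    have := mul_le_mul_of_nonneg_left (hgκ v).1 hκ.le
    rw [← mul_assoc, mul_inv_cancel₀ hκ.ne', one_mul] at this
    rw [hvg, ← sq_abs]; nlinarith [abs_nonneg v]
  have hgv : g v ^ 2 ≤ κ * (v * g v) := by
    rw [hvg, ← sq_abs]; nlinarith [(hgκ v).2, abs_nonneg (g v)]
  have hz' : EI₁ * z ^ 2 = EI₁⁻¹ * g v ^ 2 := by
    rw [show g v = -(EI₁ * z) by linarith]; field_simp
  rw [hz']
  nlinarith [mul_le_mul_of_nonneg_left hv hρ₁,
    mul_le_mul_of_nonneg_left hgv (inv_nonneg.2 hEI₁.le)]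

theorem abs_weight_mul_le {φ φ₁ ρ EI r a b : ℝ} (hφ : 0 ≤ φ) (hφ₁ : φ ≤ φ₁) (hρ : 0 ≤ ρ)
    (hEI : 0 ≤ EI) (hr : 0 ≤ r) (hρEI : ρ ≤ r * EI) :
    |φ * ρ * a * b| ≤ φ₁ * (1 + r) / 2 * (ρ * a ^ 2 + EI * b ^ 2) := by
  have hφ₁' : 0 ≤ φ₁ := hφ.trans hφ₁
  have hab : |a * b| ≤ (a ^ 2 + b ^ 2) / 2 := by
    rw [abs_mul, ← sq_abs a, ← sq_abs b]; nlinarith [sq_nonneg (|a| - |b|)]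
  calc |φ * ρ * a * b| = φ * ρ * |a * b| := by
        rw [mul_assoc, abs_mul, abs_of_nonneg (mul_nonneg hφ hρ)]
    _ ≤ φ₁ * ρ * ((a ^ 2 + b ^ 2) / 2) := by gcongr
    _ ≤ φ₁ * (1 + r) / 2 * (ρ * a ^ 2 + EI * b ^ 2) := by
        nlinarith [mul_le_mul_of_nonneg_left hρEI (mul_nonneg hφ₁' (sq_nonneg b)),
          mul_nonneg (mul_nonneg hφ₁' hr) (mul_nonneg hρ (sq_nonneg a)),
          mul_nonneg hφ₁' (mul_nonneg hEI (sq_nonneg b))]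

noncomputable def waveEnergy (ρ EI : ℝ → ℝ) (wt wz : ℝ → ℝ → ℝ) (t : ℝ) : ℝ :=
  1 / 2 * ∫ ζ in (0 : ℝ)..1, ρ ζ * wt t ζ ^ 2 + EI ζ * wz t ζ ^ 2

noncomputable def weightedMomentum (φ ρ : ℝ → ℝ) (wt wz : ℝ → ℝ → ℝ) (t : ℝ) : ℝ :=
  ∫ ζ in (0 : ℝ)..1, φ ζ * ρ ζ * wt t ζ * wz t ζ

theorem waveEnergy_nonneg {ρ EI : ℝ → ℝ} {wt wz : ℝ → ℝ → ℝ}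
    (hρ : ∀ ζ ∈ Icc (0 : ℝ) 1, 0 ≤ ρ ζ) (hEI : ∀ ζ ∈ Icc (0 : ℝ) 1, 0 ≤ EI ζ) (t : ℝ) :
    0 ≤ waveEnergy ρ EI wt wz t :=
  mul_nonneg (by norm_num) <| intervalIntegral.integral_nonneg zero_le_one fun ζ hζ =>
    add_nonneg (mul_nonneg (hρ ζ hζ) (sq_nonneg _)) (mul_nonneg (hEI ζ hζ) (sq_nonneg _))

theorem abs_weightedMomentum_le {φ ρ EI : ℝ → ℝ} {wt wz : ℝ → ℝ → ℝ} {lam t : ℝ}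
    (hρ : ContinuousOn ρ (Icc 0 1)) (hEI : ContinuousOn EI (Icc 0 1))
    (hwt : ContinuousOn (wt t) (Icc 0 1)) (hwz : ContinuousOn (wz t) (Icc 0 1))
    (hpt : ∀ ζ ∈ Icc (0 : ℝ) 1,
      |φ ζ * ρ ζ * wt t ζ * wz t ζ| ≤ lam / 2 * (ρ ζ * wt t ζ ^ 2 + EI ζ * wz t ζ ^ 2)) :
    |weightedMomentum φ ρ wt wz t| ≤ lam * waveEnergy ρ EI wt wz t := by
  have h : ‖∫ ζ in (0 : ℝ)..1, φ ζ * ρ ζ * wt t ζ * wz t ζ‖ ≤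
      ∫ ζ in (0 : ℝ)..1, lam / 2 * (ρ ζ * wt t ζ ^ 2 + EI ζ * wz t ζ ^ 2) :=
    intervalIntegral.norm_integral_le_of_norm_le zero_le_one
      (Eventually.of_forall fun ζ hζ => hpt ζ (Ioc_subset_Icc_self hζ))
      (ContinuousOn.intervalIntegrable_of_Icc zero_le_one
        (continuousOn_const.mul ((hρ.mul (hwt.pow 2)).add (hEI.mul (hwz.pow 2)))))
  rw [intervalIntegral.integral_const_mul] at h
  rw [waveEnergy]
  exact h.trans_eq (by ring)

/-- `wt`, `wz`, `wtt`, `wtz` play the roles of `∂ₜw`, `∂_ζ w`, `∂ₜ²w`, `∂ₜ∂_ζ w`; the field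
`hasDerivAt_flux` is the wave equation `(EI ∂_ζ w)_ζ = ρ ∂ₜ²w`. -/
structure IsClassicalWaveSolution (ρ EI : ℝ → ℝ) (wt wz wtt wtz : ℝ → ℝ → ℝ) : Prop where
  continuousOn_wt : ContinuousOn (uncurry wt) (Ici 0 ×ˢ Icc 0 1)
  continuousOn_wz : ContinuousOn (uncurry wz) (Ici 0 ×ˢ Icc 0 1)
  continuousOn_wtt : ContinuousOn (uncurry wtt) (Ici 0 ×ˢ Icc 0 1)
  continuousOn_wtz : ContinuousOn (uncurry wtz) (Ici 0 ×ˢ Icc 0 1)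
  hasDerivAt_wt : ∀ t ∈ Ioi (0 : ℝ), ∀ ζ ∈ Icc (0 : ℝ) 1, HasDerivAt (wt · ζ) (wtt t ζ) t
  hasDerivAt_wz : ∀ t ∈ Ioi (0 : ℝ), ∀ ζ ∈ Icc (0 : ℝ) 1, HasDerivAt (wz · ζ) (wtz t ζ) t
  hasDerivAt_wt_space : ∀ t ∈ Ioi (0 : ℝ), ∀ ζ ∈ Ioo (0 : ℝ) 1, HasDerivAt (wt t) (wtz t ζ) ζ
  hasDerivAt_flux : ∀ t ∈ Ioi (0 : ℝ), ∀ ζ ∈ Ioo (0 : ℝ) 1,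
    HasDerivAt (fun z => EI z * wz t z) (ρ ζ * wtt t ζ) ζ

theorem exists_isClassicalWaveSolution {ρ EI : ℝ → ℝ} {w wt wz wtt vz : ℝ → ℝ → ℝ}
    (hw : ContDiffOn ℝ 2 (uncurry w) (Ici 0 ×ˢ Icc 0 1))
    (hwtc : ContinuousOn (uncurry wt) (Ici 0 ×ˢ Icc 0 1))
    (hwzc : ContinuousOn (uncurry wz) (Ici 0 ×ˢ Icc 0 1))
    (hwttc : ContinuousOn (uncurry wtt) (Ici 0 ×ˢ Icc 0 1))
    (hwt : ∀ t ∈ Ici (0 : ℝ), ∀ ζ ∈ Icc (0 : ℝ) 1, HasDerivWithinAt (w · ζ) (wt t ζ) (Ici 0) t)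
    (hwtt : ∀ t ∈ Ici (0 : ℝ), ∀ ζ ∈ Icc (0 : ℝ) 1,
      HasDerivWithinAt (wt · ζ) (wtt t ζ) (Ici 0) t)
    (hwz : ∀ t ∈ Ici (0 : ℝ), ∀ ζ ∈ Icc (0 : ℝ) 1, HasDerivWithinAt (w t) (wz t ζ) (Icc 0 1) ζ)
    (hvz : ∀ t ∈ Ici (0 : ℝ), ∀ ζ ∈ Icc (0 : ℝ) 1,
      HasDerivWithinAt (fun z => EI z * wz t z) (vz t ζ) (Icc 0 1) ζ)
    (hwave : ∀ t ∈ Ici (0 : ℝ), ∀ ζ ∈ Icc (0 : ℝ) 1, ρ ζ * wtt t ζ = vz t ζ) :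
    ∃ wtz, IsClassicalWaveSolution ρ EI wt wz wtt wtz := by
  obtain ⟨wtz, hwtz, hwtz₁, hwtz₂⟩ := exists_continuousOn_mixed_partial (convex_Ici 0)
    (convex_Icc 0 1) (by simp) (by simp) hw hwt hwz
  have hIcc : ∀ {ζ : ℝ}, ζ ∈ Ioo (0 : ℝ) 1 → Icc (0 : ℝ) 1 ∈ 𝓝 ζ := fun hζ =>
    Icc_mem_nhds hζ.1 hζ.2
  exact ⟨wtz,
    { continuousOn_wt := hwtc
      continuousOn_wz := hwzc
      continuousOn_wtt := hwttc
      continuousOn_wtz := hwtz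
      hasDerivAt_wt := fun t ht ζ hζ =>
        (hwtt t (Ioi_subset_Ici_self ht) ζ hζ).hasDerivAt (Ici_mem_nhds ht)
      hasDerivAt_wz := fun t ht ζ hζ =>
        (hwtz₂ t (Ioi_subset_Ici_self ht) ζ hζ).hasDerivAt (Ici_mem_nhds ht)
      hasDerivAt_wt_space := fun t ht ζ hζ =>
        (hwtz₁ t (Ioi_subset_Ici_self ht) ζ (Ioo_subset_Icc_self hζ)).hasDerivAt (hIcc hζ)
      hasDerivAt_flux := fun t ht ζ hζ => by
        have hζ' := Ioo_subset_Icc_self hζ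
        exact ((hvz t (Ioi_subset_Ici_self ht) ζ hζ').hasDerivAt (hIcc hζ)).congr_deriv
          (hwave t (Ioi_subset_Ici_self ht) ζ hζ').symm }⟩

theorem ContinuousOn.comp_snd_prod {c : ℝ → ℝ} {s t : Set ℝ} (hc : ContinuousOn c t) :
    ContinuousOn (fun p : ℝ × ℝ => c p.2) (s ×ˢ t) :=
  hc.comp continuous_snd.continuousOn fun _ hp => hp.2

namespace IsClassicalWaveSolution

variable {ρ EI φ : ℝ → ℝ} {wt wz wtt wtz : ℝ → ℝ → ℝ}

theorem continuousOn_waveEnergy (hsol : IsClassicalWaveSolution ρ EI wt wz wtt wtz)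
    (hρ : ContinuousOn ρ (Icc 0 1)) (hEI : ContinuousOn EI (Icc 0 1)) :
    ContinuousOn (waveEnergy ρ EI wt wz) (Ici 0) :=
  continuousOn_const.mul <| continuousOn_intervalIntegral_of_continuousOn_prod
    (f := fun t ζ => ρ ζ * wt t ζ ^ 2 + EI ζ * wz t ζ ^ 2) zero_le_one
    ((hρ.comp_snd_prod.mul (hsol.continuousOn_wt.pow 2)).add
      (hEI.comp_snd_prod.mul (hsol.continuousOn_wz.pow 2)))

theorem continuousOn_weightedMomentum (hsol : IsClassicalWaveSolution ρ EI wt wz wtt wtz)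
    (hφ : ContinuousOn φ (Icc 0 1)) (hρ : ContinuousOn ρ (Icc 0 1)) :
    ContinuousOn (weightedMomentum φ ρ wt wz) (Ici 0) :=
  continuousOn_intervalIntegral_of_continuousOn_prod
    (f := fun t ζ => φ ζ * ρ ζ * wt t ζ * wz t ζ) zero_le_one
    (((hφ.comp_snd_prod.mul hρ.comp_snd_prod).mul hsol.continuousOn_wt).mul hsol.continuousOn_wz)

theorem hasDerivAt_waveEnergy (hsol : IsClassicalWaveSolution ρ EI wt wz wtt wtz)
    (hρ : ContinuousOn ρ (Icc 0 1)) (hEI : ContinuousOn EI (Icc 0 1)) {t : ℝ} (ht : 0 < t) :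
    HasDerivAt (waveEnergy ρ EI wt wz) (wt t 1 * (EI 1 * wz t 1) - wt t 0 * (EI 0 * wz t 0)) t := by
  have hdens : ContinuousOn (uncurry fun t ζ => ρ ζ * wt t ζ ^ 2 + EI ζ * wz t ζ ^ 2)
      (Ici 0 ×ˢ Icc 0 1) :=
    (hρ.comp_snd_prod.mul (hsol.continuousOn_wt.pow 2)).add
      (hEI.comp_snd_prod.mul (hsol.continuousOn_wz.pow 2))
  have hdens' : ContinuousOn
      (uncurry fun t ζ => 2 * (ρ ζ * (wt t ζ * wtt t ζ) + EI ζ * (wz t ζ * wtz t ζ)))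
      (Ici 0 ×ˢ Icc 0 1) :=
    continuousOn_const.mul ((hρ.comp_snd_prod.mul (hsol.continuousOn_wt.mul
      hsol.continuousOn_wtt)).add (hEI.comp_snd_prod.mul (hsol.continuousOn_wz.mul
      hsol.continuousOn_wtz)))
  have hderiv := hasDerivAt_intervalIntegral_of_continuousOn_prod zero_le_one (Ici_mem_nhds ht)
    hdens hdens' (eventually_of_mem (Ioi_mem_nhds ht) fun x hx ζ hζ =>
      ((((hsol.hasDerivAt_wt x hx ζ hζ).fun_pow 2).const_mul (ρ ζ)).fun_add
        (((hsol.hasDerivAt_wz x hx ζ hζ).fun_pow 2).const_mul (EI ζ))).congr_deriv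
        (by simp only [Nat.cast_ofNat]; ring))
  refine (hderiv.const_mul (1 / 2)).congr_deriv ?_
  rw [intervalIntegral.integral_const_mul, ← integral_mul_flux_eq hρ hEI
    (hsol.continuousOn_wt.uncurry_left t (le_of_lt ht))
    (hsol.continuousOn_wz.uncurry_left t (le_of_lt ht))
    (hsol.continuousOn_wtz.uncurry_left t (le_of_lt ht))
    (hsol.continuousOn_wtt.uncurry_left t (le_of_lt ht)) (hsol.hasDerivAt_wt_space t ht)
    (hsol.hasDerivAt_flux t ht)]
  ring

theorem hasDerivAt_weightedMomentum (hsol : IsClassicalWaveSolution ρ EI wt wz wtt wtz)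
    (hφ : ContinuousOn φ (Icc 0 1)) (hρ : ContinuousOn ρ (Icc 0 1)) {t : ℝ} (ht : 0 < t) :
    HasDerivAt (weightedMomentum φ ρ wt wz)
      (∫ ζ in (0 : ℝ)..1, φ ζ * ρ ζ * (wtt t ζ * wz t ζ + wt t ζ * wtz t ζ)) t := by
  have hφρ : ContinuousOn (fun p : ℝ × ℝ => φ p.2 * ρ p.2) (Ici 0 ×ˢ Icc 0 1) :=
    hφ.comp_snd_prod.mul hρ.comp_snd_prod
  have hmom : ContinuousOn (uncurry fun t ζ => φ ζ * ρ ζ * wt t ζ * wz t ζ) (Ici 0 ×ˢ Icc 0 1) :=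
    (hφρ.mul hsol.continuousOn_wt).mul hsol.continuousOn_wz
  have hmom' : ContinuousOn (uncurry fun t ζ => φ ζ * ρ ζ * (wtt t ζ * wz t ζ + wt t ζ * wtz t ζ))
      (Ici 0 ×ˢ Icc 0 1) :=
    hφρ.mul ((hsol.continuousOn_wtt.mul hsol.continuousOn_wz).add
      (hsol.continuousOn_wt.mul hsol.continuousOn_wtz))
  exact hasDerivAt_intervalIntegral_of_continuousOn_prod zero_le_one (Ici_mem_nhds ht) hmom hmom'
    (eventually_of_mem (Ioi_mem_nhds ht) fun x hx ζ hζ =>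
      (((hsol.hasDerivAt_wt x hx ζ hζ).const_mul (φ ζ * ρ ζ)).fun_mul
        (hsol.hasDerivAt_wz x hx ζ hζ)).congr_deriv (by ring))

theorem hasDerivAt_weightedMomentum_le (hsol : IsClassicalWaveSolution ρ EI wt wz wtt wtz)
    (hφ : IsMultiplierWeight ρ EI φ) (hρ : ContDiffOn ℝ 1 ρ (Icc 0 1))
    (hEI : ContDiffOn ℝ 1 EI (Icc 0 1)) (hEI₀ : ∀ ζ ∈ Icc (0 : ℝ) 1, EI ζ ≠ 0)
    {t : ℝ} (ht : 0 < t) :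
    ∃ d, HasDerivAt (weightedMomentum φ ρ wt wz) d t ∧
      d ≤ φ 1 / 2 * (ρ 1 * wt t 1 ^ 2 + EI 1 * wz t 1 ^ 2) - waveEnergy ρ EI wt wz t := by
  have hUD : UniqueDiffOn ℝ (Icc (0 : ℝ) 1) := uniqueDiffOn_Icc_zero_one
  have hφc : ContinuousOn φ (Icc 0 1) := hφ.contDiff.continuous.continuousOn
  have hwt := hsol.continuousOn_wt.uncurry_left t (le_of_lt ht)
  have hwz := hsol.continuousOn_wz.uncurry_left t (le_of_lt ht)
  refine ⟨_, hsol.hasDerivAt_weightedMomentum hφc hρ.continuousOn ht, ?_⟩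
  rw [integral_weight_mul_eq hφ.contDiff.contDiffOn hρ hEI hEI₀ hwt hwz
    (hsol.continuousOn_wtz.uncurry_left t (le_of_lt ht))
    (hsol.continuousOn_wtt.uncurry_left t (le_of_lt ht)) (hsol.hasDerivAt_wt_space t ht)
    (hsol.hasDerivAt_flux t ht), hφ.map_zero, waveEnergy]
  set φ' := derivWithin φ (Icc 0 1)
  set ρ' := derivWithin ρ (Icc 0 1)
  set EI' := derivWithin EI (Icc 0 1)
  have hφ' : ContinuousOn φ' (Icc 0 1) := hφ.contDiff.contDiffOn.continuousOn_derivWithin hUD le_rfl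
  have hmono : ∫ ζ in (0 : ℝ)..1, ρ ζ * wt t ζ ^ 2 + EI ζ * wz t ζ ^ 2 ≤
      ∫ ζ in (0 : ℝ)..1, (φ' ζ * ρ ζ + φ ζ * ρ' ζ) * wt t ζ ^ 2
        + (φ' ζ * EI ζ - φ ζ * EI' ζ) * wz t ζ ^ 2 := by
    refine intervalIntegral.integral_mono_on zero_le_one
      (ContinuousOn.intervalIntegrable_of_Icc zero_le_one ?_)
      (ContinuousOn.intervalIntegrable_of_Icc zero_le_one ?_) fun ζ hζ =>
        add_le_add (mul_le_mul_of_nonneg_right (hφ.le_derivWithin_mul ζ hζ) (sq_nonneg _))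
          (mul_le_mul_of_nonneg_right (hφ.le_derivWithin_div ζ hζ) (sq_nonneg _))
    · exact (hρ.continuousOn.mul (hwt.pow 2)).add (hEI.continuousOn.mul (hwz.pow 2))
    · exact (((hφ'.mul hρ.continuousOn).add (hφc.mul
        (hρ.continuousOn_derivWithin hUD le_rfl))).mul (hwt.pow 2)).add
        (((hφ'.mul hEI.continuousOn).sub (hφc.mul
        (hEI.continuousOn_derivWithin hUD le_rfl))).mul (hwz.pow 2))
  linarith

theorem waveEnergy_le_of_damper (hsol : IsClassicalWaveSolution ρ EI wt wz wtt wtz)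
    (hρ : ContDiffOn ℝ 1 ρ (Icc 0 1)) (hEI : ContDiffOn ℝ 1 EI (Icc 0 1))
    (hρpos : ∀ ζ ∈ Icc (0 : ℝ) 1, 0 < ρ ζ) (hEIpos : ∀ ζ ∈ Icc (0 : ℝ) 1, 0 < EI ζ)
    {r : ℝ} (hr : 0 ≤ r) (hρEI : ∀ ζ ∈ Icc (0 : ℝ) 1, ρ ζ ≤ r * EI ζ)
    (hφ : IsMultiplierWeight ρ EI φ) {g : ℝ → ℝ} {κ : ℝ} (hκ : 0 < κ) (hg : Monotone g)
    (hg0 : g 0 = 0) (hgκ : ∀ v : ℝ, κ⁻¹ * |v| ≤ |g v| ∧ |g v| ≤ κ * |v|)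
    (hbc0 : ∀ t ∈ Ioi (0 : ℝ), wt t 0 = 0)
    (hbc1 : ∀ t ∈ Ioi (0 : ℝ), EI 1 * wz t 1 = -g (wt t 1))
    {ε : ℝ} (hε : 0 < ε) (hεc : ε * (φ 1 / 2 * (κ * (ρ 1 + (EI 1)⁻¹))) ≤ 1)
    (hεlam : ε * (φ 1 * (1 + r)) ≤ 1 / 2) {t : ℝ} (ht : 0 ≤ t) :
    waveEnergy ρ EI wt wz t ≤ 3 * Real.exp (-(2 * ε / 3) * t) * waveEnergy ρ EI wt wz 0 := by
  have h1 : (1 : ℝ) ∈ Icc (0 : ℝ) 1 := right_mem_Icc.2 zero_le_one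
  have hφ₁ : ∀ ζ ∈ Icc (0 : ℝ) 1, 0 ≤ φ ζ ∧ φ ζ ≤ φ 1 := fun ζ hζ =>
    ⟨hφ.map_zero ▸ hφ.monotone hζ.1, hφ.monotone hζ.2⟩
  refine le_three_mul_exp_of_lyapunov (B := fun s => wt s 1 * g (wt s 1)) hε hεc hεlam
    (hsol.continuousOn_waveEnergy hρ.continuousOn hEI.continuousOn)
    (hsol.continuousOn_weightedMomentum hφ.contDiff.continuous.continuousOn hρ.continuousOn)
    (fun s hs => ?_) (fun s hs => ?_) (fun s _ => mul_apply_nonneg_of_monotone hg hg0 _)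
    (fun s _ => waveEnergy_nonneg (fun ζ hζ => (hρpos ζ hζ).le) (fun ζ hζ => (hEIpos ζ hζ).le) s)
    (fun s hs => abs_weightedMomentum_le hρ.continuousOn hEI.continuousOn
      (hsol.continuousOn_wt.uncurry_left s hs) (hsol.continuousOn_wz.uncurry_left s hs)
      fun ζ hζ => (abs_weight_mul_le (hφ₁ ζ hζ).1 (hφ₁ ζ hζ).2 (hρpos ζ hζ).le
        (hEIpos ζ hζ).le hr (hρEI ζ hζ)).trans_eq (by ring)) ht
  · have := hsol.hasDerivAt_waveEnergy hρ.continuousOn hEI.continuousOn hs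
    rw [hbc0 s hs, hbc1 s hs] at this
    exact this.congr_deriv (by ring)
  · obtain ⟨d, hd, hle⟩ := hsol.hasDerivAt_weightedMomentum_le hφ hρ hEI
      (fun ζ hζ => (hEIpos ζ hζ).ne') hs
    refine ⟨d, hd, hle.trans ?_⟩
    have := damper_boundary_energy_le hg hg0 hgκ hκ (hρpos 1 h1).le (hEIpos 1 h1) (hbc1 s hs)
    have := mul_le_mul_of_nonneg_left this (div_nonneg (hφ₁ 1 h1).1 zero_le_two)
    linarith

end IsClassicalWaveSolution

/-- Example 5.9 of the paper.
Exponential energy decay for the one-dimensional wave equation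
`ρ w_tt = (EI w_ζ)_ζ` with `w_t(t,0) = 0` and a nonlinear monotone damper
`(EI w_ζ)(t,1) = -g(w_t(t,1))` of linear growth, for classical solutions. -/
theorem stmt_10 (ρ EI : ℝ → ℝ)
    (hρ : ContDiffOn ℝ 1 ρ (Icc (0:ℝ) 1)) (hEI : ContDiffOn ℝ 1 EI (Icc (0:ℝ) 1))
    (ρ₀ e₀ : ℝ) (hρ₀ : 0 < ρ₀) (he₀ : 0 < e₀)
    (hρb : ∀ ζ ∈ Icc (0:ℝ) 1, ρ₀ ≤ ρ ζ) (hEIb : ∀ ζ ∈ Icc (0:ℝ) 1, e₀ ≤ EI ζ)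
    (κ : ℝ) (hκ : 1 ≤ κ) :
    ∃ M ω : ℝ, 1 ≤ M ∧ ω < 0 ∧
      ∀ g : ℝ → ℝ, Monotone g → g 0 = 0 →
        (∀ v : ℝ, κ⁻¹ * |v| ≤ |g v| ∧ |g v| ≤ κ * |v|) →
        ∀ w wt wz wtt vz : ℝ → ℝ → ℝ,
          -- `w` is twice continuously differentiable on `[0,∞) × [0,1]`:
          ContDiffOn ℝ 2 (fun p : ℝ × ℝ => w p.1 p.2) (Ici 0 ×ˢ Icc 0 1) →
          ContinuousOn (fun p : ℝ × ℝ => wt p.1 p.2) (Ici 0 ×ˢ Icc 0 1) →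
          ContinuousOn (fun p : ℝ × ℝ => wz p.1 p.2) (Ici 0 ×ˢ Icc 0 1) →
          ContinuousOn (fun p : ℝ × ℝ => wtt p.1 p.2) (Ici 0 ×ˢ Icc 0 1) →
          ContinuousOn (fun p : ℝ × ℝ => vz p.1 p.2) (Ici 0 ×ˢ Icc 0 1) →
          (∀ t ∈ Ici (0:ℝ), ∀ ζ ∈ Icc (0:ℝ) 1,
            HasDerivWithinAt (fun s => w s ζ) (wt t ζ) (Ici 0) t) →
          (∀ t ∈ Ici (0:ℝ), ∀ ζ ∈ Icc (0:ℝ) 1,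
            HasDerivWithinAt (fun s => wt s ζ) (wtt t ζ) (Ici 0) t) →
          (∀ t ∈ Ici (0:ℝ), ∀ ζ ∈ Icc (0:ℝ) 1,
            HasDerivWithinAt (fun z => w t z) (wz t ζ) (Icc 0 1) ζ) →
          (∀ t ∈ Ici (0:ℝ), ∀ ζ ∈ Icc (0:ℝ) 1,
            HasDerivWithinAt (fun z => EI z * wz t z) (vz t ζ) (Icc 0 1) ζ) →
          -- the wave equation:
          (∀ t ∈ Ici (0:ℝ), ∀ ζ ∈ Icc (0:ℝ) 1, ρ ζ * wtt t ζ = vz t ζ) →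
          -- the boundary conditions:
          (∀ t ∈ Ici (0:ℝ), wt t 0 = 0) →
          (∀ t ∈ Ici (0:ℝ), EI 1 * wz t 1 = -g (wt t 1)) →
          -- exponential decay of the energy:
          ∀ t ∈ Ici (0:ℝ),
            (1/2) * (∫ ζ in (0:ℝ)..1, ρ ζ * (wt t ζ) ^ 2 + EI ζ * (wz t ζ) ^ 2)
              ≤ M * Real.exp (ω * t) *
                ((1/2) * ∫ ζ in (0:ℝ)..1, ρ ζ * (wt 0 ζ) ^ 2 + EI ζ * (wz 0 ζ) ^ 2) := by
  obtain ⟨φ, hφ⟩ := exists_exp_weight hρ hEI hρ₀ he₀ hρb hEIb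
  obtain ⟨r, hr, hρEI⟩ := isCompact_Icc.exists_le_mul_of_continuousOn hρ.continuousOn he₀ hEIb
  set c := φ 1 / 2 * (κ * (ρ 1 + (EI 1)⁻¹))
  set lam := φ 1 * (1 + r)
  have hφ1 : 0 ≤ φ 1 := hφ.map_zero ▸ hφ.monotone zero_le_one
  have hc : 0 ≤ c := by
    have := hρ₀.trans_le (hρb 1 (right_mem_Icc.2 zero_le_one))
    have := he₀.trans_le (hEIb 1 (right_mem_Icc.2 zero_le_one))
    positivity
  have hlam : 0 ≤ lam := by positivity
  set ε := 1 / (2 * (c + lam + 1))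
  have hε : 0 < ε := by positivity
  have hεc : ε * c ≤ 1 := by
    rw [div_mul_eq_mul_div, div_le_one (by positivity)]; linarith
  have hεlam : ε * lam ≤ 1 / 2 := by
    rw [div_mul_eq_mul_div, div_le_div_iff₀ (by positivity) two_pos]; linarith
  refine ⟨3, -(2 * ε / 3), by norm_num, by linarith, ?_⟩
  intro g hg hg0 hgκ w wt wz wtt vz hw hwtc hwzc hwttc _ hwt hwtt hwz hvz hwave hbc0 hbc1 t ht
  obtain ⟨wtz, hsol⟩ :=
    exists_isClassicalWaveSolution hw hwtc hwzc hwttc hwt hwtt hwz hvz hwave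
  exact hsol.waveEnergy_le_of_damper hρ hEI (fun ζ hζ => hρ₀.trans_le (hρb ζ hζ))
    (fun ζ hζ => he₀.trans_le (hEIb ζ hζ)) hr hρEI hφ (by linarith) hg hg0 hgκ
    (fun s hs => hbc0 s (Ioi_subset_Ici_self hs)) (fun s hs => hbc1 s (Ioi_subset_Ici_self hs))
    hε hεc hεlam ht
end

section
/- Let d ∈ ℕ, let P₁ be an invertible symmetric real d × d matrix, let P₀ be a real d × d matrix, and let ℋ : [0,1] → Matrix (Fin d) (Fin d) ℝ be continuously differentiable with ℋ(ζ) symmetric and m₀ I ≤ ℋ(ζ) ≤ M₀ I for some 0 < m₀ ≤ M₀ and all ζ. Then there exist an infinitely differentiable function η : [0,1] → ℝ with η(0) = 0 and η' > 0, and a constant c > 0, such that for every T > 0 and every continuously differentiable x : [0,T] × [0,1] → ℝ^d satisfying ∂x/∂t = P₁ ∂(ℋx)/∂ζ + P₀ ℋ x on [0,T] × [0,1], the function q(t) := ∫₀¹ η(ζ) x(t,ζ)ᵀ P₁⁻¹ x(t,ζ) dζ is differentiable and satisfies ∫₀¹ x(t,ζ)ᵀ ℋ(ζ) x(t,ζ)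 dζ + q'(t) ≤ c |ℋ(1) x(t,1)|² for all t ∈ [0,T]. -/
open scoped Matrix
open MeasureTheory Set Filter
open scoped Topology

namespace Stmt11Aux


variable {d : ℕ}

lemma dot_self_nonneg (v : Fin d → ℝ) : 0 ≤ v ⬝ᵥ v :=
  Finset.sum_nonneg fun i _ => mul_self_nonneg _

lemma abs_entry_sq_le (v : Fin d → ℝ) (i j : Fin d) : |v i * v j| ≤ v ⬝ᵥ v := by
  have hi : v i * v i ≤ v ⬝ᵥ v :=
    Finset.single_le_sum (f := fun k => v k * v k)
      (fun k _ => mul_self_nonneg (v k)) (Finset.mem_univ i)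
  have hj : v j * v j ≤ v ⬝ᵥ v :=
    Finset.single_le_sum (f := fun k => v k * v k)
      (fun k _ => mul_self_nonneg (v k)) (Finset.mem_univ j)
  rw [abs_mul]
  nlinarith [sq_nonneg (|v i| - |v j|), sq_abs (v i), sq_abs (v j), abs_nonneg (v i),
    abs_nonneg (v j)]

lemma abs_quadform_le (A : Matrix (Fin d) (Fin d) ℝ) (v : Fin d → ℝ) :
    |v ⬝ᵥ (A *ᵥ v)| ≤ (∑ i, ∑ j, |A i j|) * (v ⬝ᵥ v) := by
  have h1 : v ⬝ᵥ (A *ᵥ v) = ∑ i, ∑ j, v i * (A i j * v j) := by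
    simp [dotProduct, Matrix.mulVec, Finset.mul_sum]
  rw [h1]
  calc |∑ i, ∑ j, v i * (A i j * v j)| ≤ ∑ i, ∑ j, |v i * (A i j * v j)| := by
        refine (Finset.abs_sum_le_sum_abs _ _).trans ?_
        exact Finset.sum_le_sum fun i _ => Finset.abs_sum_le_sum_abs _ _
    _ ≤ ∑ i, ∑ j, |A i j| * (v ⬝ᵥ v) := by
        refine Finset.sum_le_sum fun i _ => Finset.sum_le_sum fun j _ => ?_
        rw [show v i * (A i j * v j) = A i j * (v i * v j) by ring, abs_mul]
        exact mul_le_mul_of_nonneg_left (abs_entry_sq_le v i j) (abs_nonneg _)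
    _ = (∑ i, ∑ j, |A i j|) * (v ⬝ᵥ v) := by
        rw [Finset.sum_mul]
        exact Finset.sum_congr rfl fun i _ => (Finset.sum_mul _ _ _).symm

lemma dot_sq_le (u w : Fin d → ℝ) : (u ⬝ᵥ w) ^ 2 ≤ (u ⬝ᵥ u) * (w ⬝ᵥ w) := by
  have := Finset.sum_mul_sq_le_sq_mul_sq Finset.univ u w
  simpa [dotProduct, pow_two] using this

lemma dot_shift (A : Matrix (Fin d) (Fin d) ℝ) (a b : Fin d → ℝ) :
    (A *ᵥ a) ⬝ᵥ b = a ⬝ᵥ (A.transpose *ᵥ b) := by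
  simp only [dotProduct, Matrix.mulVec, Matrix.transpose_apply, Finset.sum_mul,
    Finset.mul_sum]
  rw [Finset.sum_comm]
  exact Finset.sum_congr rfl fun i _ => Finset.sum_congr rfl fun j _ => by ring

lemma contDiffOn_finprod {ι : Type*} (s : Finset ι) (f : ι → ℝ → ℝ) {t : Set ℝ}
    (h : ∀ i ∈ s, ContDiffOn ℝ 1 (f i) t) :
    ContDiffOn ℝ 1 (fun ζ => ∏ i ∈ s, f i ζ) t := by
  classical
  induction s using Finset.cons_induction with
  | empty => simpa using contDiffOn_const
  | cons a s ha ih =>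
    simp only [Finset.prod_cons]
    exact (h a (Finset.mem_cons_self _ _)).mul (ih fun i hi => h i (Finset.mem_cons_of_mem hi))

lemma contDiffOn_det {t : Set ℝ} (M : ℝ → Matrix (Fin d) (Fin d) ℝ)
    (h : ∀ i j, ContDiffOn ℝ 1 (fun ζ => M ζ i j) t) :
    ContDiffOn ℝ 1 (fun ζ => (M ζ).det) t := by
  have e : (fun ζ => (M ζ).det)
      = fun ζ => ∑ σ : Equiv.Perm (Fin d),
          (Equiv.Perm.sign σ : ℤ) * ∏ i, M ζ (σ i) i := by
    funext ζ; rw [Matrix.det_apply']; try push_cast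
    try ring
  rw [e]
  refine ContDiffOn.sum fun σ _ => ?_
  exact contDiffOn_const.mul (contDiffOn_finprod Finset.univ _ fun i _ => h (σ i) i)

lemma contDiffOn_inv_entry {t : Set ℝ} (M : ℝ → Matrix (Fin d) (Fin d) ℝ)
    (h : ∀ i j, ContDiffOn ℝ 1 (fun ζ => M ζ i j) t)
    (hdet : ∀ ζ ∈ t, (M ζ).det ≠ 0) (i j : Fin d) :
    ContDiffOn ℝ 1 (fun ζ => (M ζ)⁻¹ i j) t := by
  classical
  have hadj : ContDiffOn ℝ 1 (fun ζ => (M ζ).adjugate i j) t := by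
    have e : (fun ζ => (M ζ).adjugate i j)
        = fun ζ => ((M ζ).updateRow j (Pi.single i 1)).det := by
      funext ζ; rw [Matrix.adjugate_apply]
    rw [e]
    refine contDiffOn_det _ fun a b => ?_
    rcases eq_or_ne a j with rfl | hne
    · simp only [Matrix.updateRow_self]
      exact contDiffOn_const
    · simp only [Matrix.updateRow_apply, if_neg hne]
      exact h a b
  have e : (fun ζ => (M ζ)⁻¹ i j) = fun ζ => ((M ζ).det)⁻¹ * (M ζ).adjugate i j := by
    funext ζ
    rw [Matrix.inv_def]
    simp [Ring.inverse_eq_inv', Matrix.smul_apply, smul_eq_mul]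
  rw [e]
  exact ((contDiffOn_det M h).inv hdet).mul hadj



variable {d : ℕ}

lemma continuousOn_dot {X : Type*} [TopologicalSpace X] {s : Set X} {v w : X → Fin d → ℝ}
    (hv : ∀ i, ContinuousOn (fun p => v p i) s) (hw : ∀ i, ContinuousOn (fun p => w p i) s) :
    ContinuousOn (fun p => v p ⬝ᵥ w p) s := by
  have e : (fun p => v p ⬝ᵥ w p) = fun p => ∑ i, v p i * w p i := by
    funext p; simp [dotProduct]
  rw [e]
  exact continuousOn_finset_sum _ fun i _ => (hv i).mul (hw i)

lemma continuousOn_mulVec {X : Type*} [TopologicalSpace X] {s : Set X}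
    {M : X → Matrix (Fin d) (Fin d) ℝ} {v : X → Fin d → ℝ}
    (hM : ∀ i j, ContinuousOn (fun p => M p i j) s) (hv : ∀ i, ContinuousOn (fun p => v p i) s)
    (i : Fin d) : ContinuousOn (fun p => (M p *ᵥ v p) i) s := by
  have e : (fun p => (M p *ᵥ v p) i) = fun p => ∑ j, M p i j * v p j := by
    funext p; simp [Matrix.mulVec, dotProduct]
  rw [e]
  exact continuousOn_finset_sum _ fun j _ => (hM i j).mul (hv j)

lemma hasDerivWithinAt_quadform (A : Matrix (Fin d) (Fin d) ℝ)
    {f : ℝ → Fin d → ℝ} {f' : Fin d → ℝ} {s : Set ℝ} {z : ℝ}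
    (hf : HasDerivWithinAt f f' s z) :
    HasDerivWithinAt (fun y => f y ⬝ᵥ (A *ᵥ f y))
      (f' ⬝ᵥ (A *ᵥ f z) + f z ⬝ᵥ (A *ᵥ f')) s z := by
  have hfi := fun i => hasDerivWithinAt_pi.1 hf i
  have h1 : HasDerivWithinAt (fun y => ∑ i, f y i * ∑ j, A i j * f y j)
      (∑ i, (f' i * (∑ j, A i j * f z j) + f z i * (∑ j, A i j * f' j))) s z := by
    refine HasDerivWithinAt.fun_sum fun i _ => ?_
    exact (hfi i).mul (HasDerivWithinAt.fun_sum fun j _ => ((hfi j).const_mul (A i j)))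
  have e1 : (fun y => f y ⬝ᵥ (A *ᵥ f y)) = fun y => ∑ i, f y i * ∑ j, A i j * f y j := by
    funext y; simp [dotProduct, Matrix.mulVec]
  have e2 : f' ⬝ᵥ (A *ᵥ f z) + f z ⬝ᵥ (A *ᵥ f')
      = ∑ i, (f' i * (∑ j, A i j * f z j) + f z i * (∑ j, A i j * f' j)) := by
    simp [dotProduct, Matrix.mulVec, Finset.sum_add_distrib]
  rw [e1, e2]; exact h1

lemma param_deriv {T : ℝ} (hT : 0 < T) {f g : ℝ → ℝ → ℝ}
    (hf : ContinuousOn (fun p : ℝ × ℝ => f p.1 p.2) (Icc 0 T ×ˢ Icc 0 1))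
    (hg : ContinuousOn (fun p : ℝ × ℝ => g p.1 p.2) (Icc 0 T ×ˢ Icc 0 1))
    (hd : ∀ t ∈ Icc (0:ℝ) T, ∀ ζ ∈ Icc (0:ℝ) 1,
      HasDerivWithinAt (fun s => f s ζ) (g t ζ) (Icc 0 T) t)
    {t : ℝ} (ht : t ∈ Icc (0:ℝ) T) :
    HasDerivWithinAt (fun s => ∫ ζ in (0:ℝ)..1, f s ζ)
      (∫ ζ in (0:ℝ)..1, g t ζ) (Icc 0 T) t := by
  obtain ⟨C, hC⟩ := (isCompact_Icc.prod isCompact_Icc).exists_bound_of_continuousOn hg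
  set G : ℝ → ℝ := fun τ => ∫ ζ in (0:ℝ)..1, g τ ζ with hGdef
  have hgζ : ∀ τ ∈ Icc (0:ℝ) T, ContinuousOn (fun ζ => g τ ζ) (Icc (0:ℝ) 1) := by
    intro τ hτ
    exact hg.comp ((Continuous.prodMk_right τ).continuousOn) (fun ζ hζ => mk_mem_prod hτ hζ)
  have hgt : ∀ ζ ∈ Icc (0:ℝ) 1, ContinuousOn (fun τ => g τ ζ) (Icc (0:ℝ) T) := by
    intro ζ hζ
    exact hg.comp ((Continuous.prodMk_left ζ).continuousOn) (fun τ hτ => mk_mem_prod hτ hζ)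
  have hfζ : ∀ τ ∈ Icc (0:ℝ) T, ContinuousOn (fun ζ => f τ ζ) (Icc (0:ℝ) 1) := by
    intro τ hτ
    exact hf.comp ((Continuous.prodMk_right τ).continuousOn) (fun ζ hζ => mk_mem_prod hτ hζ)
  have hft : ∀ ζ ∈ Icc (0:ℝ) 1, ContinuousOn (fun τ => f τ ζ) (Icc (0:ℝ) T) := by
    intro ζ hζ
    exact hf.comp ((Continuous.prodMk_left ζ).continuousOn) (fun τ hτ => mk_mem_prod hτ hζ)
  have hGc : ContinuousOn G (Icc 0 T) := by
    have e : G = fun τ => ∫ ζ in Ioc (0:ℝ) 1, g τ ζ := by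
      funext τ; rw [hGdef]; exact intervalIntegral.integral_of_le zero_le_one
    rw [e]
    refine MeasureTheory.continuousOn_of_dominated (bound := fun _ => C) ?_ ?_ ?_ ?_
    · intro τ hτ
      exact ((hgζ τ hτ).mono Ioc_subset_Icc_self).aestronglyMeasurable measurableSet_Ioc
    · intro τ hτ
      filter_upwards [ae_restrict_mem measurableSet_Ioc] with ζ hζ
      exact hC (τ, ζ) (mk_mem_prod hτ (Ioc_subset_Icc_self hζ))
    · exact integrableOn_const measure_Ioc_lt_top.ne
    · filter_upwards [ae_restrict_mem measurableSet_Ioc] with ζ hζ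
      exact hgt ζ (Ioc_subset_Icc_self hζ)
  have key : ∀ s ∈ Icc (0:ℝ) T,
      (∫ ζ in (0:ℝ)..1, f s ζ) - (∫ ζ in (0:ℝ)..1, f 0 ζ) = ∫ τ in (0:ℝ)..s, G τ := by
    intro s hs
    have h0T : (0:ℝ) ∈ Icc (0:ℝ) T := ⟨le_rfl, hT.le⟩
    have h0s : Icc (0:ℝ) s ⊆ Icc 0 T := Icc_subset_Icc le_rfl hs.2
    have hFTCζ : ∀ ζ ∈ Icc (0:ℝ) 1, f s ζ - f 0 ζ = ∫ τ in (0:ℝ)..s, g τ ζ := by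
      intro ζ hζ
      refine (intervalIntegral.integral_eq_sub_of_hasDeriv_right_of_le hs.1
        ((hft ζ hζ).mono h0s) (fun τ hτ => ?_)
        (ContinuousOn.intervalIntegrable
          (by rw [uIcc_of_le hs.1]; exact (hgt ζ hζ).mono h0s))).symm
      have hτT : τ ∈ Icc (0:ℝ) T := ⟨hτ.1.le, (hτ.2.trans_le hs.2).le⟩
      exact ((hd τ hτT ζ hζ).hasDerivAt
        (Icc_mem_nhds hτ.1 (hτ.2.trans_le hs.2))).hasDerivWithinAt
    have hint_s : IntervalIntegrable (fun ζ => f s ζ) volume 0 1 :=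
      ContinuousOn.intervalIntegrable (by rw [uIcc_of_le zero_le_one]; exact hfζ s hs)
    have hint_0 : IntervalIntegrable (fun ζ => f 0 ζ) volume 0 1 :=
      ContinuousOn.intervalIntegrable (by rw [uIcc_of_le zero_le_one]; exact hfζ 0 h0T)
    calc (∫ ζ in (0:ℝ)..1, f s ζ) - (∫ ζ in (0:ℝ)..1, f 0 ζ)
        = ∫ ζ in (0:ℝ)..1, (f s ζ - f 0 ζ) := (intervalIntegral.integral_sub hint_s hint_0).symm
      _ = ∫ ζ in (0:ℝ)..1, (∫ τ in (0:ℝ)..s, g τ ζ) := by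
          refine intervalIntegral.integral_congr fun ζ hζ => ?_
          exact hFTCζ ζ (by rwa [uIcc_of_le zero_le_one] at hζ)
      _ = ∫ τ in (0:ℝ)..s, G τ := by
          rw [intervalIntegral.integral_of_le zero_le_one,
            intervalIntegral.integral_of_le hs.1]
          simp_rw [intervalIntegral.integral_of_le hs.1, hGdef,
            intervalIntegral.integral_of_le zero_le_one]
          rw [MeasureTheory.integral_integral_swap]
          rw [Measure.prod_restrict, ← Measure.volume_eq_prod]
          refine (ContinuousOn.integrableOn_compact (isCompact_Icc.prod isCompact_Icc)
            ?_).mono_set (prod_mono Ioc_subset_Icc_self Ioc_subset_Icc_self)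
          have : ContinuousOn ((fun p : ℝ × ℝ => g p.1 p.2) ∘ Prod.swap)
              (Icc (0:ℝ) 1 ×ˢ Icc (0:ℝ) s) := by
            refine hg.comp continuous_swap.continuousOn ?_
            rintro ⟨a, b⟩ ⟨ha, hb⟩
            exact mk_mem_prod (Icc_subset_Icc le_rfl hs.2 hb) ha
          exact this
  haveI : Fact (t ∈ Icc (0:ℝ) T) := ⟨ht⟩
  have h1 : IntervalIntegrable G volume 0 t :=
    ContinuousOn.intervalIntegrable
      (by rw [uIcc_of_le ht.1]; exact hGc.mono (Icc_subset_Icc le_rfl ht.2))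
  have h2 : StronglyMeasurableAtFilter G (𝓝[Icc (0:ℝ) T] t) :=
    hGc.stronglyMeasurableAtFilter_nhdsWithin measurableSet_Icc t
  have hΨ : HasDerivWithinAt
      (fun s => (∫ ζ in (0:ℝ)..1, f 0 ζ) + ∫ τ in (0:ℝ)..s, G τ) (G t) (Icc 0 T) t :=
    (intervalIntegral.integral_hasDerivWithinAt_right h1 h2 (hGc t ht)).const_add _
  refine hΨ.congr (fun s hs => ?_) ?_
  · have := key s hs; linarith
  · have := key t ht; linarith


lemma key_ineq {E a K C m0 : ℝ} (hE1 : 1 ≤ E) (ha : 0 ≤ a) (hCK : C ≤ K * m0) :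
    (1 - E) * (m0 * a) * K + (E - 1) * (C * a) ≤ 0 := by
  nlinarith [mul_nonneg (mul_nonneg (sub_nonneg.2 hE1) ha) (sub_nonneg.2 hCK)]

lemma final_ineq {S K : ℝ} (hK0 : 0 < K) (hSK : S * K ≤ 0) : S ≤ 0 := by
  nlinarith

lemma bdry_ineq {m0 a b G1 : ℝ} (hm0 : 0 < m0) (ha : 0 ≤ a) (hb : 0 ≤ b)
    (hlow : m0 * a ≤ G1) (hCS : G1 ^ 2 ≤ a * b) (hG10 : 0 < G1) : m0 * G1 ≤ b := by
  nlinarith [mul_le_mul_of_nonneg_right hlow hb, mul_le_mul_of_nonneg_left hCS hm0.le]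

end Stmt11Aux

/-- Lemma 7.5 / Remark after Theorem 5.1 of the paper.
For a first-order port-Hamiltonian system `∂x/∂t = P₁ ∂(ℋx)/∂ζ + P₀ ℋ x` there are a
smooth multiplier `η` (with `η 0 = 0`, `η' > 0`) and a constant `c > 0` such that for every
classical solution the functional `q(t) = ∫₀¹ η xᵀ P₁⁻¹ x` satisfies
`∫₀¹ xᵀ ℋ x + q'(t) ≤ c |ℋ(1) x(t,1)|²`. -/
theorem stmt_11 (d : ℕ)
    (P₁ P₀ : Matrix (Fin d) (Fin d) ℝ)
    (hP₁sym : P₁.transpose = P₁) (hP₁inv : IsUnit P₁.det)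
    (H : ℝ → Matrix (Fin d) (Fin d) ℝ)
    (hHsmooth : ∀ i j, ContDiffOn ℝ 1 (fun ζ => H ζ i j) (Icc (0:ℝ) 1))
    (hHsym : ∀ ζ ∈ Icc (0:ℝ) 1, (H ζ).transpose = H ζ)
    (m₀ M₀ : ℝ) (hm₀ : 0 < m₀) (hm₀M₀ : m₀ ≤ M₀)
    (hHbnd : ∀ ζ ∈ Icc (0:ℝ) 1, ∀ v : Fin d → ℝ,
      m₀ * (v ⬝ᵥ v) ≤ v ⬝ᵥ (H ζ *ᵥ v) ∧ v ⬝ᵥ (H ζ *ᵥ v) ≤ M₀ * (v ⬝ᵥ v)) :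
    ∃ η : ℝ → ℝ, ContDiff ℝ (⊤ : ℕ∞) η ∧ η 0 = 0 ∧ (∀ ζ ∈ Icc (0:ℝ) 1, 0 < deriv η ζ) ∧
    ∃ c : ℝ, 0 < c ∧
      ∀ T > (0:ℝ), ∀ x xt Hx' : ℝ → ℝ → Fin d → ℝ,
        -- `x` is continuously differentiable on `[0,T] × [0,1]`:
        ContinuousOn (fun p : ℝ × ℝ => x p.1 p.2) (Icc 0 T ×ˢ Icc 0 1) →
        ContinuousOn (fun p : ℝ × ℝ => xt p.1 p.2) (Icc 0 T ×ˢ Icc 0 1) →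
        ContinuousOn (fun p : ℝ × ℝ => Hx' p.1 p.2) (Icc 0 T ×ˢ Icc 0 1) →
        (∀ t ∈ Icc (0:ℝ) T, ∀ ζ ∈ Icc (0:ℝ) 1,
          HasDerivWithinAt (fun s => x s ζ) (xt t ζ) (Icc 0 T) t) →
        (∀ t ∈ Icc (0:ℝ) T, ∀ ζ ∈ Icc (0:ℝ) 1,
          HasDerivWithinAt (fun z => H z *ᵥ x t z) (Hx' t ζ) (Icc 0 1) ζ) →
        -- the PDE `∂x/∂t = P₁ ∂(ℋx)/∂ζ + P₀ ℋ x`: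
        (∀ t ∈ Icc (0:ℝ) T, ∀ ζ ∈ Icc (0:ℝ) 1,
          xt t ζ = P₁ *ᵥ Hx' t ζ + P₀ *ᵥ (H ζ *ᵥ x t ζ)) →
        -- the functional `q` is differentiable and satisfies the estimate:
        ∀ t ∈ Icc (0:ℝ) T, ∃ q' : ℝ,
          HasDerivWithinAt
            (fun s => ∫ ζ in (0:ℝ)..1, η ζ * (x s ζ ⬝ᵥ (P₁⁻¹ *ᵥ x s ζ)))
            q' (Icc 0 T) t ∧
          (∫ ζ in (0:ℝ)..1, x t ζ ⬝ᵥ (H ζ *ᵥ x t ζ)) + q'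
            ≤ c * ((H 1 *ᵥ x t 1) ⬝ᵥ (H 1 *ᵥ x t 1)) := by
  classical
  have hI01 : UniqueDiffOn ℝ (Icc (0:ℝ) 1) := uniqueDiffOn_Icc one_pos
  have hHcont : ∀ i j, ContinuousOn (fun ζ => H ζ i j) (Icc (0:ℝ) 1) :=
    fun i j => (hHsmooth i j).continuousOn
  set H' : ℝ → Matrix (Fin d) (Fin d) ℝ :=
    fun ζ i j => derivWithin (fun z => H z i j) (Icc 0 1) ζ with hH'def
  have hHda : ∀ ζ ∈ Icc (0:ℝ) 1, ∀ i j,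
      HasDerivWithinAt (fun z => H z i j) (H' ζ i j) (Icc 0 1) ζ :=
    fun ζ hζ i j => (((hHsmooth i j).differentiableOn one_ne_zero) ζ hζ).hasDerivWithinAt
  have hH'cont : ∀ i j, ContinuousOn (fun ζ => H' ζ i j) (Icc (0:ℝ) 1) :=
    fun i j => (hHsmooth i j).continuousOn_derivWithin hI01 le_rfl
  -- invertibility of H ζ
  have hHunit : ∀ ζ ∈ Icc (0:ℝ) 1, IsUnit (H ζ).det := by
    intro ζ hζ
    rw [← Matrix.isUnit_iff_isUnit_det, ← Matrix.mulVec_injective_iff_isUnit]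
    intro v v' hvv
    have h0 : H ζ *ᵥ (v - v') = 0 := by
      rw [Matrix.mulVec_sub, hvv, sub_self]
    have hle := (hHbnd ζ hζ (v - v')).1
    rw [h0] at hle
    simp only [dotProduct_zero] at hle
    have h2 : (v - v') ⬝ᵥ (v - v') ≤ 0 := by
      have := mul_le_mul_of_nonneg_left (le_of_eq (rfl : (0:ℝ) = 0)) hm₀.le
      nlinarith [hle, hm₀]
    have h3 : (v - v') ⬝ᵥ (v - v') = 0 :=
      le_antisymm h2 (Stmt11Aux.dot_self_nonneg _)
    have := dotProduct_self_eq_zero.mp h3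
    exact sub_eq_zero.mp this
  set N : ℝ → Matrix (Fin d) (Fin d) ℝ := fun ζ => (H ζ)⁻¹ with hNdef
  have hNcd : ∀ i j, ContDiffOn ℝ 1 (fun ζ => N ζ i j) (Icc (0:ℝ) 1) := by
    intro i j
    exact Stmt11Aux.contDiffOn_inv_entry H hHsmooth
      (fun ζ hζ => (hHunit ζ hζ).ne_zero) i j
  have hNcont : ∀ i j, ContinuousOn (fun ζ => N ζ i j) (Icc (0:ℝ) 1) :=
    fun i j => (hNcd i j).continuousOn
  set N' : ℝ → Matrix (Fin d) (Fin d) ℝ :=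
    fun ζ i j => derivWithin (fun z => N z i j) (Icc 0 1) ζ with hN'def
  have hNda : ∀ ζ ∈ Icc (0:ℝ) 1, ∀ i j,
      HasDerivWithinAt (fun z => N z i j) (N' ζ i j) (Icc 0 1) ζ :=
    fun ζ hζ i j => (((hNcd i j).differentiableOn one_ne_zero) ζ hζ).hasDerivWithinAt
  have hN'cont : ∀ i j, ContinuousOn (fun ζ => N' ζ i j) (Icc (0:ℝ) 1) :=
    fun i j => (hNcd i j).continuousOn_derivWithin hI01 le_rfl
  have hNH : ∀ ζ ∈ Icc (0:ℝ) 1, N ζ * H ζ = 1 :=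
    fun ζ hζ => Matrix.nonsing_inv_mul _ (hHunit ζ hζ)
  -- the matrices in the lower order term
  set QH : ℝ → Matrix (Fin d) (Fin d) ℝ := fun ζ => P₁⁻¹ * (P₀ * H ζ) with hQHdef
  have hQHcont : ∀ i j, ContinuousOn (fun ζ => QH ζ i j) (Icc (0:ℝ) 1) := by
    intro i j
    have e : (fun ζ => QH ζ i j) = fun ζ => ∑ k, P₁⁻¹ i k * ∑ l, P₀ k l * H ζ l j := by
      funext ζ; rw [hQHdef]; simp [Matrix.mul_apply]
    rw [e]
    exact continuousOn_finset_sum _ fun k _ => continuousOn_const.mul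
      (continuousOn_finset_sum _ fun l _ => continuousOn_const.mul (hHcont l j))
  -- the constants
  set ψ : ℝ → ℝ :=
    fun ζ => (∑ i, ∑ j, |H' ζ i j|) + 2 * ∑ i, ∑ j, |QH ζ i j| with hψdef
  have hψcont : ContinuousOn ψ (Icc (0:ℝ) 1) := by
    refine ContinuousOn.add ?_ (continuousOn_const.mul ?_)
    · exact continuousOn_finset_sum _ fun i _ =>
        continuousOn_finset_sum _ fun j _ => (hH'cont i j).abs
    · exact continuousOn_finset_sum _ fun i _ =>
        continuousOn_finset_sum _ fun j _ => (hQHcont i j).abs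
  obtain ⟨C, hC⟩ := isCompact_Icc.exists_bound_of_continuousOn hψcont
  set K : ℝ := max 1 (C / m₀) with hKdef
  have hK1 : (1:ℝ) ≤ K := le_max_left _ _
  have hK0 : (0:ℝ) < K := lt_of_lt_of_le one_pos hK1
  have hCK : C ≤ K * m₀ := (div_le_iff₀ hm₀).1 (le_max_right _ _)
  set η : ℝ → ℝ := fun ζ => (Real.exp (K * ζ) - 1) / K with hηdef
  have hηd : ∀ z : ℝ, HasDerivAt η (Real.exp (K * z)) z := by
    intro z
    have h1 : HasDerivAt (fun y : ℝ => K * y) K z := by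
      simpa using (hasDerivAt_id z).const_mul K
    have h2 : HasDerivAt (fun y : ℝ => Real.exp (K * y)) (Real.exp (K * z) * K) z :=
      (Real.hasDerivAt_exp (K * z)).comp z h1
    have h3 := (h2.sub_const 1).div_const K
    rw [mul_div_assoc, div_self hK0.ne', mul_one] at h3
    exact h3
  have hηsmooth : ContDiff ℝ (⊤ : ℕ∞) η :=
    ((Real.contDiff_exp.comp (contDiff_const.mul contDiff_id)).sub contDiff_const).div_const K
  have hη0 : η 0 = 0 := by simp [hηdef]
  have hηpos : ∀ ζ ∈ Icc (0:ℝ) 1, 0 < deriv η ζ := by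
    intro ζ _; rw [(hηd ζ).deriv]; exact Real.exp_pos _
  have hEexp : ∀ ζ ∈ Icc (0:ℝ) 1, 1 ≤ Real.exp (K * ζ) := by
    intro ζ hζ
    have := Real.add_one_le_exp (K * ζ)
    nlinarith [mul_nonneg hK0.le hζ.1]
  have hηnn : ∀ ζ ∈ Icc (0:ℝ) 1, 0 ≤ η ζ := by
    intro ζ hζ
    rw [hηdef]
    exact div_nonneg (by linarith [hEexp ζ hζ]) hK0.le
  have hη1pos : 0 < η 1 := by
    rw [hηdef]
    have h1 : 1 < Real.exp (K * 1) := by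
      have := Real.add_one_le_exp (K * 1); nlinarith
    exact div_pos (by linarith) hK0
  refine ⟨η, hηsmooth, hη0, hηpos, η 1 / m₀, div_pos hη1pos hm₀, ?_⟩
  intro T hT x xt Hx' hxc hxtc hHx'c hxdt hxdz hpde t ht
  -- basic continuity of components on the product set
  have hx_i : ∀ i, ContinuousOn (fun p : ℝ × ℝ => x p.1 p.2 i) (Icc 0 T ×ˢ Icc 0 1) :=
    fun i => (continuous_apply i).comp_continuousOn hxc
  have hxt_i : ∀ i, ContinuousOn (fun p : ℝ × ℝ => xt p.1 p.2 i) (Icc 0 T ×ˢ Icc 0 1) :=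
    fun i => (continuous_apply i).comp_continuousOn hxtc
  have hHx'_i : ∀ i, ContinuousOn (fun p : ℝ × ℝ => Hx' p.1 p.2 i) (Icc 0 T ×ˢ Icc 0 1) :=
    fun i => (continuous_apply i).comp_continuousOn hHx'c
  -- continuity of the integrand and its derivative for the parametric integral
  have hfc : ContinuousOn (fun p : ℝ × ℝ => η p.2 * (x p.1 p.2 ⬝ᵥ (P₁⁻¹ *ᵥ x p.1 p.2)))
      (Icc 0 T ×ˢ Icc 0 1) := by
    refine ContinuousOn.mul ((hηsmooth.continuous.comp continuous_snd).continuousOn) ?_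
    exact Stmt11Aux.continuousOn_dot hx_i
      (fun i => Stmt11Aux.continuousOn_mulVec (M := fun _ => P₁⁻¹)
        (fun i j => continuousOn_const) hx_i i)
  have hgc : ContinuousOn (fun p : ℝ × ℝ =>
      η p.2 * (xt p.1 p.2 ⬝ᵥ (P₁⁻¹ *ᵥ x p.1 p.2) + x p.1 p.2 ⬝ᵥ (P₁⁻¹ *ᵥ xt p.1 p.2)))
      (Icc 0 T ×ˢ Icc 0 1) := by
    refine ContinuousOn.mul ((hηsmooth.continuous.comp continuous_snd).continuousOn) ?_
    refine ContinuousOn.add ?_ ?_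
    · exact Stmt11Aux.continuousOn_dot hxt_i
        (fun i => Stmt11Aux.continuousOn_mulVec (M := fun _ => P₁⁻¹)
          (fun i j => continuousOn_const) hx_i i)
    · exact Stmt11Aux.continuousOn_dot hx_i
        (fun i => Stmt11Aux.continuousOn_mulVec (M := fun _ => P₁⁻¹)
          (fun i j => continuousOn_const) hxt_i i)
  have hder : ∀ t' ∈ Icc (0:ℝ) T, ∀ ζ ∈ Icc (0:ℝ) 1,
      HasDerivWithinAt (fun s => η ζ * (x s ζ ⬝ᵥ (P₁⁻¹ *ᵥ x s ζ)))
        (η ζ * (xt t' ζ ⬝ᵥ (P₁⁻¹ *ᵥ x t' ζ) + x t' ζ ⬝ᵥ (P₁⁻¹ *ᵥ xt t' ζ)))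
        (Icc 0 T) t' := by
    intro t' ht' ζ hζ
    exact (Stmt11Aux.hasDerivWithinAt_quadform P₁⁻¹ (hxdt t' ht' ζ hζ)).const_mul (η ζ)
  refine ⟨_, Stmt11Aux.param_deriv hT hfc hgc hder ht, ?_⟩
  -- now the estimate at the fixed time t
  set u : ℝ → Fin d → ℝ := x t with hudef
  set w' : ℝ → Fin d → ℝ := Hx' t with hw'def
  set w : ℝ → Fin d → ℝ := fun ζ => H ζ *ᵥ u ζ with hwdef
  have hu_i : ∀ i, ContinuousOn (fun ζ => u ζ i) (Icc (0:ℝ) 1) := by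
    intro i
    exact (hx_i i).comp (Continuous.prodMk_right t).continuousOn (fun ζ hζ => mk_mem_prod ht hζ)
  have hw'_i : ∀ i, ContinuousOn (fun ζ => w' ζ i) (Icc (0:ℝ) 1) := by
    intro i
    exact (hHx'_i i).comp (Continuous.prodMk_right t).continuousOn (fun ζ hζ => mk_mem_prod ht hζ)
  have hw_i : ∀ i, ContinuousOn (fun ζ => w ζ i) (Icc (0:ℝ) 1) := by
    intro i
    simp only [hwdef]
    exact Stmt11Aux.continuousOn_mulVec hHcont hu_i i
  have hwda : ∀ ζ ∈ Icc (0:ℝ) 1, HasDerivWithinAt w (w' ζ) (Icc 0 1) ζ := by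
    intro ζ hζ
    have := hxdz t ht ζ hζ
    simpa only [hwdef, hudef, hw'def] using this
  have hwda_i : ∀ ζ ∈ Icc (0:ℝ) 1, ∀ i,
      HasDerivWithinAt (fun z => w z i) (w' ζ i) (Icc 0 1) ζ :=
    fun ζ hζ i => hasDerivWithinAt_pi.1 (hwda ζ hζ) i
  -- the space derivative of u itself, via u = N ⬝ w
  have huNw : ∀ ζ ∈ Icc (0:ℝ) 1, ∀ i, u ζ i = ∑ j, N ζ i j * w ζ j := by
    intro ζ hζ i
    have h1 : N ζ *ᵥ w ζ = u ζ := by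
      rw [hwdef]
      simp only [Matrix.mulVec_mulVec, hNH ζ hζ, Matrix.one_mulVec]
    calc u ζ i = (N ζ *ᵥ w ζ) i := by rw [h1]
      _ = ∑ j, N ζ i j * w ζ j := by simp [Matrix.mulVec, dotProduct]
  set u' : ℝ → Fin d → ℝ :=
    fun ζ i => ∑ j, (N' ζ i j * w ζ j + N ζ i j * w' ζ j) with hu'def
  have huda : ∀ ζ ∈ Icc (0:ℝ) 1, ∀ i,
      HasDerivWithinAt (fun z => u z i) (u' ζ i) (Icc 0 1) ζ := by
    intro ζ hζ i
    have h1 : HasDerivWithinAt (fun z => ∑ j, N z i j * w z j)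
        (∑ j, (N' ζ i j * w ζ j + N ζ i j * w' ζ j)) (Icc 0 1) ζ :=
      HasDerivWithinAt.fun_sum fun j _ => (hNda ζ hζ i j).mul (hwda_i ζ hζ j)
    exact h1.congr (fun z hz => huNw z hz i) (huNw ζ hζ i)
  have hu'_i : ∀ i, ContinuousOn (fun ζ => u' ζ i) (Icc (0:ℝ) 1) := by
    intro i
    simp only [hu'def]
    exact continuousOn_finset_sum _ fun j _ =>
      ((hN'cont i j).mul (hw_i j)).add ((hNcont i j).mul (hw'_i j))
  -- identification of the space derivative of w
  have hw'eq : ∀ ζ ∈ Icc (0:ℝ) 1, w' ζ = H' ζ *ᵥ u ζ + H ζ *ᵥ u' ζ := by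
    intro ζ hζ
    have hD2 : HasDerivWithinAt w (H' ζ *ᵥ u ζ + H ζ *ᵥ u' ζ) (Icc 0 1) ζ := by
      rw [hasDerivWithinAt_pi]
      intro i
      have base : HasDerivWithinAt (fun z => ∑ j, H z i j * u z j)
          (∑ j, (H' ζ i j * u ζ j + H ζ i j * u' ζ j)) (Icc 0 1) ζ :=
        HasDerivWithinAt.fun_sum fun j _ => (hHda ζ hζ i j).mul (huda ζ hζ j)
      have e1 : ∀ z, w z i = ∑ j, H z i j * u z j := by
        intro z; simp [hwdef, Matrix.mulVec, dotProduct]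
      have e2 : (H' ζ *ᵥ u ζ + H ζ *ᵥ u' ζ) i
          = ∑ j, (H' ζ i j * u ζ j + H ζ i j * u' ζ j) := by
        simp [Matrix.mulVec, dotProduct, Finset.sum_add_distrib]
      rw [e2]
      exact base.congr (fun z _ => e1 z) (e1 ζ)
    have ha := (hwda ζ hζ).derivWithin (hI01 ζ hζ)
    have hb := hD2.derivWithin (hI01 ζ hζ)
    rw [← ha, hb]
  -- the scalar functions
  set G : ℝ → ℝ := fun ζ => u ζ ⬝ᵥ w ζ with hGdef
  set G' : ℝ → ℝ := fun ζ => u' ζ ⬝ᵥ w ζ + u ζ ⬝ᵥ w' ζ with hG'def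
  have hGda : ∀ ζ ∈ Icc (0:ℝ) 1, HasDerivWithinAt G (G' ζ) (Icc 0 1) ζ := by
    intro ζ hζ
    have h1 : HasDerivWithinAt (fun z => ∑ i, u z i * w z i)
        (∑ i, (u' ζ i * w ζ i + u ζ i * w' ζ i)) (Icc 0 1) ζ :=
      HasDerivWithinAt.fun_sum fun i _ => (huda ζ hζ i).mul (hwda_i ζ hζ i)
    have e1 : G = fun z => ∑ i, u z i * w z i := by
      funext z; simp [hGdef, dotProduct]
    have e2 : G' ζ = ∑ i, (u' ζ i * w ζ i + u ζ i * w' ζ i) := by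
      simp [hG'def, dotProduct, Finset.sum_add_distrib]
    rw [e1, e2]
    exact h1
  have hGcont : ContinuousOn G (Icc (0:ℝ) 1) := by
    rw [hGdef]; exact Stmt11Aux.continuousOn_dot hu_i hw_i
  have hG'cont : ContinuousOn G' (Icc (0:ℝ) 1) := by
    rw [hG'def]
    exact (Stmt11Aux.continuousOn_dot hu'_i hw_i).add (Stmt11Aux.continuousOn_dot hu_i hw'_i)
  set Φ : ℝ → ℝ := fun ζ => η ζ * G ζ with hΦdef
  set Φ' : ℝ → ℝ := fun ζ => Real.exp (K * ζ) * G ζ + η ζ * G' ζ with hΦ'def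
  have hΦda : ∀ ζ ∈ Icc (0:ℝ) 1, HasDerivWithinAt Φ (Φ' ζ) (Icc 0 1) ζ :=
    fun ζ hζ => ((hηd ζ).hasDerivWithinAt).mul (hGda ζ hζ)
  have hexpc : Continuous fun ζ : ℝ => Real.exp (K * ζ) :=
    Real.continuous_exp.comp (continuous_const.mul continuous_id)
  have hΦcont : ContinuousOn Φ (Icc (0:ℝ) 1) := by
    rw [hΦdef]; exact (hηsmooth.continuous.continuousOn).mul hGcont
  have hΦ'cont : ContinuousOn Φ' (Icc (0:ℝ) 1) := by
    rw [hΦ'def]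
    exact (hexpc.continuousOn.mul hGcont).add ((hηsmooth.continuous.continuousOn).mul hG'cont)
  have hΦ'int : IntervalIntegrable Φ' volume 0 1 :=
    ContinuousOn.intervalIntegrable (by rw [uIcc_of_le zero_le_one]; exact hΦ'cont)
  have hFTC : (∫ ζ in (0:ℝ)..1, Φ' ζ) = η 1 * G 1 := by
    have := intervalIntegral.integral_eq_sub_of_hasDeriv_right_of_le zero_le_one hΦcont
      (fun ζ hζ => ((hΦda ζ (Ioo_subset_Icc_self hζ)).hasDerivAt
        (Icc_mem_nhds hζ.1 hζ.2)).hasDerivWithinAt) hΦ'int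
    rw [this]
    simp [hΦdef, hη0]
  -- the remainder term
  set R : ℝ → ℝ := fun ζ => -(Real.exp (K * ζ) * G ζ)
      + η ζ * (u ζ ⬝ᵥ (H' ζ *ᵥ u ζ) + 2 * (u ζ ⬝ᵥ (QH ζ *ᵥ u ζ))) with hRdef
  have hRcont : ContinuousOn R (Icc (0:ℝ) 1) := by
    rw [hRdef]
    refine ((hexpc.continuousOn.mul hGcont).neg).add
      ((hηsmooth.continuous.continuousOn).mul (ContinuousOn.add ?_ (continuousOn_const.mul ?_)))
    · exact Stmt11Aux.continuousOn_dot hu_i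
        (fun i => Stmt11Aux.continuousOn_mulVec hH'cont hu_i i)
    · exact Stmt11Aux.continuousOn_dot hu_i
        (fun i => Stmt11Aux.continuousOn_mulVec hQHcont hu_i i)
  have hRint : IntervalIntegrable R volume 0 1 :=
    ContinuousOn.intervalIntegrable (by rw [uIcc_of_le zero_le_one]; exact hRcont)
  have hGint : IntervalIntegrable G volume 0 1 :=
    ContinuousOn.intervalIntegrable (by rw [uIcc_of_le zero_le_one]; exact hGcont)
  -- pointwise identity for the t-derivative integrand
  have hptwise : ∀ ζ ∈ Icc (0:ℝ) 1,
      η ζ * (xt t ζ ⬝ᵥ (P₁⁻¹ *ᵥ u ζ) + u ζ ⬝ᵥ (P₁⁻¹ *ᵥ xt t ζ)) = Φ' ζ + R ζ := by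
    intro ζ hζ
    have hpde' : xt t ζ = P₁ *ᵥ w' ζ + P₀ *ᵥ w ζ := by
      simp only [hw'def, hwdef, hudef]
      exact hpde t ht ζ hζ
    have hP1P : P₁ * P₁⁻¹ = 1 := Matrix.mul_nonsing_inv _ hP₁inv
    have hPP1 : P₁⁻¹ * P₁ = 1 := Matrix.nonsing_inv_mul _ hP₁inv
    have hPinvT : P₁⁻¹.transpose = P₁⁻¹ := by
      rw [Matrix.transpose_nonsing_inv, hP₁sym]
    have e_a : xt t ζ ⬝ᵥ (P₁⁻¹ *ᵥ u ζ)
        = w' ζ ⬝ᵥ u ζ + u ζ ⬝ᵥ (QH ζ *ᵥ u ζ) := by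
      rw [hpde', add_dotProduct]
      congr 1
      · rw [Stmt11Aux.dot_shift, hP₁sym, Matrix.mulVec_mulVec, hP1P, Matrix.one_mulVec]
      · rw [dotProduct_comm, Stmt11Aux.dot_shift, hPinvT]
        simp only [hwdef, hQHdef, Matrix.mulVec_mulVec, Matrix.mul_assoc]
    have e_b : u ζ ⬝ᵥ (P₁⁻¹ *ᵥ xt t ζ)
        = u ζ ⬝ᵥ w' ζ + u ζ ⬝ᵥ (QH ζ *ᵥ u ζ) := by
      rw [hpde', Matrix.mulVec_add, dotProduct_add]
      congr 1
      · rw [Matrix.mulVec_mulVec, hPP1, Matrix.one_mulVec]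
      · simp only [hwdef, hQHdef, Matrix.mulVec_mulVec, Matrix.mul_assoc]
    have e_c : w' ζ ⬝ᵥ u ζ = u ζ ⬝ᵥ w' ζ := dotProduct_comm _ _
    have e_d : u ζ ⬝ᵥ w' ζ = u ζ ⬝ᵥ (H' ζ *ᵥ u ζ) + u ζ ⬝ᵥ (H ζ *ᵥ u' ζ) := by
      rw [hw'eq ζ hζ, dotProduct_add]
    have e_e : u' ζ ⬝ᵥ w ζ = u ζ ⬝ᵥ (H ζ *ᵥ u' ζ) := by
      rw [hwdef]
      simp only
      rw [dotProduct_comm, Stmt11Aux.dot_shift, hHsym ζ hζ]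
    have e_f : G' ζ = u' ζ ⬝ᵥ w ζ + u ζ ⬝ᵥ w' ζ := by rw [hG'def]
    -- put everything together
    rw [e_a, e_b, hΦ'def, hRdef]
    simp only
    rw [e_f, e_e, e_c, e_d]
    ring
  -- split the derivative integral
  have hq'split : (∫ ζ in (0:ℝ)..1,
        η ζ * (xt t ζ ⬝ᵥ (P₁⁻¹ *ᵥ u ζ) + u ζ ⬝ᵥ (P₁⁻¹ *ᵥ xt t ζ)))
      = η 1 * G 1 + ∫ ζ in (0:ℝ)..1, R ζ := by
    have e1 : (∫ ζ in (0:ℝ)..1,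
          η ζ * (xt t ζ ⬝ᵥ (P₁⁻¹ *ᵥ u ζ) + u ζ ⬝ᵥ (P₁⁻¹ *ᵥ xt t ζ)))
        = ∫ ζ in (0:ℝ)..1, (Φ' ζ + R ζ) := by
      refine intervalIntegral.integral_congr fun ζ hζ => ?_
      exact hptwise ζ (by rwa [uIcc_of_le zero_le_one] at hζ)
    rw [e1, intervalIntegral.integral_add hΦ'int hRint, hFTC]
  -- pointwise bound on G + R
  have hGR : ∀ ζ ∈ Icc (0:ℝ) 1, G ζ + R ζ ≤ 0 := by
    intro ζ hζ
    set a : ℝ := u ζ ⬝ᵥ u ζ with hadef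
    set E : ℝ := Real.exp (K * ζ) with hEdef
    have ha : 0 ≤ a := Stmt11Aux.dot_self_nonneg _
    have hGlow : m₀ * a ≤ G ζ := by
      have := (hHbnd ζ hζ (u ζ)).1
      simpa [hGdef, hwdef, hadef] using this
    have hq1 : u ζ ⬝ᵥ (H' ζ *ᵥ u ζ) ≤ (∑ i, ∑ j, |H' ζ i j|) * a :=
      (le_abs_self _).trans (Stmt11Aux.abs_quadform_le _ _)
    have hq2 : u ζ ⬝ᵥ (QH ζ *ᵥ u ζ) ≤ (∑ i, ∑ j, |QH ζ i j|) * a :=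
      (le_abs_self _).trans (Stmt11Aux.abs_quadform_le _ _)
    have hψle : (∑ i, ∑ j, |H' ζ i j|) + 2 * (∑ i, ∑ j, |QH ζ i j|) ≤ C := by
      have h := (le_abs_self (ψ ζ)).trans
        (by simpa [Real.norm_eq_abs] using hC ζ hζ)
      simpa [hψdef] using h
    have hE1 : 1 ≤ E := hEexp ζ hζ
    have hηnn' : 0 ≤ η ζ := hηnn ζ hζ
    have hηK : η ζ * K = E - 1 := by
      rw [hηdef, hEdef]; field_simp
    have h5 : u ζ ⬝ᵥ (H' ζ *ᵥ u ζ) + 2 * (u ζ ⬝ᵥ (QH ζ *ᵥ u ζ)) ≤ C * a := by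
      have h6 := mul_le_mul_of_nonneg_right hψle ha
      nlinarith [hq1, hq2]
    have h7 : (1 - E) * G ζ ≤ (1 - E) * (m₀ * a) :=
      mul_le_mul_of_nonpos_left hGlow (by linarith)
    have h8 : η ζ * (u ζ ⬝ᵥ (H' ζ *ᵥ u ζ) + 2 * (u ζ ⬝ᵥ (QH ζ *ᵥ u ζ)))
        ≤ η ζ * (C * a) := mul_le_mul_of_nonneg_left h5 hηnn'
    have hsum : G ζ + R ζ ≤ (1 - E) * (m₀ * a) + η ζ * (C * a) := by
      have : G ζ + R ζ = (1 - E) * G ζ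
          + η ζ * (u ζ ⬝ᵥ (H' ζ *ᵥ u ζ) + 2 * (u ζ ⬝ᵥ (QH ζ *ᵥ u ζ))) := by
        rw [hRdef]; simp only [← hEdef]; ring
      rw [this]
      exact add_le_add h7 h8
    have key : (1 - E) * (m₀ * a) * K + (E - 1) * (C * a) ≤ 0 :=
      Stmt11Aux.key_ineq hE1 ha hCK
    have e9 : η ζ * (C * a) * K = (E - 1) * (C * a) := by
      rw [mul_right_comm, hηK]
    have hSK : ((1 - E) * (m₀ * a) + η ζ * (C * a)) * K ≤ 0 := by
      calc ((1 - E) * (m₀ * a) + η ζ * (C * a)) * K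
          = (1 - E) * (m₀ * a) * K + η ζ * (C * a) * K := by ring
        _ = (1 - E) * (m₀ * a) * K + (E - 1) * (C * a) := by rw [e9]
        _ ≤ 0 := key
    have hS0 : (1 - E) * (m₀ * a) + η ζ * (C * a) ≤ 0 :=
      Stmt11Aux.final_ineq hK0 hSK
    linarith [hsum, hS0]
  have hmono : (∫ ζ in (0:ℝ)..1, G ζ) + (∫ ζ in (0:ℝ)..1, R ζ) ≤ 0 := by
    rw [← intervalIntegral.integral_add hGint hRint]
    calc (∫ ζ in (0:ℝ)..1, (G ζ + R ζ)) ≤ ∫ _ in (0:ℝ)..1, (0:ℝ) :=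
        intervalIntegral.integral_mono_on zero_le_one (hGint.add hRint)
          intervalIntegrable_const hGR
      _ = 0 := by simp
  -- boundary term estimate
  have h1mem : (1:ℝ) ∈ Icc (0:ℝ) 1 := ⟨zero_le_one, le_rfl⟩
  have hbdry : η 1 * G 1 ≤ (η 1 / m₀) * (w 1 ⬝ᵥ w 1) := by
    have ha : 0 ≤ u 1 ⬝ᵥ u 1 := Stmt11Aux.dot_self_nonneg _
    have hb : 0 ≤ w 1 ⬝ᵥ w 1 := Stmt11Aux.dot_self_nonneg _
    have hlow : m₀ * (u 1 ⬝ᵥ u 1) ≤ G 1 := by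
      have := (hHbnd 1 h1mem (u 1)).1
      simpa [hGdef, hwdef] using this
    have hCS : (G 1) ^ 2 ≤ (u 1 ⬝ᵥ u 1) * (w 1 ⬝ᵥ w 1) := by
      rw [hGdef]
      exact Stmt11Aux.dot_sq_le _ _
    rcases le_or_gt (G 1) 0 with hG10 | hG10
    · calc η 1 * G 1 ≤ 0 := mul_nonpos_of_nonneg_of_nonpos hη1pos.le hG10
        _ ≤ (η 1 / m₀) * (w 1 ⬝ᵥ w 1) :=
          mul_nonneg (div_nonneg hη1pos.le hm₀.le) hb
    · have hb' : m₀ * G 1 ≤ w 1 ⬝ᵥ w 1 := by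
        nlinarith [mul_le_mul_of_nonneg_right hlow hb,
          mul_le_mul_of_nonneg_left hCS hm₀.le, hG10]
      calc η 1 * G 1 ≤ η 1 * ((w 1 ⬝ᵥ w 1) / m₀) :=
          mul_le_mul_of_nonneg_left ((le_div_iff₀ hm₀).2 (by linarith)) hη1pos.le
        _ = (η 1 / m₀) * (w 1 ⬝ᵥ w 1) := by ring
  -- assemble
  have egoal : (∫ ζ in (0:ℝ)..1, u ζ ⬝ᵥ (H ζ *ᵥ u ζ)) = ∫ ζ in (0:ℝ)..1, G ζ := by
    refine intervalIntegral.integral_congr fun ζ _ => ?_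
    simp [hGdef, hwdef]
  have ew1 : w 1 = H 1 *ᵥ u 1 := by rw [hwdef]
  rw [egoal, hq'split, ← ew1]
  linarith [hmono, hbdry]
end

section
/- Let X be a real Hilbert space, m ∈ ℕ, D ⊆ X a linear subspace, and let 𝔄 : D → X and 𝔅, ℭ : D → ℝ^m be linear maps satisfying the impedance passivity inequality ⟨𝔄x, x⟩_X ≤ ⟨𝔅x, ℭx⟩_{ℝ^m} for all x ∈ D. Let φ : ℝ^m → Set (ℝ^m) be a monotone set-valued map. Then the restriction A of 𝔄 to D(A) := { x ∈ D : 𝔅x ∈ −φ(ℭx) } is dissipative: for all x, x' ∈ D(A) one has ⟨𝔄x − 𝔄x', x − x'⟩_X ≤ 0. -/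
open scoped RealInnerProductSpace

theorem inner_sub_sub_nonpos_of_neg_mem_of_monotone {E : Type*} [NormedAddCommGroup E]
    [InnerProductSpace ℝ E] {φ : E → Set E}
    (hmono : ∀ v v' w w', w ∈ φ v → w' ∈ φ v' → 0 ≤ ⟪w - w', v - v'⟫) {b b' c c' : E}
    (hb : -b ∈ φ c) (hb' : -b' ∈ φ c') : ⟪b - b', c - c'⟫ ≤ 0 := by
  have h := hmono c c' (-b) (-b') hb hb'
  rwa [neg_sub_neg, ← neg_sub, inner_neg_left, neg_nonneg] at h

/-- dissipativity part of the proof of Theorem 4.2.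
An impedance passive triple `(𝔄, 𝔅, ℭ)` with a monotone feedback `φ` yields a dissipative
operator `A = 𝔄|_{𝔅x ∈ -φ(ℭx)}`. -/
theorem stmt_12 {X : Type*} [NormedAddCommGroup X] [InnerProductSpace ℝ X]
    (m : ℕ) (D : Submodule ℝ X)
    (Aop : D →ₗ[ℝ] X) (Bop Cop : D →ₗ[ℝ] EuclideanSpace ℝ (Fin m))
    (hpass : ∀ x : D, ⟪Aop x, (x : X)⟫ ≤ ⟪Bop x, Cop x⟫)
    (φ : EuclideanSpace ℝ (Fin m) → Set (EuclideanSpace ℝ (Fin m)))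
    (hmono : ∀ v v' w w', w ∈ φ v → w' ∈ φ v' → 0 ≤ ⟪w - w', v - v'⟫) :
    ∀ x x' : D, -Bop x ∈ φ (Cop x) → -Bop x' ∈ φ (Cop x') →
      ⟪Aop x - Aop x', (x : X) - (x' : X)⟫ ≤ 0 := by
  intro x x' hx hx'
  calc ⟪Aop x - Aop x', (x : X) - (x' : X)⟫ = ⟪Aop (x - x'), ((x - x' : D) : X)⟫ := by
        rw [map_sub, Submodule.coe_sub]
    _ ≤ ⟪Bop (x - x'), Cop (x - x')⟫ := hpass (x - x')
    _ = ⟪Bop x - Bop x', Cop x - Cop x'⟫ := by rw [map_sub, map_sub]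
    _ ≤ 0 := inner_sub_sub_nonpos_of_neg_mem_of_monotone hmono hx hx'
end

section
/- Let X and X_c be real Hilbert spaces, m ∈ ℕ, D ⊆ X a linear subspace, and let 𝔄 : D → X and 𝔅, ℭ : D → ℝ^m be linear maps satisfying ⟨𝔄x, x⟩_X ≤ ⟨𝔅x, ℭx⟩_{ℝ^m} for all x ∈ D. Let M_c : X_c × ℝ^m → Set (X_c × ℝ^m) be a dissipative set-valued map. Define 𝒜 : X × X_c → Set (X × X_c) by 𝒜(x, x_c) := { (𝔄x, z_c) : x ∈ D and (z_c, 𝔅x) ∈ M_c(x_c, ℭx) }. Then 𝒜 is dissipative on the product Hilbert space X × X_c: for all (x, x_c), (x̃, x̃_c) in the domain of 𝒜 and (𝔄x, z_c) ∈ 𝒜(x, x_c), (𝔄x̃, z̃_c) ∈ 𝒜(x̃, x̃_c), one has ⟨𝔄x − 𝔄x̃, x − x̃⟩_X + ⟨z_c − z̃_c, x_c − x̃_c⟩_{X_c} ≤ 0. -/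
open scoped RealInnerProductSpace

theorem inner_map_sub_le_of_passive {X U : Type*}
    [NormedAddCommGroup X] [InnerProductSpace ℝ X]
    [NormedAddCommGroup U] [InnerProductSpace ℝ U]
    {D : Submodule ℝ X} {A : D →ₗ[ℝ] X} {B C : D →ₗ[ℝ] U}
    (hpass : ∀ x : D, ⟪A x, (x : X)⟫ ≤ ⟪B x, C x⟫) (x x' : D) :
    ⟪A x - A x', (x : X) - (x' : X)⟫ ≤ ⟪B x - B x', C x - C x'⟫ := by
  simpa only [map_sub, Submodule.coe_sub] using hpass (x - x')

/-- dissipativity part of the proof of Theorem 6.2.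
The feedback interconnection `u_c = ℭx`, `𝔅x = -y_c` of an impedance passive system with a
dissipative controller `M_c` is dissipative on the product Hilbert space `X × X_c`. -/
theorem stmt_13 {X Xc : Type*}
    [NormedAddCommGroup X] [InnerProductSpace ℝ X]
    [NormedAddCommGroup Xc] [InnerProductSpace ℝ Xc]
    (m : ℕ) (D : Submodule ℝ X)
    (Aop : D →ₗ[ℝ] X) (Bop Cop : D →ₗ[ℝ] EuclideanSpace ℝ (Fin m))
    (hpass : ∀ x : D, ⟪Aop x, (x : X)⟫ ≤ ⟪Bop x, Cop x⟫)
    (Mc : Xc × EuclideanSpace ℝ (Fin m) → Set (Xc × EuclideanSpace ℝ (Fin m)))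
    (hMc : ∀ p p' q q', q ∈ Mc p → q' ∈ Mc p' →
      ⟪q.1 - q'.1, p.1 - p'.1⟫ + ⟪q.2 - q'.2, p.2 - p'.2⟫ ≤ 0) :
    ∀ (x x' : D) (xc xc' : Xc) (zc zc' : Xc),
      (zc, Bop x) ∈ Mc (xc, Cop x) → (zc', Bop x') ∈ Mc (xc', Cop x') →
      ⟪Aop x - Aop x', (x : X) - (x' : X)⟫ + ⟪zc - zc', xc - xc'⟫ ≤ 0 := by
  intro x x' xc xc' zc zc' hx hx'
  -- The controller absorbs exactly the port power `⟪𝔅x - 𝔅x', ℭx - ℭx'⟫` that the plant may produce.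
  have hplant := inner_map_sub_le_of_passive hpass x x'
  have hcontroller := hMc _ _ _ _ hx hx'
  linarith
end
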